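/- arXiv:1203.5169 — 8 statements merged into one kernel-verified Lean document; each statement's English description precedes it below -/
import Mathlib

section
/- For every positive integer n, there exists a universal cycle for W(n): a cyclic sequence a₀a₁…a_{N−1} over ℕ of length N = |W(n)| such that the N cyclic windows a_i a_{i+1} ⋯ a_{i+n−1} (indices taken modulo N), for i = 0,…,N−1, are precisely the elements of W(n), each occurring exactly once. -/
/-- A word `w` over ℕ is a *weak order word* of length `n` if it has length `n`
and its set of letters is `{0, 1, …, h}` for some `h`. `weakOrders n` is the set
`W(n)` of all such words. -/
def weakOrders (n : ℕ) : Set (List ℕ) :=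
  {w | w.length = n ∧ ∃ h : ℕ, w.toFinset = Finset.range (h + 1)}

/-- `IsUCycle m N C a` says the cyclic sequence `a₀ a₁ … a_{N-1}` is a universal
cycle for the set `C` of strings of length `m`: every cyclic window
`a_i a_{i+1} ⋯ a_{i+m-1}` (indices mod `N`) lies in `C`, and every element of `C`
arises from exactly one of the `N` cyclic windows. -/
def IsUCycle (m N : ℕ) (C : Set (List ℕ)) (a : ℕ → ℕ) : Prop :=
  (∀ i < N, (List.ofFn fun j : Fin m => a ((i + j.val) % N)) ∈ C) ∧
    ∀ c ∈ C, ∃! i, i < N ∧ (List.ofFn fun j : Fin m => a ((i + j.val) % N)) = c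

/-!
The words of `W(n)` are the edges of a de Bruijn-type digraph on words of length `n - 1`, the
word `w` going from `w.dropLast` to `w.tail`. An Eulerian circuit of this digraph is a universal
cycle: reading the first letter of each edge, the window starting at an edge spells that edge.

`W(n)` is closed under rotation, and rotating by one letter maps the edges entering a vertex
bijectively onto the edges leaving it, so the digraph is balanced. It is strongly connected:
rotations are walks, hence any letter of a word can be replaced by any other letter along a walk
as long as the result stays in `W(n)`, and replacing an occurrence of the largest letter by `0`
leads every word to `0ⁿ` while lowering its letter sum.

In a balanced, strongly connected digraph a longest trail is an Eulerian circuit: balance forces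
it to be closed, and a closed trail that misses an edge can be rotated and extended.
-/

open Relation

namespace Eulerian

variable {α V : Type*} (s t : α → V) (F : Finset α)

/-- A trail in the multidigraph with edge set `F`, where the edge `e` goes from `s e` to `t e`. -/
structure IsTrail (P : List α) : Prop where
  isChain : P.IsChain (fun e f => t e = s f)
  nodup : P.Nodup
  subset : ∀ e ∈ P, e ∈ F

variable {s t F}

lemma isTrail_nil : IsTrail s t F [] := ⟨.nil, List.nodup_nil, by simp⟩

lemma IsTrail.concat {P : List α} (hP : IsTrail s t F P) {e : α} (he : e ∈ F) (heP : e ∉ P)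
    (hlast : ∀ x ∈ P.getLast?, t x = s e) : IsTrail s t F (P ++ [e]) where
  isChain := hP.isChain.append (.singleton e) (by simpa using hlast)
  nodup := hP.nodup.append (by simp) (by simpa using heP)
  subset := by
    simp only [List.mem_append, List.mem_singleton]
    rintro x (hx | rfl)
    exacts [hP.subset x hx, he]

lemma IsTrail.length_le {P : List α} (hP : IsTrail s t F P) : P.length ≤ F.card := by
  classical
  rw [← List.toFinset_card_of_nodup hP.nodup]
  exact Finset.card_le_card fun e he => hP.subset e (List.mem_toFinset.mp he)

lemma exists_longest_trail :
    ∃ P, IsTrail s t F P ∧ ∀ Q, IsTrail s t F Q → Q.length ≤ P.length := by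
  set S := {k | ∃ P, IsTrail s t F P ∧ P.length = k}
  have hbdd : BddAbove S := ⟨F.card, by rintro _ ⟨P, hP, rfl⟩; exact hP.length_le⟩
  obtain ⟨P, hP, hlen⟩ := Nat.sSup_mem (s := S) ⟨0, [], isTrail_nil, rfl⟩ hbdd
  exact ⟨P, hP, fun Q hQ => hlen ▸ le_csSup hbdd ⟨Q, hQ, rfl⟩⟩

lemma map_add_singleton_getLast {P : List α} (hP : P.IsChain (fun e f => t e = s f))
    (hne : P ≠ []) :
    (P.map s : Multiset V) + {t (P.getLast hne)} = (P.map t : Multiset V) + {s (P.head hne)} := by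
  induction P with
  | nil => exact absurd rfl hne
  | cons e P ih =>
    cases P with
    | nil => simp [add_comm]
    | cons f P =>
      rw [List.isChain_cons_cons] at hP
      have := ih hP.2 (List.cons_ne_nil _ _)
      simp only [List.map_cons, List.getLast_cons (List.cons_ne_nil _ _), List.head_cons,
        ← Multiset.cons_coe] at this ⊢
      rw [Multiset.cons_add, this, hP.1]
      simp only [← Multiset.singleton_add]
      abel

lemma IsTrail.exists_unused_of_getLast_ne_head (hbal : F.val.map s = F.val.map t) {P : List α}
    (hP : IsTrail s t F P) (hne : P ≠ []) (hopen : t (P.getLast hne) ≠ s (P.head hne)) :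
    ∃ e ∈ F, e ∉ P ∧ t (P.getLast hne) = s e := by
  classical
  by_contra! hout
  have hflow := congrArg (Multiset.count (t (P.getLast hne)))
    (map_add_singleton_getLast hP.isChain hne)
  generalize t (P.getLast hne) = w at *
  simp only [Multiset.count_add, Multiset.count_singleton, if_neg hopen, if_pos] at hflow
  have hPF : (P : Multiset α) ≤ F.val :=
    (Multiset.le_iff_subset (Multiset.coe_nodup.mpr hP.nodup)).mpr fun e he => hP.subset e he
  have hout_le : (F.val.map s).count w ≤ (P.map s : Multiset V).count w := by
    rw [← Multiset.map_coe, Multiset.count_map, Multiset.count_map]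
    refine Multiset.card_le_card ((Multiset.le_iff_subset (F.nodup.filter _)).mpr fun e he => ?_)
    rw [Multiset.mem_filter] at he ⊢
    exact ⟨by_contra fun heP => hout e he.1 heP he.2, he.2⟩
  have hin_le := Multiset.count_le_of_le w (Multiset.map_le_map (f := t) hPF)
  rw [hbal, Multiset.map_coe] at *
  omega

lemma IsTrail.cycleChain_of_longest (hbal : F.val.map s = F.val.map t) {P : List α}
    (hP : IsTrail s t F P) (hmax : ∀ Q, IsTrail s t F Q → Q.length ≤ P.length) :
    Cycle.Chain (fun e f => t e = s f) (P : Cycle α) := by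
  rcases eq_or_ne P [] with rfl | hne
  · exact Cycle.Chain.nil _
  have hclosed : t (P.getLast hne) = s (P.head hne) := by
    by_contra hopen
    obtain ⟨e, he, heP, hlast⟩ := hP.exists_unused_of_getLast_ne_head hbal hne hopen
    have := hmax _ (hP.concat he heP (by simpa [List.getLast?_eq_some_getLast hne] using hlast))
    simp at this
  rw [Cycle.chain_ne_nil _ hne]
  exact hP.isChain.cons (by simpa [List.head?_eq_some_head hne] using hclosed)

lemma IsTrail.exists_rotation_getLast?_eq {P : List α} (hP : IsTrail s t F P)
    (hcyc : Cycle.Chain (fun e f => t e = s f) (P : Cycle α)) {c : α} (hc : c ∈ P) :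
    ∃ Q, IsTrail s t F Q ∧ Q.length = P.length ∧ (∀ e, e ∈ Q ↔ e ∈ P) ∧ Q.getLast? = some c := by
  obtain ⟨a, b, rfl⟩ := List.append_of_mem hc
  have hrot : (a ++ [c]) ++ b ~r b ++ (a ++ [c]) := List.isRotated_append
  rw [show a ++ c :: b = (a ++ [c]) ++ b by simp] at hP hcyc ⊢
  rw [Cycle.coe_eq_coe.mpr hrot, Cycle.chain_ne_nil _ (by simp)] at hcyc
  exact ⟨_, ⟨hcyc.tail, hrot.nodup_iff.mp hP.nodup, fun e he => hP.subset e (hrot.mem_iff.mpr he)⟩,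
    hrot.perm.length_eq.symm, fun e => hrot.mem_iff.symm, by simp⟩

lemma _root_.Relation.ReflTransGen.exists_crossing_step {r : α → α → Prop} {p : α → Prop}
    {a b : α} (h : ReflTransGen r a b) (ha : p a) (hb : ¬ p b) : ∃ c d, p c ∧ ¬ p d ∧ r c d := by
  induction h with
  | refl => exact absurd ha hb
  | @tail c d _ hcd ih =>
    by_cases hc : p c
    · exact ⟨c, d, hc, hb, hcd⟩
    · exact ih hc

theorem exists_circuit [DecidableEq α] (hbal : F.val.map s = F.val.map t)
    (hconn : ∀ e ∈ F, ∀ f ∈ F, ReflTransGen (fun a b => b ∈ F ∧ t a = s b) e f) :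
    ∃ l : List α, l.Nodup ∧ l.toFinset = F ∧ Cycle.Chain (fun e f => t e = s f) (l : Cycle α) := by
  obtain ⟨P, hP, hmax⟩ := exists_longest_trail (s := s) (t := t) (F := F)
  have hcyc := hP.cycleChain_of_longest hbal hmax
  refine ⟨P, hP.nodup, subset_antisymm (fun e he => hP.subset e (List.mem_toFinset.mp he))
    fun e he => List.mem_toFinset.mpr (by_contra fun heP => ?_), hcyc⟩
  rcases eq_or_ne P [] with rfl | hne
  · simpa using hmax _ (isTrail_nil.concat he heP (by simp))
  obtain ⟨c, d, hc, hd, hdF, hcd⟩ :=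
    (hconn _ (hP.subset _ (List.head_mem hne)) e he).exists_crossing_step (List.head_mem hne) heP
  obtain ⟨Q, hQ, hQlen, hQmem, hQc⟩ := hP.exists_rotation_getLast?_eq hcyc hc
  have := hmax _ (hQ.concat hdF (by rwa [hQmem]) (by simpa [hQc] using hcd))
  simp [hQlen] at this

end Eulerian

section Rotation

variable {β : Type*} {C : Set (List β)}

lemma List.tail_eq_dropLast_rotate_one (u : List β) : u.tail = (u.rotate 1).dropLast := by
  cases u <;> simp

lemma map_dropLast_eq_map_tail {F : Finset (List β)} (hF : ∀ w ∈ F, w.rotate 1 ∈ F) :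
    F.val.map List.dropLast = F.val.map List.tail := by
  have hbij : Set.BijOn (List.rotate · 1) (F : Set (List β)) F :=
    (F.finite_toSet.injOn_iff_bijOn_of_mapsTo hF).mp (List.rotate_injective 1).injOn
  refine (Multiset.map_eq_map_of_bij_of_nodup _ _ F.nodup F.nodup (fun w _ => w.rotate 1) hF
    (fun _ _ _ _ h => List.rotate_injective 1 h) (fun w hw => ?_)
    fun w _ => w.tail_eq_dropLast_rotate_one).symm
  obtain ⟨v, hv, rfl⟩ := hbij.surjOn hw
  exact ⟨v, hv, rfl⟩

lemma reflTransGen_rotate (hC : ∀ w ∈ C, ∀ k, w.rotate k ∈ C) {w : List β} (hw : w ∈ C)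
    (k : ℕ) : ReflTransGen (fun u v => v ∈ C ∧ u.tail = v.dropLast) w (w.rotate k) := by
  induction k with
  | zero => rw [List.rotate_zero]
  | succ k ih =>
    refine ih.tail ⟨hC w hw _, ?_⟩
    rw [List.tail_eq_dropLast_rotate_one, List.rotate_rotate]

/-- Rotate `x` to the front, trade it for `y` in a single step, and rotate back. -/
lemma reflTransGen_append_cons (hC : ∀ w ∈ C, ∀ k, w.rotate k ∈ C) {a b : List β} {x y : β}
    (hx : a ++ x :: b ∈ C) (hy : a ++ y :: b ∈ C) :
    ReflTransGen (fun u v => v ∈ C ∧ u.tail = v.dropLast) (a ++ x :: b) (a ++ y :: b) := by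
  have hxrot : (a ++ x :: b).rotate a.length = x :: (b ++ a) := by
    rw [List.rotate_append_length_eq, List.cons_append]
  have hyrot : (a ++ y :: b).rotate (a.length + 1) = (b ++ a) ++ [y] := by
    rw [show a ++ y :: b = (a ++ [y]) ++ b by simp, show a.length + 1 = (a ++ [y]).length by simp,
      List.rotate_append_length_eq, List.append_assoc]
  have hyback : ((a ++ y :: b).rotate (a.length + 1)).rotate b.length = a ++ y :: b := by
    rw [List.rotate_rotate, show a.length + 1 + b.length = (a ++ y :: b).length by simp; omega,
      List.rotate_length]
  have hstep : (x :: (b ++ a)).tail = ((a ++ y :: b).rotate (a.length + 1)).dropLast := by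
    rw [hyrot, List.dropLast_concat, List.tail_cons]
  have hfirst := reflTransGen_rotate hC hx a.length
  have hlast := reflTransGen_rotate hC (hC _ hy (a.length + 1)) b.length
  rw [hxrot] at hfirst
  rw [hyback] at hlast
  exact hfirst.trans (ReflTransGen.head ⟨hC _ hy _, hstep⟩ hlast)

end Rotation

lemma weakOrders_finite (n : ℕ) : (weakOrders n).Finite := by
  refine ((List.finite_length_eq (Fin n) n).image (List.map Fin.val)).subset ?_
  rintro w ⟨hlen, h, hh⟩
  have hlt : ∀ x ∈ w, x < n := fun x hx => by
    have hcard := hh ▸ w.toFinset_card_le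
    have := hh ▸ List.mem_toFinset.mpr hx
    simp only [Finset.card_range, Finset.mem_range] at hcard this
    omega
  exact ⟨w.pmap Fin.mk hlt, by simpa using hlen, by simp [List.map_pmap]⟩

lemma rotate_mem_weakOrders {n : ℕ} {w : List ℕ} (hw : w ∈ weakOrders n) (k : ℕ) :
    w.rotate k ∈ weakOrders n := by
  obtain ⟨hlen, h, hh⟩ := hw
  exact ⟨by rw [List.length_rotate, hlen], h,
    by rw [List.toFinset_eq_of_perm _ _ (w.rotate_perm k), hh]⟩

lemma exists_toFinset_eq_range_of_lt_max {a b : List ℕ} {h x : ℕ} (hx : x < h)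
    (hw : (a ++ h :: b).toFinset = Finset.range (h + 1)) :
    ∃ k, (a ++ x :: b).toFinset = Finset.range (k + 1) := by
  simp only [Finset.ext_iff, List.mem_toFinset, List.mem_append, List.mem_cons,
    Finset.mem_range] at hw ⊢
  by_cases hh : h ∈ a ∨ h ∈ b
  · exact ⟨h, fun y => by have := hw y; have := hw x; grind⟩
  · exact ⟨h - 1, fun y => by have := hw y; grind⟩

lemma reflTransGen_replicate_zero {n : ℕ} {w : List ℕ} (hw : w ∈ weakOrders n) :
    ReflTransGen (fun u v => v ∈ weakOrders n ∧ u.tail = v.dropLast) w (List.replicate n 0) ∧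
      ReflTransGen (fun u v => v ∈ weakOrders n ∧ u.tail = v.dropLast) (List.replicate n 0) w := by
  induction hs : w.sum using Nat.strong_induction_on generalizing w with
  | _ s ih =>
    have ⟨hlen, h, hh⟩ := hw
    rcases Nat.eq_zero_or_pos h with rfl | hpos
    · have : w = List.replicate n 0 := List.eq_replicate_iff.mpr
        ⟨hlen, fun x hx => by have := hh ▸ List.mem_toFinset.mpr hx; simpa using this⟩
      subst this
      exact ⟨.refl, .refl⟩
    obtain ⟨a, b, rfl⟩ :=
      List.append_of_mem (List.mem_toFinset.mp (hh ▸ Finset.self_mem_range_succ h))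
    have hw' : a ++ 0 :: b ∈ weakOrders n :=
      ⟨by simpa using hlen, exists_toFinset_eq_range_of_lt_max hpos hh⟩
    obtain ⟨hto, hfrom⟩ := ih _ (by simp at hs ⊢; omega) hw' rfl
    exact ⟨(reflTransGen_append_cons (fun _ => rotate_mem_weakOrders) hw hw').trans hto,
      hfrom.trans (reflTransGen_append_cons (fun _ => rotate_mem_weakOrders) hw' hw)⟩

lemma Cycle.Chain.rel_getElem_add_one_mod {α : Type*} {r : α → α → Prop} {l : List α}
    (h : Cycle.Chain r (l : Cycle α)) {i : ℕ} (hi : i < l.length) :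
    r l[i] (l[(i + 1) % l.length]'(Nat.mod_lt _ (by omega))) := by
  cases l with
  | nil => simp at hi
  | cons a l =>
    have hchain : List.IsChain r ((a :: l) ++ [a]) := by
      simpa using (Cycle.chain_coe_cons r a l).mp h
    have := List.isChain_iff_getElem.mp hchain i (by simp at hi ⊢; omega)
    rw [List.getElem_append_left hi] at this
    rcases Nat.lt_or_ge (i + 1) (a :: l).length with hlt | hge
    · rw [List.getElem_append_left hlt] at this
      simp only [Nat.mod_eq_of_lt hlt]
      exact this
    · have hi' : i + 1 = (a :: l).length := by omega
      rw [List.getElem_append_right hge] at this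
      simpa [hi'] using this

lemma List.ofFn_headI_add_eq {β : Type*} [Inhabited β] {m : ℕ} {c : ℕ → List β}
    (hlen : ∀ i, (c i).length = m) (hstep : ∀ i, (c i).tail = (c (i + 1)).dropLast) (i : ℕ) :
    List.ofFn (fun j : Fin m => (c (i + j)).headI) = c i := by
  have key : ∀ j i (hj : j < m), (c (i + j)).headI = (c i)[j]'(by rw [hlen]; exact hj) := by
    intro j
    induction j with
    | zero =>
      intro i hj
      obtain ⟨x, l, hx⟩ := List.exists_cons_of_length_pos (hlen i ▸ hj)
      simp [hx]
    | succ j ih =>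
      intro i hj
      rw [show i + (j + 1) = i + 1 + j by omega, ih (i + 1) (by omega)]
      calc (c (i + 1))[j]'(by rw [hlen]; omega)
          = (c (i + 1)).dropLast[j]'(by simp [hlen]; omega) := (List.getElem_dropLast _).symm
        _ = (c i).tail[j]'(by simp [hlen]; omega) := List.getElem_of_eq (hstep i).symm _
        _ = (c i)[j + 1]'(by rw [hlen]; omega) := List.getElem_tail _
  exact List.ext_getElem (by simp [hlen]) fun j h1 _ => by simp [key j i (by simpa using h1)]

theorem exists_isUCycle_of_cycleChain {m : ℕ} {l : List (List ℕ)} (hnd : l.Nodup)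
    (hlen : ∀ w ∈ l, w.length = m)
    (hl : Cycle.Chain (fun u v : List ℕ => u.tail = v.dropLast) (l : Cycle (List ℕ))) :
    ∃ a, IsUCycle m l.length {w | w ∈ l} a := by
  rcases eq_or_ne l [] with rfl | hne
  · exact ⟨id, by simp [IsUCycle]⟩
  have hN : 0 < l.length := List.length_pos_iff.mpr hne
  let c : ℕ → List ℕ := fun i => l[i % l.length]'(Nat.mod_lt _ hN)
  have hwin : ∀ i, List.ofFn (fun j : Fin m => (c ((i + j) % l.length)).headI) = c i := by
    simp only [c, Nat.mod_mod]
    refine List.ofFn_headI_add_eq (c := c) (fun i => hlen _ (List.getElem_mem _)) fun i => ?_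
    simpa [c] using hl.rel_getElem_add_one_mod (Nat.mod_lt i hN)
  refine ⟨fun i => (c i).headI, fun i _ => ?_, fun w hw => ?_⟩
  · rw [hwin]
    exact List.getElem_mem _
  · obtain ⟨j, hj, rfl⟩ := List.getElem_of_mem hw
    refine ⟨j, ⟨hj, by rw [hwin]; simp [c, Nat.mod_eq_of_lt hj]⟩, fun i ⟨hi, hiw⟩ => ?_⟩
    rw [hwin] at hiw
    simpa [c, Nat.mod_eq_of_lt hi, hnd.getElem_inj_iff] using hiw

theorem exists_ucycle_weakOrders_general (n : ℕ) :
    ∃ a : ℕ → ℕ, IsUCycle n (Nat.card (weakOrders n)) (weakOrders n) a := by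
  have hfin := weakOrders_finite n
  have hF : ∀ w, w ∈ hfin.toFinset ↔ w ∈ weakOrders n := fun w => hfin.mem_toFinset
  obtain ⟨l, hnd, hl, hchain⟩ := Eulerian.exists_circuit (s := List.dropLast) (t := List.tail)
    (F := hfin.toFinset)
    (map_dropLast_eq_map_tail fun w hw => (hF _).mpr (rotate_mem_weakOrders ((hF w).mp hw) 1))
    fun e he f hf => ReflTransGen.mono (fun _ v huv => ⟨(hF v).mpr huv.1, huv.2⟩) _ _
      ((reflTransGen_replicate_zero ((hF e).mp he)).1.trans
        (reflTransGen_replicate_zero ((hF f).mp hf)).2)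
  have hmem : ∀ w, w ∈ l ↔ w ∈ weakOrders n := fun w => by rw [← List.mem_toFinset, hl, hF]
  have hN : l.length = Nat.card (weakOrders n) := by
    rw [Nat.card_eq_card_finite_toFinset hfin, ← hl, List.toFinset_card_of_nodup hnd]
  rw [← hN, ← Set.ext hmem]
  exact exists_isUCycle_of_cycleChain hnd (fun w hw => ((hmem w).mp hw).1) hchain

/-- For every positive integer `n`, there exists a universal cycle for `W(n)`,
of length `N = |W(n)|`. -/
theorem exists_ucycle_weakOrders (n : ℕ) (hn : 0 < n) :
    ∃ a : ℕ → ℕ, IsUCycle n (Nat.card (weakOrders n)) (weakOrders n) a :=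
  exists_ucycle_weakOrders_general n
end

section
/- For all positive integers n and k with k ≤ n(n−1)/2, there exists a universal cycle for W_k⁻(n), the set of prefixes of weight-k weak order words of length n (a set of strings of length n−1 whose cardinality equals |W_k(n)|). -/
/-- `W_k(n)`: the weak order words of length `n` with weight (sum of letters) `k`. -/
def weightWeakOrders (n k : ℕ) : Set (List ℕ) :=
  {w ∈ weakOrders n | w.sum = k}

/-!
Since the weight determines the last letter, a ucycle for `W_k⁻(n)` amounts to a cyclic ordering
of `W_k(n)` in which the prefix of each word, shifted by one letter, is the prefix of the next
word: an Eulerian circuit of the digraph whose edges are the words. Rotating every word by one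
letter is a successor permutation, so this digraph is balanced, and the cycles of a successor
permutation can be merged by transpositions as long as the digraph is connected.

For connectivity, rotations and exchanging the first and last letters generate all rearrangements
of a word, and two words whose multisets of letters differ in only two elements are joined through
the arrangements `a :: K ++ [b]` and `a' :: K ++ [b']`, which have the same middle. A weak order
multiset of height `h` is `{0, …, h} + E` with every element of `E` at most `h`; shifting weight
inside `E` joins any two multisets of the same height, and one more exchange climbs to height
`h + 1` whenever the weight allows it.
-/

open Equiv Function Relation Multiset

namespace Equiv.Perm

variable {α : Type*} [DecidableEq α] [Finite α] {f : Perm α} {a b x y : α}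

theorem sameCycle_mul_swap (hab : ¬ f.SameCycle a b) : (f * swap a b).SameCycle a b := by
  by_contra hba
  have hfb : ∀ i : ℕ, (f * swap a b).SameCycle a ((f ^ (i + 1)) b) := by
    intro i
    induction i with
    | zero => exact ⟨1, by simp⟩
    | succ i ih =>
      have hne_a : (f ^ (i + 1)) b ≠ a := fun h =>
        hab (SameCycle.symm ⟨((i + 1 : ℕ) : ℤ), by rw [zpow_natCast]; exact h⟩)
      have hne_b : (f ^ (i + 1)) b ≠ b := fun h => hba (by rwa [h] at ih)
      have hnext : (f * swap a b) ((f ^ (i + 1)) b) = (f ^ (i + 2)) b := by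
        rw [mul_apply, swap_apply_of_ne_of_ne hne_a hne_b, pow_succ' f (i + 1), mul_apply]
      exact hnext ▸ ih.trans ⟨1, by simp⟩
  obtain ⟨i, hi, -, hib⟩ := (SameCycle.refl f b).exists_pow_eq''
  obtain ⟨j, rfl⟩ := Nat.exists_eq_succ_of_ne_zero hi.ne'
  exact hba (by simpa only [Nat.succ_eq_add_one, hib] using hfb j)

theorem SameCycle.mul_swap (hab : ¬ f.SameCycle a b) (h : f.SameCycle x y) :
    (f * swap a b).SameCycle x y := by
  have hstep : ∀ z, (f * swap a b).SameCycle z (f z) := by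
    intro z
    have hab' := sameCycle_mul_swap hab
    by_cases hza : z = a
    · subst hza
      simpa using hab'.trans (⟨1, by simp⟩ : (f * swap z b).SameCycle b _)
    by_cases hzb : z = b
    · subst hzb
      simpa using hab'.symm.trans (⟨1, by simp⟩ : (f * swap a z).SameCycle a _)
    · exact ⟨1, by simp [swap_apply_of_ne_of_ne hza hzb]⟩
  obtain ⟨i, rfl⟩ := h.exists_nat_pow_eq
  clear h
  induction i with
  | zero => rfl
  | succ i ih => exact ih.trans (by rw [pow_succ', mul_apply]; exact hstep _)

end Equiv.Perm

/-- Think of `x : α` as an edge from `g x` to `f x`; then `f = g ∘ τ` splits the edges into closed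
trails, and two trails entering a common vertex through `u` and `w` are merged by swapping the
successors of `u` and `w`. A successor permutation with the most pairs in a common cycle therefore
has a single cycle. -/
theorem exists_perm_isCycleOn_univ_of_eqvGen {α β : Type*} [Finite α] {f g : α → β}
    {τ₀ : Perm α} (h₀ : f = g ∘ τ₀) (hconn : ∀ x y, EqvGen (fun x y => f x = g y) x y) :
    ∃ τ : Perm α, f = g ∘ τ ∧ τ.IsCycleOn Set.univ := by
  classical
  have := Fintype.ofFinite α
  let pairs (τ : Perm α) := Finset.univ.filter fun p : α × α => τ.SameCycle p.1 p.2
  obtain ⟨τ, hτ, hmax⟩ := (Finset.univ.filter fun τ : Perm α => f = g ∘ τ).exists_max_image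
    (fun τ => (pairs τ).card) ⟨τ₀, by simpa using h₀⟩
  simp only [Finset.mem_filter, Finset.mem_univ, true_and] at hτ hmax
  have hrel : ∀ u v, f u = g v → τ.SameCycle u v := by
    intro u v huv
    by_contra huv'
    have hw : ¬ τ.SameCycle u (τ⁻¹ v) := fun h => huv' (h.trans ⟨1, by simp⟩)
    have hfw : f (τ⁻¹ v) = f u := by rw [huv, hτ, comp_apply, Perm.coe_inv, apply_symm_apply]
    have hτ' : f = g ∘ ⇑(τ * swap u (τ⁻¹ v)) := by
      rw [Perm.coe_mul, ← Function.comp_assoc, ← hτ, comp_swap_eq_update, ← hfw, update_eq_self,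
        hfw, update_eq_self]
    have hlt : (pairs τ).card < (pairs (τ * swap u (τ⁻¹ v))).card := by
      refine Finset.card_lt_card ⟨fun p hp => ?_, fun hsub => ?_⟩
      · simp only [pairs, Finset.mem_filter, Finset.mem_univ, true_and] at hp ⊢
        exact hp.mul_swap hw
      · have hmem : (u, τ⁻¹ v) ∈ pairs (τ * swap u (τ⁻¹ v)) := by
          simpa [pairs] using Perm.sameCycle_mul_swap hw
        exact hw (by simpa [pairs] using hsub hmem)
    exact (hmax _ hτ').not_gt hlt
  refine ⟨τ, hτ, τ.bijective.bijOn_univ, fun x _ y _ => ?_⟩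
  exact (Equivalence.eqvGen_iff (Perm.SameCycle.equivalence τ)).1
    (EqvGen.mono hrel x y (hconn x y))

theorem isUCycle_of_tail_eq_dropLast {m N : ℕ} {C : Set (List ℕ)} (c : ℕ → List ℕ)
    (hlen : ∀ i, (c i).length = m) (hsucc : ∀ i, (c i).tail = (c (i + 1)).dropLast)
    (hmod : ∀ i j, c i = c j ↔ i ≡ j [MOD N]) (hmaps : ∀ i, c i ∈ C)
    (hsurj : ∀ x ∈ C, ∃ i < N, c i = x) :
    IsUCycle m N C fun i => (c i).getD 0 0 := by
  have hshift : ∀ j q i, j + q < m → (c (i + j))[q]? = (c i)[j + q]? := by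
    intro j
    induction j with
    | zero => simp
    | succ j ih =>
      intro q i hjq
      have hq : (c (i + j + 1))[q]? = (c (i + j + 1)).dropLast[q]? := by
        rw [List.getElem?_dropLast, if_pos (by rw [hlen]; omega)]
      rw [← add_assoc, hq, ← hsucc, List.getElem?_tail, ih (q + 1) i (by omega),
        Nat.add_right_comm, add_assoc]
  have hwin : ∀ i, (List.ofFn fun j : Fin m => (c ((i + j) % N)).getD 0 0) = c i := by
    intro i
    refine List.ext_getElem (by simp [hlen]) fun j hj _ => ?_
    rw [List.getElem_ofFn, (hmod _ _).2 (Nat.mod_modEq _ _), List.getD_eq_getElem?_getD,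
      hshift j 0 i (by simpa using hj), List.getElem?_eq_getElem]
    rfl
  refine ⟨fun i _ => hwin i ▸ hmaps i, fun x hx => ?_⟩
  obtain ⟨i, hi, rfl⟩ := hsurj x hx
  refine ⟨i, ⟨hi, hwin i⟩, fun j ⟨hj, hji⟩ => ?_⟩
  exact ((hmod j i).1 (by rw [← hwin j, hji])).eq_of_lt_of_lt hj hi

/-- The prefixes `x⁻ = a₀ ⋯ aₘ₋₁` and `y⁻ = a₁ ⋯ aₘ` are consecutive windows of one sequence. -/
def Follows {α : Type*} (x y : List α) : Prop := x.dropLast.tail = y.dropLast.dropLast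

def FollowsEqv {α : Type*} (S : Set (List α)) : S → S → Prop :=
  EqvGen fun x y => Follows x.1 y.1

section Follows

variable {α : Type*} {S : Set (List α)}

theorem follows_rotate_one (l : List α) : Follows l (l.rotate 1) := by
  rcases l with _ | ⟨a, _ | ⟨b, l⟩⟩
  · rfl
  · simp [Follows]
  · simp only [Follows, List.rotate_cons_succ, List.rotate_zero, List.dropLast_concat]
    simp

theorem dropLast_tail_cons_append_singleton (a b : α) (l : List α) :
    (a :: l ++ [b]).dropLast.tail = l := by
  rw [List.cons_append, List.dropLast_cons_of_ne_nil (by simp), List.dropLast_concat]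
  rfl

theorem followsEqv_of_eq_rotate (hS : ∀ {l l'}, l.Perm l' → l ∈ S → l' ∈ S) {x y : S} (i : ℕ)
    (h : y.1 = x.1.rotate i) : FollowsEqv S x y := by
  induction i generalizing y with
  | zero => exact Subtype.ext (by simpa using h) ▸ EqvGen.refl x
  | succ i ih =>
    let z : S := ⟨x.1.rotate i, hS (List.rotate_perm _ _).symm x.2⟩
    refine EqvGen.trans _ z _ (ih rfl) (EqvGen.rel _ _ ?_)
    rw [h, ← List.rotate_rotate]
    exact follows_rotate_one z.1

theorem followsEqv_of_dropLast_tail_eq (hS : ∀ {l l'}, l.Perm l' → l ∈ S → l' ∈ S) {x y : S}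
    (h : x.1.dropLast.tail = y.1.dropLast.tail) : FollowsEqv S x y := by
  let z : S := ⟨y.1.rotate 1, hS (List.rotate_perm _ _).symm y.2⟩
  have hxz : Follows x.1 z.1 := h.trans (follows_rotate_one y.1)
  exact (EqvGen.rel _ z hxz).trans _ _ _ (followsEqv_of_eq_rotate hS 1 rfl).symm

theorem followsEqv_of_perm (hS : ∀ {l l'}, l.Perm l' → l ∈ S → l' ∈ S) {x y : S}
    (h : x.1.Perm y.1) : FollowsEqv S x y := by
  suffices key : ∀ {B B'} (A : List α), B.Perm B' → ∀ (hB : A ++ B ∈ S) (hB' : A ++ B' ∈ S),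
      FollowsEqv S ⟨_, hB⟩ ⟨_, hB'⟩ from key [] h x.2 y.2
  intro B B' A hp
  induction hp generalizing A with
  | nil => exact fun _ _ => EqvGen.refl _
  | cons a _ ih => simpa using ih (A ++ [a])
  | swap b a B =>
    -- rotate the transposed pair to the two ends, exchange the ends, and rotate back
    intro hB hB'
    have e₁ : (A ++ a :: b :: B).rotate (A.length + 1) = b :: (B ++ A) ++ [a] := by
      simpa using List.rotate_append_length_eq (A ++ [a]) (b :: B)
    have e₂ : (a :: (B ++ A) ++ [b]).rotate (B.length + 1) = A ++ b :: a :: B := by simp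
    let u₁ : S := ⟨b :: (B ++ A) ++ [a], e₁ ▸ hS (List.rotate_perm _ _).symm hB⟩
    let u₂ : S := ⟨a :: (B ++ A) ++ [b], hS (by rw [← e₂]; exact List.rotate_perm _ _) hB'⟩
    have h₁₂ : FollowsEqv S u₁ u₂ := followsEqv_of_dropLast_tail_eq hS
      (by simp only [u₁, u₂, dropLast_tail_cons_append_singleton])
    exact ((followsEqv_of_eq_rotate hS _ e₁.symm).trans _ _ _ h₁₂).trans _ _ _
      (followsEqv_of_eq_rotate hS _ e₂.symm)
  | trans _ _ ih₁ ih₂ =>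
    exact fun hB hB' => (ih₁ A hB (hS (.append_left A ‹_›) hB)).trans _ _ _ (ih₂ A _ hB')

theorem coe_cons_append_singleton (a b : α) (l : List α) :
    ((a :: l ++ [b] : List α) : Multiset α) = a ::ₘ b ::ₘ l :=
  Multiset.coe_eq_coe.2 (.cons a (List.perm_append_singleton b l))

theorem followsEqv_of_coe_eq_cons_cons (hS : ∀ {l l'}, l.Perm l' → l ∈ S → l' ∈ S) {x y : S}
    {K : Multiset α} {a b a' b' : α} (hx : (x.1 : Multiset α) = a ::ₘ b ::ₘ K)
    (hy : (y.1 : Multiset α) = a' ::ₘ b' ::ₘ K) : FollowsEqv S x y := by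
  have hperm {z : S} {c d : α} (hz : (z.1 : Multiset α) = c ::ₘ d ::ₘ K) :
      z.1.Perm (c :: K.toList ++ [d]) := by
    rw [← Multiset.coe_eq_coe, coe_cons_append_singleton, Multiset.coe_toList, hz]
  let u : S := ⟨_, hS (hperm hx) x.2⟩
  let v : S := ⟨_, hS (hperm hy) y.2⟩
  have huv : FollowsEqv S u v := followsEqv_of_dropLast_tail_eq hS
    (by simp only [u, v, dropLast_tail_cons_append_singleton])
  exact ((followsEqv_of_perm hS (hperm hx)).trans _ _ _ huv).trans _ _ _
    (followsEqv_of_perm hS (hperm hy)).symm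

end Follows

def IsWeakOrder (M : Multiset ℕ) : Prop := ∃ h, M.toFinset = Finset.range (h + 1)

def SumExchange (P : Multiset ℕ → Prop) (M M' : Multiset ℕ) : Prop :=
  P M ∧ P M' ∧ M.sum = M'.sum ∧ ∃ K a b a' b', M = a ::ₘ b ::ₘ K ∧ M' = a' ::ₘ b' ::ₘ K

namespace SumExchange

variable {P Q : Multiset ℕ → Prop} {M M' : Multiset ℕ}

instance : Std.Symm (SumExchange P) where
  symm _ _ := fun ⟨hM, hM', hs, K, a, b, a', b', e, e'⟩ =>
    ⟨hM', hM, hs.symm, K, a', b', a, b, e', e⟩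

theorem card_eq (h : SumExchange P M M') : card M = card M' := by
  obtain ⟨-, -, -, K, a, b, a', b', rfl, rfl⟩ := h
  simp

theorem add_left (N : Multiset ℕ) (hPQ : ∀ M, P M → Q (N + M)) (h : SumExchange P M M') :
    SumExchange Q (N + M) (N + M') := by
  obtain ⟨hM, hM', hs, K, a, b, a', b', rfl, rfl⟩ := h
  refine ⟨hPQ _ hM, hPQ _ hM', ?_, N + K, a, b, a', b', by simp, by simp⟩
  simp only [sum_add, sum_cons] at hs ⊢
  omega

theorem reflTransGen_add_left (N : Multiset ℕ) (hPQ : ∀ M, P M → Q (N + M))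
    (h : ReflTransGen (SumExchange P) M M') : ReflTransGen (SumExchange Q) (N + M) (N + M') :=
  h.lift (N + ·) fun _ _ => add_left N hPQ

theorem reflTransGen_prop_card_sum (h : ReflTransGen (SumExchange P) M M') (hM : P M) :
    P M' ∧ card M' = card M ∧ M'.sum = M.sum := by
  induction h with
  | refl => exact ⟨hM, rfl, rfl⟩
  | tail _ hstep ih => exact ⟨hstep.2.1, hstep.card_eq ▸ ih.2.1, hstep.2.2.1 ▸ ih.2.2⟩

end SumExchange

theorem Multiset.exists_mem_pos_of_sum_pos {s : Multiset ℕ} (h : 0 < s.sum) :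
    ∃ x ∈ s, 0 < x := by
  by_contra! hs
  exact h.ne' (sum_eq_zero_iff.2 fun x hx => Nat.le_zero.1 (hs x hx))

section Bounded

variable {h : ℕ}

theorem exists_reflTransGen_sumExchange_cons {m : ℕ} (hmh : m ≤ h) {E : Multiset ℕ}
    (hE : ∀ y ∈ E, y ≤ h) (hmE : m ≤ E.sum) {x : ℕ} (hx : x ∈ E) (hxm : x ≤ m) :
    ∃ F, ReflTransGen (SumExchange (∀ y ∈ ·, y ≤ h)) E (m ::ₘ F) := by
  induction hd : m - x generalizing E x with
  | zero => exact ⟨E.erase x, by rw [show m = x by omega, cons_erase hx]⟩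
  | succ d ih =>
    have hsum := sum_erase hx
    obtain ⟨y, hy, hy0⟩ := exists_mem_pos_of_sum_pos (show 0 < (E.erase x).sum by omega)
    have hE' : E = x ::ₘ y ::ₘ (E.erase x).erase y := by rw [cons_erase hy, cons_erase hx]
    set K := (E.erase x).erase y
    have hK : ∀ z ∈ K, z ≤ h := fun z hz => hE z (mem_of_mem_erase (mem_of_mem_erase hz))
    have hE₁ : ∀ z ∈ (x + 1) ::ₘ (y - 1) ::ₘ K, z ≤ h := by
      have := hE y (mem_of_mem_erase hy)
      simp only [mem_cons]
      rintro z (rfl | rfl | hz) <;> first | omega | exact hK z hz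
    have hsum₁ : ((x + 1) ::ₘ (y - 1) ::ₘ K).sum = E.sum := by
      rw [hE']
      simp only [sum_cons]
      omega
    have hstep : SumExchange (∀ y ∈ ·, y ≤ h) E ((x + 1) ::ₘ (y - 1) ::ₘ K) :=
      ⟨hE, hE₁, hsum₁.symm, K, x, y, x + 1, y - 1, hE', rfl⟩
    obtain ⟨F, hF⟩ := ih hE₁ (hsum₁ ▸ hmE) (mem_cons_self _ _) (by omega) (by omega)
    exact ⟨F, .head hstep hF⟩

theorem exists_reflTransGen_sumExchange_min_cons {E : Multiset ℕ} (hE : ∀ y ∈ E, y ≤ h)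
    (hE0 : E ≠ 0) : ∃ F, ReflTransGen (SumExchange (∀ y ∈ ·, y ≤ h)) E (min h E.sum ::ₘ F) :=
  have ⟨x, hx⟩ := exists_mem_of_ne_zero hE0
  exists_reflTransGen_sumExchange_cons (min_le_left _ _) hE (min_le_right _ _) hx
    (le_min (hE x hx) (le_sum_of_mem hx))

theorem reflTransGen_sumExchange_of_forall_le {E E' : Multiset ℕ} (hE : ∀ x ∈ E, x ≤ h)
    (hE' : ∀ x ∈ E', x ≤ h) (hc : card E = card E') (hs : E.sum = E'.sum) :
    ReflTransGen (SumExchange (∀ x ∈ ·, x ≤ h)) E E' := by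
  induction hn : card E generalizing E E' with
  | zero => rw [card_eq_zero.1 hn, card_eq_zero.1 (hc.symm.trans hn)]
  | succ s ih =>
    obtain ⟨F, hEF⟩ := exists_reflTransGen_sumExchange_min_cons hE (card_pos.1 (by omega))
    obtain ⟨F', hEF'⟩ := exists_reflTransGen_sumExchange_min_cons hE' (card_pos.1 (by omega))
    obtain ⟨hF, hFc, hFs⟩ := SumExchange.reflTransGen_prop_card_sum hEF hE
    obtain ⟨hF', hFc', hFs'⟩ := SumExchange.reflTransGen_prop_card_sum hEF' hE'
    simp only [forall_mem_cons, card_cons, sum_cons] at hF hFc hFs hF' hFc' hFs'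
    have hFF' := SumExchange.reflTransGen_add_left {min h E.sum}
      (Q := (∀ x ∈ ·, x ≤ h)) (fun M hM => by rw [singleton_add, forall_mem_cons]; exact ⟨hF.1, hM⟩)
      (ih hF.2 hF'.2 (by omega) (by omega) (by omega))
    rw [singleton_add, singleton_add] at hFF'
    exact (hEF.trans hFF').trans (symm (hs ▸ hEF'))

end Bounded

section Levels

theorem exists_eq_range_add {M : Multiset ℕ} {h : ℕ} (hM : M.toFinset = Finset.range (h + 1)) :
    ∃ E, M = range (h + 1) + E ∧ ∀ x ∈ E, x ≤ h := by
  have hle : range (h + 1) ≤ M := (le_iff_subset (nodup_range _)).2 fun x hx => by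
    rw [← mem_toFinset, hM, Finset.mem_range]
    exact mem_range.1 hx
  refine ⟨M - range (h + 1), (add_tsub_cancel_of_le hle).symm, fun x hx => ?_⟩
  have hxM := mem_toFinset.2 (mem_of_le (Multiset.sub_le_self _ _) hx)
  rw [hM, Finset.mem_range] at hxM
  omega

theorem toFinset_range_add {E : Multiset ℕ} {h : ℕ} (hE : ∀ x ∈ E, x ≤ h) :
    (range (h + 1) + E).toFinset = Finset.range (h + 1) := by
  ext x
  simp only [toFinset_add, Finset.mem_union, mem_toFinset, mem_range, Finset.mem_range]
  exact ⟨fun hx => hx.elim id fun hx => Nat.lt_succ_of_le (hE x hx), .inl⟩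

theorem isWeakOrder_range_add {E : Multiset ℕ} {h : ℕ} (hE : ∀ x ∈ E, x ≤ h) :
    IsWeakOrder (range (h + 1) + E) :=
  ⟨h, toFinset_range_add hE⟩

theorem reflTransGen_sumExchange_of_toFinset_eq {M M' : Multiset ℕ} {h : ℕ}
    (hM : M.toFinset = Finset.range (h + 1)) (hM' : M'.toFinset = Finset.range (h + 1))
    (hc : card M = card M') (hs : M.sum = M'.sum) :
    ReflTransGen (SumExchange IsWeakOrder) M M' := by
  obtain ⟨E, rfl, hE⟩ := exists_eq_range_add hM
  obtain ⟨E', rfl, hE'⟩ := exists_eq_range_add hM'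
  simp only [card_add, sum_add] at hc hs
  exact SumExchange.reflTransGen_add_left _ (fun _ => isWeakOrder_range_add)
    (reflTransGen_sumExchange_of_forall_le hE hE' (by omega) (by omega))

/-- Bring `h` and some positive `t` into the part above `{0, …, h}`, then exchange them for
`h + 1` and `t - 1`. -/
theorem exists_reflTransGen_sumExchange_toFinset_succ {M : Multiset ℕ} {h : ℕ}
    (hM : M.toFinset = Finset.range (h + 1)) (hsum : (range (h + 2)).sum ≤ M.sum) :
    ∃ M₁, M₁.toFinset = Finset.range (h + 2) ∧ ReflTransGen (SumExchange IsWeakOrder) M M₁ := by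
  have hr : range (h + 2) = (h + 1) ::ₘ range (h + 1) := range_succ _
  obtain ⟨E, rfl, hE⟩ := exists_eq_range_add hM
  rw [hr, sum_cons, sum_add] at hsum
  obtain ⟨x, hx, -⟩ := exists_mem_pos_of_sum_pos (show 0 < E.sum by omega)
  obtain ⟨F, hF⟩ := exists_reflTransGen_sumExchange_cons le_rfl hE (by omega) hx (hE x hx)
  obtain ⟨hFh, -, hFs⟩ := SumExchange.reflTransGen_prop_card_sum hF hE
  rw [sum_cons] at hFs
  obtain ⟨t, ht, ht0⟩ := exists_mem_pos_of_sum_pos (show 0 < F.sum by omega)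
  obtain ⟨K, rfl⟩ := exists_cons_of_mem ht
  have hK : ∀ y ∈ (t - 1) ::ₘ K, y ≤ h + 1 := by
    have := hFh t (by simp)
    simp only [mem_cons]
    rintro y (rfl | hy)
    · omega
    · exact (hFh y (by simp [hy])).trans h.le_succ
  refine ⟨range (h + 2) + (t - 1) ::ₘ K, toFinset_range_add hK, ?_⟩
  refine (SumExchange.reflTransGen_add_left _ (fun _ => isWeakOrder_range_add) hF).tail
    ⟨isWeakOrder_range_add hFh, isWeakOrder_range_add hK, ?_, range (h + 1) + K,
      h, t, h + 1, t - 1, by simp only [add_cons], by rw [hr, add_cons, cons_add, cons_swap]⟩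
  simp only [hr, sum_add, sum_cons]
  omega

theorem reflTransGen_sumExchange_of_toFinset_eq_of_le {M M' : Multiset ℕ} {h h' : ℕ}
    (hM : M.toFinset = Finset.range (h + 1)) (hM' : M'.toFinset = Finset.range (h' + 1))
    (hle : h ≤ h') (hc : card M = card M') (hs : M.sum = M'.sum) :
    ReflTransGen (SumExchange IsWeakOrder) M M' := by
  obtain ⟨d, rfl⟩ := Nat.exists_eq_add_of_le hle
  induction d generalizing h M with
  | zero => exact reflTransGen_sumExchange_of_toFinset_eq hM hM' hc hs
  | succ d ih =>
    have hsum : (range (h + 2)).sum ≤ M.sum := by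
      obtain ⟨E', rfl, -⟩ := exists_eq_range_add hM'
      obtain ⟨u, hu⟩ :=
        Multiset.le_iff_exists_add.1 (range_le.2 (by omega : h + 2 ≤ h + (d + 1) + 1))
      rw [hs, sum_add, hu, sum_add]
      omega
    obtain ⟨M₁, hM₁, hMM₁⟩ := exists_reflTransGen_sumExchange_toFinset_succ hM hsum
    obtain ⟨-, hc₁, hs₁⟩ := SumExchange.reflTransGen_prop_card_sum hMM₁ ⟨h, hM⟩
    exact hMM₁.trans (ih hM₁ (by omega) (by omega) (by rwa [Nat.add_right_comm h 1 d]) (by omega))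

theorem reflTransGen_sumExchange_isWeakOrder {M M' : Multiset ℕ} (hM : IsWeakOrder M)
    (hM' : IsWeakOrder M') (hc : card M = card M') (hs : M.sum = M'.sum) :
    ReflTransGen (SumExchange IsWeakOrder) M M' := by
  obtain ⟨h, hM⟩ := hM
  obtain ⟨h', hM'⟩ := hM'
  rcases le_total h h' with hle | hle
  · exact reflTransGen_sumExchange_of_toFinset_eq_of_le hM hM' hle hc hs
  · exact symm (reflTransGen_sumExchange_of_toFinset_eq_of_le hM' hM hle hc.symm hs.symm)

end Levels

theorem exists_isUCycle_image_dropLast {n : ℕ} {S : Set (List ℕ)} [Finite S]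
    (hlen : ∀ w ∈ S, w.length = n) (hinj : S.InjOn List.dropLast) (τ : Perm S)
    (hτ : ∀ x, Follows x.1 (τ x).1) (hcyc : τ.IsCycleOn Set.univ) :
    ∃ a : ℕ → ℕ, IsUCycle (n - 1) (Nat.card (List.dropLast '' S)) (List.dropLast '' S) a := by
  rcases isEmpty_or_nonempty S with hS | ⟨⟨x₀⟩⟩
  · rw [Set.isEmpty_coe_sort.1 hS, Set.image_empty]
    exact ⟨0, fun i hi => by simp at hi, fun c hc => hc.elim⟩
  have := Fintype.ofFinite S
  rw [← Finset.coe_univ] at hcyc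
  have hN : Nat.card (List.dropLast '' S) = (Finset.univ : Finset S).card := by
    rw [Nat.card_image_of_injOn hinj, Finset.card_univ, Nat.card_eq_fintype_card]
  refine ⟨_, isUCycle_of_tail_eq_dropLast (fun i => ((τ ^ i) x₀).1.dropLast) (fun i => ?_)
    (fun i => ?_) (fun i j => ?_) (fun i => ⟨_, ((τ ^ i) x₀).2, rfl⟩) ?_⟩
  · rw [List.length_dropLast, hlen _ ((τ ^ i) x₀).2]
  · rw [pow_succ', Perm.mul_apply]
    exact hτ _
  · rw [hN, ← hcyc.pow_apply_eq_pow_apply (Finset.mem_univ x₀), Subtype.ext_iff]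
    exact hinj.eq_iff ((τ ^ i) x₀).2 ((τ ^ j) x₀).2
  · rintro _ ⟨w, hw, rfl⟩
    obtain ⟨i, hi, hiw⟩ := hcyc.exists_pow_eq (Finset.mem_univ x₀) (Finset.mem_univ ⟨w, hw⟩)
    exact ⟨i, hN ▸ hi, by rw [hiw]⟩

section WeightWeakOrders

variable {n k : ℕ}

theorem mem_weightWeakOrders_iff {l : List ℕ} : l ∈ weightWeakOrders n k ↔
    IsWeakOrder l ∧ card (l : Multiset ℕ) = n ∧ (l : Multiset ℕ).sum = k := by
  simp [weightWeakOrders, weakOrders, IsWeakOrder, and_assoc, and_comm, and_left_comm]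

theorem mem_weightWeakOrders_of_perm {l l' : List ℕ} (hp : l.Perm l')
    (hl : l ∈ weightWeakOrders n k) : l' ∈ weightWeakOrders n k := by
  rwa [mem_weightWeakOrders_iff, ← Multiset.coe_eq_coe.2 hp, ← mem_weightWeakOrders_iff]

theorem finite_weightWeakOrders (n k : ℕ) : (weightWeakOrders n k).Finite := by
  refine (Set.finite_range fun f : Fin n → Fin (k + 1) => List.ofFn fun i => (f i : ℕ)).subset ?_
  rintro l ⟨⟨rfl, -⟩, hsum⟩
  exact ⟨fun i => ⟨l[i], Nat.lt_succ_of_le (hsum ▸ List.le_sum_of_mem (List.getElem_mem _))⟩,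
    List.ofFn_getElem⟩

instance : Finite (weightWeakOrders n k) := (finite_weightWeakOrders n k).to_subtype

theorem injOn_dropLast_weightWeakOrders : Set.InjOn List.dropLast (weightWeakOrders n k) := by
  rintro w ⟨⟨hw, -⟩, hws⟩ w' ⟨⟨hw', -⟩, hws'⟩ h
  rcases w.eq_nil_or_concat' with rfl | ⟨L, a, rfl⟩
  · exact (List.length_eq_zero_iff.1 (hw'.trans hw.symm)).symm
  rcases w'.eq_nil_or_concat' with rfl | ⟨L', a', rfl⟩
  · simp at hw hw'
    omega
  rw [List.dropLast_concat, List.dropLast_concat] at h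
  subst h
  simp only [List.sum_append, List.sum_singleton] at hws hws'
  rw [show a = a' by omega]

theorem bijective_rotate_one : Bijective fun x : weightWeakOrders n k =>
    (⟨x.1.rotate 1, mem_weightWeakOrders_of_perm (List.rotate_perm _ _).symm x.2⟩ :
      weightWeakOrders n k) :=
  Finite.injective_iff_bijective.1 fun _ _ h =>
    Subtype.ext (List.rotate_injective 1 (congrArg Subtype.val h))

theorem followsEqv_weightWeakOrders (x y : weightWeakOrders n k) :
    FollowsEqv (weightWeakOrders n k) x y := by
  have key : ∀ M, ReflTransGen (SumExchange IsWeakOrder) (x.1 : Multiset ℕ) M →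
      ∀ y : weightWeakOrders n k, (y.1 : Multiset ℕ) = M → FollowsEqv _ x y := by
    intro M hM
    induction hM with
    | refl =>
      exact fun y hy => followsEqv_of_perm mem_weightWeakOrders_of_perm
        (Multiset.coe_eq_coe.1 hy.symm)
    | @tail M₁ M₂ _ hstep ih =>
      intro y hy
      obtain ⟨-, hyn, hyk⟩ := mem_weightWeakOrders_iff.1 y.2
      obtain ⟨hM₁, -, hs, K, a, b, a', b', e, e'⟩ := hstep
      have hz : M₁.toList ∈ weightWeakOrders n k := by
        rw [mem_weightWeakOrders_iff, Multiset.coe_toList]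
        refine ⟨hM₁, ?_, hs.trans (hy ▸ hyk)⟩
        rw [e, ← hyn, hy, e']
        simp
      exact (ih ⟨_, hz⟩ (Multiset.coe_toList _)).trans _ _ _ (followsEqv_of_coe_eq_cons_cons
        mem_weightWeakOrders_of_perm ((Multiset.coe_toList _).trans e) (hy.trans e'))
  obtain ⟨hx, hxn, hxk⟩ := mem_weightWeakOrders_iff.1 x.2
  obtain ⟨hy, hyn, hyk⟩ := mem_weightWeakOrders_iff.1 y.2
  exact key _ (reflTransGen_sumExchange_isWeakOrder hx hy (hxn.trans hyn.symm)
    (hxk.trans hyk.symm)) y rfl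

end WeightWeakOrders

theorem exists_ucycle_weightWeakOrders_prefixes_general (n k : ℕ) :
    ∃ a : ℕ → ℕ,
      IsUCycle (n - 1) (Nat.card (List.dropLast '' weightWeakOrders n k))
        (List.dropLast '' weightWeakOrders n k) a := by
  obtain ⟨τ, hτ, hcyc⟩ := exists_perm_isCycleOn_univ_of_eqvGen
    (f := fun x : weightWeakOrders n k => x.1.dropLast.tail) (g := fun x => x.1.dropLast.dropLast)
    (τ₀ := .ofBijective _ bijective_rotate_one) (funext fun x => follows_rotate_one x.1)
    followsEqv_weightWeakOrders
  exact exists_isUCycle_image_dropLast (fun _ hw => hw.1.1) injOn_dropLast_weightWeakOrders τ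
    (congrFun hτ) hcyc

/-- For all positive integers `n, k` with `k ≤ C(n,2)`, there is a universal
cycle for `W_k⁻(n)`, the set of prefixes (first `n-1` letters) of weight-`k`
weak order words of length `n`. -/
theorem exists_ucycle_weightWeakOrders_prefixes (n k : ℕ) (hn : 0 < n) (hk : 0 < k)
    (hkn : k ≤ n.choose 2) :
    ∃ a : ℕ → ℕ,
      IsUCycle (n - 1) (Nat.card (List.dropLast '' weightWeakOrders n k))
        (List.dropLast '' weightWeakOrders n k) a :=
  exists_ucycle_weightWeakOrders_prefixes_general n k
end

section
/- For every positive integer n and every natural number h with 0 ≤ h < n−1, there exists a universal cycle for W(n,h), the set of weak order words of length n with height exactly h. -/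
/-- `W(n,h)`: the set of weak order words of length `n` with height exactly `h`,
i.e. words whose set of letters is exactly `{0, 1, …, h}`. -/
def heightWeakOrders (n h : ℕ) : Set (List ℕ) :=
  {w | w.length = n ∧ w.toFinset = Finset.range (h + 1)}

/-!
The words of `W(n,h)` are the edges of a digraph on words of length `n - 1`, the edge `w` going
from `w.dropLast` to `w.tail`, and a ucycle for `W(n,h)` is an Eulerian circuit of this digraph,
read off by the first letters of its edges. Rotating a word keeps it in `W(n,h)`, which makes the
digraph balanced. It is strongly connected as soon as `h + 2 ≤ n`: any two words are joined by a
chain of words in which consecutive ones are `Compatible`, so that every window of their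
concatenation lies in `W(n,h)` again. The intermediate `block`s carry the letters, one at a time,
from the order of their last occurrences in the first word to the order of their first
occurrences in the last one; a word has room for one letter to sit both in its old and in its new
place because `h + 1 < n`. Euler's theorem follows as usual: a longest trail is closed
by balance, and covers every edge by connectivity.
-/

open Relation
open scoped Finset

namespace List

variable {α : Type*} {R : α → α → Prop} {l : List α}

def CyclicChain (R : α → α → Prop) (l : List α) : Prop :=
  ∀ i (hi : i < l.length), R l[i] (l[(i + 1) % l.length]'(Nat.mod_lt _ (by omega)))

theorem CyclicChain.isChain (h : CyclicChain R l) : l.IsChain R := by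
  rw [isChain_iff_getElem]
  intro i hi
  simpa [Nat.mod_eq_of_lt hi] using h i (by omega)

theorem CyclicChain.rotate (h : CyclicChain R l) (m : ℕ) : CyclicChain R (l.rotate m) := by
  intro i hi
  rw [length_rotate] at hi
  simp only [getElem_rotate, length_rotate]
  convert h ((i + m) % l.length) (Nat.mod_lt _ (by omega)) using 2
  rw [Nat.mod_add_mod, Nat.mod_add_mod, Nat.add_right_comm]

theorem cyclicChain_of_isChain (h : l.IsChain R)
    (hl : ∀ hne : l ≠ [], R (l.getLast hne) (l.head hne)) : CyclicChain R l := by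
  intro i hi
  rcases Nat.lt_or_ge (i + 1) l.length with hlt | hge
  · simpa [Nat.mod_eq_of_lt hlt] using isChain_iff_getElem.mp h i hlt
  · have hne : l ≠ [] := ne_nil_of_length_pos (by omega)
    obtain rfl : i = l.length - 1 := by omega
    simpa [Nat.sub_add_cancel (length_pos_iff.mpr hne), getLast_eq_getElem, head_eq_getElem]
      using hl hne

theorem getLast_rotate_succ {m : ℕ} (hm : m < l.length) (hne : l.rotate (m + 1) ≠ []) :
    (l.rotate (m + 1)).getLast hne = l[m] := by
  simp only [getLast_eq_getElem, getElem_rotate, length_rotate]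
  congr 1
  rw [show l.length - 1 + (m + 1) = m + l.length by omega, Nat.add_mod_right,
    Nat.mod_eq_of_lt hm]

theorem Sublist.exists_getElem?_eq {l₁ l₂ : List α} (hs : l₁ <+ l₂) {m : ℕ} {y : α}
    (hm : l₁[m]? = some y) : ∃ i, m ≤ i ∧ i + l₁.length ≤ m + l₂.length ∧ l₂[i]? = some y := by
  induction hs generalizing m with
  | slnil => simp at hm
  | cons a _ ih =>
    obtain ⟨i, h₁, h₂, h₃⟩ := ih hm
    exact ⟨i + 1, by omega, by simp; omega, by simpa⟩
  | cons_cons a hs ih =>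
    cases m with
    | zero => exact ⟨0, le_rfl, by simp [hs.length_le], hm⟩
    | succ m =>
      obtain ⟨i, h₁, h₂, h₃⟩ := ih (by simpa using hm)
      exact ⟨i + 1, by omega, by simp; omega, by simpa⟩

theorem ofFn_headI_eq_of_tail_eq_dropLast [Inhabited α] {m : ℕ} (f : ℕ → List α)
    (hlen : ∀ i, (f i).length = m) (hstep : ∀ i, (f i).tail = (f (i + 1)).dropLast) (i : ℕ) :
    ofFn (fun j : Fin m => (f (i + j)).headI) = f i := by
  have key : ∀ j < m, ∀ i, (f i)[j]? = some (f (i + j)).headI := by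
    intro j
    induction j with
    | zero =>
      intro hm i
      obtain ⟨a, l, hal⟩ := exists_cons_of_length_pos (hlen i ▸ hm)
      simp [hal]
    | succ j ih =>
      intro hj i
      rw [← getElem?_tail, hstep, getElem?_dropLast, if_pos (by rw [hlen]; omega), ih (by omega),
        Nat.add_right_comm, Nat.add_assoc]
  refine ext_getElem? fun j => ?_
  rcases lt_or_ge j m with hj | hj
  · rw [key j hj i, List.getElem?_ofFn, dif_pos hj]
  · rw [getElem?_eq_none (by simpa using hj), getElem?_eq_none (by rw [hlen]; exact hj)]

theorem card_filter_tail_eq_card_filter_dropLast [DecidableEq α]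
    {F : Finset (List α)} (hF : ∀ e ∈ F, ∀ m, e.rotate m ∈ F) (v : List α) :
    #{e ∈ F | e.tail = v} = #{e ∈ F | e.dropLast = v} := by
  refine Finset.card_nbij' (·.rotate 1) (fun e => e.rotate (e.length - 1)) ?_ ?_ ?_ ?_
  · intro e he
    simp only [Finset.coe_filter] at he ⊢
    refine ⟨hF e he.1 1, ?_⟩
    rcases e with _ | ⟨a, l⟩
    · simpa using he.2
    · simpa [rotate_cons_succ] using he.2
  · intro e he
    simp only [Finset.coe_filter] at he ⊢
    refine ⟨hF e he.1 _, ?_⟩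
    rcases eq_nil_or_concat e with rfl | ⟨l, a, rfl⟩
    · simpa using he.2
    · simpa [rotate_append_length_eq] using he.2
  · intro e _
    simp only [rotate_rotate, length_rotate]
    rcases eq_or_ne e [] with rfl | hne
    · rfl
    · rw [Nat.add_sub_cancel' (length_pos_iff.mpr hne), rotate_length]
  · intro e _
    simp only [rotate_rotate]
    rcases eq_or_ne e [] with rfl | hne
    · rfl
    · rw [Nat.sub_add_cancel (length_pos_iff.mpr hne), rotate_length]

theorem count_map_eq_card_filter {β : Type*} [DecidableEq α] [DecidableEq β] (hl : l.Nodup)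
    (f : α → β) (b : β) : (l.map f).count b = #{a ∈ l.toFinset | f a = b} := by
  rw [count, countP_map, countP_eq_length_filter, ← toFinset_card_of_nodup (hl.filter _),
    toFinset_filter]
  simp

theorem dedup_perm_range {l : List ℕ} {k : ℕ} (hl : l.toFinset = Finset.range k) :
    l.dedup ~ range k :=
  (perm_ext_iff_of_nodup (nodup_dedup l) nodup_range).mpr fun y => by
    rw [mem_dedup, ← mem_toFinset, hl, Finset.mem_range, mem_range]

end List

theorem Relation.ReflTransGen.exists_exit {α : Type*} {R : α → α → Prop} {S : Set α} {a b : α}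
    (h : ReflTransGen R a b) (ha : a ∈ S) (hb : b ∉ S) : ∃ x y, R x y ∧ x ∈ S ∧ y ∉ S := by
  induction h with
  | refl => exact absurd ha hb
  | @tail y z _ hyz ih =>
    by_cases hy : y ∈ S
    · exact ⟨y, z, hyz, hy, hb⟩
    · exact ih hy

namespace Euler

variable {E V : Type*} (s t : E → V)

def Adj (F : Set E) (a b : E) : Prop := a ∈ F ∧ b ∈ F ∧ t a = s b

def IsTrail (F : Finset E) (l : List E) : Prop :=
  l.Nodup ∧ (∀ e ∈ l, e ∈ F) ∧ l.IsChain (fun a b => t a = s b)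

variable {s t} {F : Finset E} {T : List E}

theorem cons_map_eq_of_isChain :
    ∀ {l : List E} (hne : l ≠ []), l.IsChain (fun a b => t a = s b) →
      s (l.head hne) :: l.map t = l.map s ++ [t (l.getLast hne)]
  | [a], _, _ => rfl
  | a :: b :: l, _, h => by
    rw [List.isChain_cons_cons] at h
    simpa [h.1] using cons_map_eq_of_isChain (l := b :: l) (by simp) h.2

theorem IsTrail.length_le [DecidableEq E] (hT : IsTrail s t F T) : T.length ≤ #F := by
  rw [← List.toFinset_card_of_nodup hT.1]
  exact Finset.card_le_card fun e he => hT.2.1 e (List.mem_toFinset.mp he)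

theorem IsTrail.append_singleton (hT : IsTrail s t F T) {g : E} (hg : g ∈ F) (hgT : g ∉ T)
    (hstep : ∀ x ∈ T.getLast?, t x = s g) : IsTrail s t F (T ++ [g]) := by
  refine ⟨List.nodup_append.mpr ⟨hT.1, List.nodup_singleton g, ?_⟩, ?_, ?_⟩
  · rintro a ha b hb rfl
    exact hgT (by simpa [List.mem_singleton.mp hb] using ha)
  · simpa [or_imp, forall_and] using ⟨hT.2.1, hg⟩
  · exact List.isChain_append.mpr ⟨hT.2.2, List.isChain_singleton g, by simpa using hstep⟩

/-- In a balanced graph, a trail that cannot be continued ends where it started: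
otherwise its last vertex would have more incoming than outgoing edges. -/
theorem IsTrail.closed_of_maximal [DecidableEq E] [DecidableEq V]
    (hbal : ∀ v, #{e ∈ F | t e = v} = #{e ∈ F | s e = v})
    (hT : IsTrail s t F T) (hne : T ≠ [])
    (hmax : ∀ g ∈ F, g ∉ T → s g ≠ t (T.getLast hne)) :
    t (T.getLast hne) = s (T.head hne) := by
  by_contra hv
  set v := t (T.getLast hne)
  have hcount := congrArg (List.count v) (cons_map_eq_of_isChain hne hT.2.2)
  rw [List.count_cons, List.count_append, List.count_singleton_self,
    beq_false_of_ne (Ne.symm hv), if_neg Bool.false_ne_true,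
    List.count_map_eq_card_filter hT.1, List.count_map_eq_card_filter hT.1] at hcount
  have hin : #{e ∈ T.toFinset | t e = v} ≤ #{e ∈ F | t e = v} :=
    Finset.card_le_card (Finset.filter_subset_filter _
      fun e he => hT.2.1 e (List.mem_toFinset.mp he))
  have hout : #{e ∈ F | s e = v} ≤ #{e ∈ T.toFinset | s e = v} := by
    refine Finset.card_le_card fun e he => ?_
    rw [Finset.mem_filter] at he ⊢
    refine ⟨List.mem_toFinset.mpr ?_, he.2⟩
    by_contra heT
    exact hmax e he.1 heT he.2
  have := hbal v
  omega

theorem IsTrail.rotate_append_singleton (hT : IsTrail s t F T)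
    (hcyc : T.CyclicChain (fun a b => t a = s b)) {m : ℕ} (hm : m < T.length) {g : E}
    (hg : g ∈ F) (hgT : g ∉ T) (hstep : t T[m] = s g) :
    IsTrail s t F (T.rotate (m + 1) ++ [g]) := by
  have hrot : IsTrail s t F (T.rotate (m + 1)) :=
    ⟨List.nodup_rotate.mpr hT.1, fun x hx => hT.2.1 x ((List.rotate_perm T _).subset hx),
      (hcyc.rotate _).isChain⟩
  have hne : T.rotate (m + 1) ≠ [] := by simpa using List.ne_nil_of_length_pos (by omega)
  refine hrot.append_singleton hg (by simpa using hgT) ?_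
  simpa [List.getLast?_eq_some_getLast hne, List.getLast_rotate_succ hm] using hstep

theorem IsTrail.exists_longer_or_eulerian [DecidableEq E] [DecidableEq V]
    (hbal : ∀ v, #{e ∈ F | t e = v} = #{e ∈ F | s e = v})
    (hconn : ∀ a ∈ F, ∀ b ∈ F, ReflTransGen (Adj s t F) a b)
    (hT : IsTrail s t F T) (hne : T ≠ []) :
    (∃ T', IsTrail s t F T' ∧ T' ≠ [] ∧ T.length < T'.length) ∨
      (T.toFinset = F ∧ T.CyclicChain (fun a b => t a = s b)) := by
  by_cases hext : ∃ g ∈ F, g ∉ T ∧ s g = t (T.getLast hne)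
  · obtain ⟨g, hg, hgT, hsg⟩ := hext
    refine .inl ⟨T ++ [g], hT.append_singleton hg hgT ?_, by simp, by simp⟩
    simp [List.getLast?_eq_some_getLast hne, hsg]
  push Not at hext
  have hcyc : T.CyclicChain (fun a b => t a = s b) :=
    List.cyclicChain_of_isChain hT.2.2 fun _ => hT.closed_of_maximal hbal hne hext
  by_cases hcov : T.toFinset = F
  · exact .inr ⟨hcov, hcyc⟩
  obtain ⟨b, hbF, hbT⟩ : ∃ b ∈ F, b ∉ T := by
    by_contra! h
    exact hcov (Finset.Subset.antisymm (fun e he => hT.2.1 e (List.mem_toFinset.mp he))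
      fun e he => List.mem_toFinset.mpr (h e he))
  have hhead : T.head hne ∈ T := List.head_mem hne
  obtain ⟨e, g, ⟨-, hgF, hstep⟩, heT, hgT⟩ :=
    (hconn _ (hT.2.1 _ hhead) b hbF).exists_exit (S := {x | x ∈ T}) hhead hbT
  obtain ⟨m, hm, rfl⟩ := List.getElem_of_mem heT
  exact .inl ⟨_, hT.rotate_append_singleton hcyc hm hgF hgT hstep, by simp, by simp⟩

theorem exists_eulerianCircuit_of_isTrail [DecidableEq E] [DecidableEq V]
    (hbal : ∀ v, #{e ∈ F | t e = v} = #{e ∈ F | s e = v})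
    (hconn : ∀ a ∈ F, ∀ b ∈ F, ReflTransGen (Adj s t F) a b)
    (T : List E) (hT : IsTrail s t F T) (hne : T ≠ []) :
    ∃ C : List E, C.Nodup ∧ C.toFinset = F ∧ C.CyclicChain (fun a b => t a = s b) := by
  rcases hT.exists_longer_or_eulerian hbal hconn hne with ⟨T', hT', hne', hlt⟩ | ⟨hcov, hcyc⟩
  · exact exists_eulerianCircuit_of_isTrail hbal hconn T' hT' hne'
  · exact ⟨T, hT.1, hcov, hcyc⟩
termination_by #F - T.length
decreasing_by have := hT'.length_le; omega

theorem exists_eulerianCircuit [DecidableEq E] [DecidableEq V]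
    (hbal : ∀ v, #{e ∈ F | t e = v} = #{e ∈ F | s e = v})
    (hconn : ∀ a ∈ F, ∀ b ∈ F, ReflTransGen (Adj s t F) a b) (hF : F.Nonempty) :
    ∃ C : List E, C.Nodup ∧ C.toFinset = F ∧ C.CyclicChain (fun a b => t a = s b) := by
  obtain ⟨e, he⟩ := hF
  exact exists_eulerianCircuit_of_isTrail hbal hconn [e]
    ⟨List.nodup_singleton e, by simpa using he, List.isChain_singleton e⟩ (by simp)

end Euler

open List

theorem exists_isUCycle_of_cyclicChain {m : ℕ} {C : List (List ℕ)} (hnd : C.Nodup)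
    (hlen : ∀ w ∈ C, w.length = m) (hcyc : C.CyclicChain (fun a b => a.tail = b.dropLast)) :
    ∃ a, IsUCycle m C.length {w | w ∈ C} a := by
  rcases eq_or_ne C [] with rfl | hne
  · exact ⟨fun _ => 0, by simp [IsUCycle]⟩
  have hN : 0 < C.length := length_pos_iff.mpr hne
  set f : ℕ → List ℕ := fun i => C[i % C.length]'(Nat.mod_lt _ hN)
  have hwin : ∀ i, ofFn (fun j : Fin m => (f ((i + j) % C.length)).headI) = f i := by
    intro i
    simpa [f, Nat.mod_mod] using ofFn_headI_eq_of_tail_eq_dropLast f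
      (fun i => hlen _ (getElem_mem _))
      (fun i => by simpa [f, Nat.mod_add_mod] using hcyc (i % C.length) (Nat.mod_lt _ hN)) i
  refine ⟨fun i => (f i).headI, fun i _ => ?_, fun c hc => ?_⟩
  · rw [hwin]
    exact getElem_mem _
  · obtain ⟨i, hi, rfl⟩ := getElem_of_mem hc
    refine ⟨i, ⟨hi, by rw [hwin]; simp [f, Nat.mod_eq_of_lt hi]⟩, fun i' ⟨hi', heq⟩ => ?_⟩
    rw [hwin] at heq
    simpa [f, Nat.mod_eq_of_lt hi', hnd.getElem_inj_iff] using heq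

namespace HeightWeakOrders

variable {n h : ℕ}

local notation "Adj" => Euler.Adj dropLast tail (heightWeakOrders n h)

theorem mem_iff_lt {w : List ℕ} (hw : w ∈ heightWeakOrders n h) {y : ℕ} :
    y ∈ w ↔ y < h + 1 := by
  rw [← mem_toFinset, hw.2, Finset.mem_range]

def Compatible (B B' : List ℕ) : Prop :=
  ∀ y ∈ B', ∃ i' i : ℕ, i' ≤ i ∧ B[i]? = some y ∧ B'[i']? = some y

theorem Compatible.mem_drop_append_take {B B' : List ℕ} (hc : Compatible B B') {y : ℕ}
    (hy : y ∈ B') (j : ℕ) : y ∈ B.drop j ++ B'.take j := by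
  obtain ⟨i', i, hle, hi, hi'⟩ := hc y hy
  rcases le_or_gt j i with hji | hij
  · refine mem_append_left _ (mem_of_getElem? (i := i - j) ?_)
    rwa [getElem?_drop, Nat.add_sub_cancel' hji]
  · exact mem_append_right _ (mem_of_getElem? (i := i') (by rwa [getElem?_take_of_lt (by omega)]))

theorem drop_append_take_mem {B B' : List ℕ} (hB : B ∈ heightWeakOrders n h)
    (hB' : B' ∈ heightWeakOrders n h) (hc : Compatible B B') {j : ℕ} (hj : j ≤ n) :
    B.drop j ++ B'.take j ∈ heightWeakOrders n h := by
  refine ⟨by simp [hB.1, hB'.1]; omega, Finset.ext fun y => ?_⟩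
  rw [mem_toFinset, Finset.mem_range, ← mem_iff_lt hB']
  refine ⟨fun hy => ?_, fun hy => hc.mem_drop_append_take hy j⟩
  rcases mem_append.mp hy with hy | hy
  · exact (mem_iff_lt hB').mpr ((mem_iff_lt hB).mp ((drop_sublist _ _).subset hy))
  · exact (take_sublist _ _).subset hy

theorem reflTransGen_of_compatible {B B' : List ℕ} (hB : B ∈ heightWeakOrders n h)
    (hB' : B' ∈ heightWeakOrders n h) (hc : Compatible B B') : ReflTransGen Adj B B' := by
  have key : ∀ j ≤ n, ReflTransGen Adj B (B.drop j ++ B'.take j) := by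
    intro j hj
    induction j with
    | zero => simpa using ReflTransGen.refl
    | succ j ih =>
      refine (ih (by omega)).tail ⟨drop_append_take_mem hB hB' hc (by omega),
        drop_append_take_mem hB hB' hc hj, ?_⟩
      rw [tail_append_of_ne_nil (by simp [hB.1]; omega), tail_drop,
        take_succ_eq_append_getElem (by rw [hB'.1]; omega), ← append_assoc, dropLast_concat]
  simpa [drop_eq_nil_of_le hB.1.le, take_of_length_le hB'.1.le] using key n le_rfl

def front (p q : List ℕ) (j : ℕ) : List ℕ :=
  p.filter (· ∈ q.take j)

/-- With `p = u.dedup` (`dedup` keeps last occurrences) and `q = w.reverse.dedup.reverse`, the words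
`block n p q j i` for `(j, i) = (h+1, h+1), (h+1, h), (h, h), …, (0, 0)` lead from `u` to `w`. -/
def block (n : ℕ) (p q : List ℕ) (j i : ℕ) : List ℕ :=
  front p q j ++ replicate (n - ((front p q j).length + (q.length - i))) 0 ++ q.drop i

section Block

variable {p q : List ℕ}

theorem front_sublist (j : ℕ) : front p q j <+ p :=
  filter_sublist

theorem front_sublist_front {j' j : ℕ} (hj : j' ≤ j) : front p q j' <+ front p q j :=
  monotone_filter_right p fun x hx => by
    simpa using (take_subset_take_left q hj) (by simpa using hx)

theorem getElem?_block_of_front {j i m y : ℕ} (hm : (front p q j)[m]? = some y) :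
    (block n p q j i)[m]? = some y := by
  have hlt : m < (front p q j).length := (List.getElem?_eq_some_iff.mp hm).1
  rw [block, append_assoc, getElem?_append_left hlt, hm]

theorem getElem?_block_of_back {j i r y : ℕ} (hlen : (front p q j).length + (q.length - i) ≤ n)
    (hir : i ≤ r) (hr : q[r]? = some y) : (block n p q j i)[n - (q.length - r)]? = some y := by
  have hrq : r < q.length := (List.getElem?_eq_some_iff.mp hr).1
  rw [block, getElem?_append_right (by simp; omega), length_append, length_replicate,
    getElem?_drop]
  convert hr using 2
  omega

theorem front_length_add_le (hp : p ~ range (h + 1)) (hq : q ~ range (h + 1)) (hn : h + 2 ≤ n)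
    {j i : ℕ} (hji : j ≤ i + 1) : (front p q j).length + (q.length - i) ≤ n := by
  have h₁ : (front p q j).length ≤ j := by
    refine le_trans (((hp.nodup_iff.mpr nodup_range).filter _).subperm fun x hx => ?_).length_le
      (length_take_le j q)
    simpa using (mem_filter.mp hx).2
  have h₂ : (front p q j).length ≤ h + 1 := by
    simpa [hp.length_eq] using (front_sublist (p := p) (q := q) j).length_le
  rw [hq.length_eq, length_range]
  omega

theorem block_mem (hp : p ~ range (h + 1)) (hq : q ~ range (h + 1)) (hn : h + 2 ≤ n)
    {j i : ℕ} (hij : i ≤ j) (hji : j ≤ i + 1) : block n p q j i ∈ heightWeakOrders n h := by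
  have hlen := front_length_add_le hp hq hn hji
  refine ⟨by simp [block]; omega, Finset.ext fun y => ?_⟩
  simp only [block, mem_toFinset, mem_append, mem_replicate, Finset.mem_range]
  constructor
  · rintro ((hy | ⟨-, rfl⟩) | hy)
    · exact mem_range.mp (hp.mem_iff.mp ((front_sublist j).subset hy))
    · omega
    · exact mem_range.mp (hq.mem_iff.mp ((drop_sublist _ _).subset hy))
  · intro hy
    have hyq : y ∈ q := hq.mem_iff.mpr (mem_range.mpr hy)
    by_cases hyj : y ∈ q.take j
    · exact .inl (.inl (mem_filter.mpr ⟨hp.mem_iff.mpr (mem_range.mpr hy), by simpa using hyj⟩))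
    · rw [← take_append_drop j q, mem_append] at hyq
      exact .inr ((drop_sublist_drop_left q hij).subset (hyq.resolve_left hyj))

theorem compatible_block (hp : p ~ range (h + 1)) (hq : q ~ range (h + 1)) (hn : h + 2 ≤ n)
    {i' i j' j : ℕ} (hi : i' ≤ i) (hij' : i ≤ j') (hj' : j' ≤ j) (hj : j ≤ i' + 1) :
    Compatible (block n p q j i) (block n p q j' i') := by
  intro y hy
  have hyq : y ∈ q := hq.mem_iff.mpr <| mem_range.mpr <|
    (mem_iff_lt (block_mem hp hq hn (by omega) (by omega))).mp hy
  have hr := getElem?_idxOf hyq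
  by_cases hir : i ≤ q.idxOf y
  · exact ⟨_, _, le_rfl, getElem?_block_of_back (front_length_add_le hp hq hn (by omega)) hir hr,
      getElem?_block_of_back (front_length_add_le hp hq hn (by omega)) (by omega) hr⟩
  · have hyf : y ∈ front p q j' := mem_filter.mpr ⟨hp.mem_iff.mpr (hq.mem_iff.mp hyq),
      by simpa using (mem_take_iff_idxOf_lt hyq).mpr (by omega)⟩
    obtain ⟨m, hm, -, hfm⟩ := (front_sublist_front hj').exists_getElem?_eq (getElem?_idxOf hyf)
    exact ⟨_, m, hm, getElem?_block_of_front hfm, getElem?_block_of_front (getElem?_idxOf hyf)⟩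

end Block

theorem compatible_block_start {u q : List ℕ} (hu : u ∈ heightWeakOrders n h)
    (hq : q ~ range (h + 1)) (hn : h + 2 ≤ n) :
    Compatible u (block n u.dedup q (h + 1) (h + 1)) := by
  intro y hy
  have hp := dedup_perm_range hu.2
  have hy' : y < h + 1 :=
    (mem_iff_lt (block_mem hp hq hn le_rfl (by omega))).mp hy
  have hqlen : q.length = h + 1 := by simp [hq.length_eq]
  have hyf : y ∈ front u.dedup q (h + 1) := mem_filter.mpr ⟨hp.mem_iff.mpr (mem_range.mpr hy'),
    by simpa [take_of_length_le hqlen.le] using hq.mem_iff.mpr (mem_range.mpr hy')⟩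
  obtain ⟨i, hi, -, hui⟩ :=
    ((front_sublist _).trans (dedup_sublist u)).exists_getElem?_eq (getElem?_idxOf hyf)
  exact ⟨_, i, hi, hui, getElem?_block_of_front (getElem?_idxOf hyf)⟩

theorem compatible_block_end {p w : List ℕ} (hw : w ∈ heightWeakOrders n h)
    (hp : p ~ range (h + 1)) (hn : h + 2 ≤ n) :
    Compatible (block n p w.reverse.dedup.reverse 0 0) w := by
  intro y hy
  set q := w.reverse.dedup.reverse
  have hyq : y ∈ q := by simpa [q] using hy
  have hq : q ~ range (h + 1) :=
    (reverse_perm _).trans (dedup_perm_range (by rw [toFinset_reverse, hw.2]))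
  have hr := getElem?_idxOf hyq
  have hqw : q <+ w := by simpa [q] using (dedup_sublist w.reverse).reverse
  obtain ⟨i', -, hi', hwi'⟩ := hqw.exists_getElem?_eq hr
  refine ⟨i', _, ?_,
    getElem?_block_of_back (front_length_add_le hp hq hn (by omega)) (Nat.zero_le _) hr, hwi'⟩
  have hrq : q.idxOf y < q.length := idxOf_lt_length_of_mem hyq
  rw [hw.1] at hi'
  omega

theorem reflTransGen_block_block {p q : List ℕ} (hp : p ~ range (h + 1)) (hq : q ~ range (h + 1))
    (hn : h + 2 ≤ n) {i' i j' j : ℕ} (hi : i' ≤ i) (hij' : i ≤ j') (hj' : j' ≤ j)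
    (hj : j ≤ i' + 1) : ReflTransGen Adj (block n p q j i) (block n p q j' i') :=
  reflTransGen_of_compatible (block_mem hp hq hn (by omega) (by omega))
    (block_mem hp hq hn (by omega) (by omega)) (compatible_block hp hq hn hi hij' hj' hj)

theorem reflTransGen_adj (hn : h + 2 ≤ n) {u w : List ℕ} (hu : u ∈ heightWeakOrders n h)
    (hw : w ∈ heightWeakOrders n h) : ReflTransGen Adj u w := by
  set p := u.dedup
  set q := w.reverse.dedup.reverse
  have hp : p ~ range (h + 1) := dedup_perm_range hu.2
  have hq : q ~ range (h + 1) :=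
    (reverse_perm _).trans (dedup_perm_range (by rw [toFinset_reverse, hw.2]))
  have hmid : ∀ j ≤ h + 1, ReflTransGen Adj (block n p q j j) (block n p q 0 0) := by
    intro j hj
    induction j with
    | zero => rfl
    | succ j ih =>
      exact (reflTransGen_block_block hp hq hn j.le_succ le_rfl le_rfl le_rfl).trans
        ((reflTransGen_block_block hp hq hn le_rfl le_rfl j.le_succ le_rfl).trans (ih (by omega)))
  have hstart : ReflTransGen Adj u (block n p q (h + 1) (h + 1)) :=
    reflTransGen_of_compatible hu (block_mem hp hq hn le_rfl (by omega))
      (compatible_block_start hu hq hn)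
  have hend : ReflTransGen Adj (block n p q 0 0) w :=
    reflTransGen_of_compatible (block_mem hp hq hn le_rfl (by omega)) hw
      (compatible_block_end hw hp hn)
  exact hstart.trans ((hmid _ le_rfl).trans hend)

theorem rotate_mem {w : List ℕ} (hw : w ∈ heightWeakOrders n h) (m : ℕ) :
    w.rotate m ∈ heightWeakOrders n h :=
  ⟨by rw [length_rotate, hw.1], by rw [toFinset_eq_of_perm _ _ (rotate_perm w m), hw.2]⟩

theorem finite (n h : ℕ) : (heightWeakOrders n h).Finite := by
  refine (Set.finite_range fun f : Fin n → Fin (h + 1) => ofFn fun i => (f i : ℕ)).subset ?_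
  intro w hw
  have hlen : ∀ i : Fin n, i.val < w.length := fun i => hw.1 ▸ i.isLt
  refine ⟨fun i => ⟨w[i.val]'(hlen i), (mem_iff_lt hw).mp (getElem_mem _)⟩, ?_⟩
  exact ext_getElem (by simp [hw.1]) (by simp)

theorem range_append_replicate_mem (hn : h + 1 ≤ n) :
    range (h + 1) ++ replicate (n - (h + 1)) 0 ∈ heightWeakOrders n h := by
  refine ⟨by simp; omega, Finset.ext fun y => ?_⟩
  simp only [mem_toFinset, mem_append, mem_range, mem_replicate, Finset.mem_range]
  omega

end HeightWeakOrders

open HeightWeakOrders in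
theorem exists_ucycle_heightWeakOrders_general (n h : ℕ) (hh : h < n - 1) :
    ∃ a : ℕ → ℕ,
      IsUCycle n (Nat.card (heightWeakOrders n h)) (heightWeakOrders n h) a := by
  have hn : h + 2 ≤ n := by omega
  set F := (finite n h).toFinset
  have hF : (F : Set (List ℕ)) = heightWeakOrders n h := Set.Finite.coe_toFinset _
  obtain ⟨C, hnd, hCF, hcyc⟩ := Euler.exists_eulerianCircuit (s := dropLast) (t := tail) (F := F)
    (card_filter_tail_eq_card_filter_dropLast
      fun e he m => by simpa [F] using rotate_mem (by simpa [F] using he) m)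
    (fun a ha b hb => hF ▸ reflTransGen_adj hn (by simpa [F] using ha) (by simpa [F] using hb))
    ⟨_, by simpa [F] using range_append_replicate_mem (by omega)⟩
  have hC : {w | w ∈ C} = heightWeakOrders n h := by
    rw [← hF]
    ext w
    simp [← hCF]
  have hcard : Nat.card (heightWeakOrders n h) = C.length := by
    rw [← hF, Nat.card_coe_set_eq, Set.ncard_coe_finset, ← hCF, toFinset_card_of_nodup hnd]
  rw [hcard, ← hC]
  exact exists_isUCycle_of_cyclicChain hnd (fun w hw => (hC ▸ hw : w ∈ heightWeakOrders n h).1) hcyc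

/-- For every positive integer `n` and every natural number `h` with `h < n - 1`,
there exists a universal cycle for `W(n,h)`. -/
theorem exists_ucycle_heightWeakOrders (n h : ℕ) (hn : 0 < n) (hh : h < n - 1) :
    ∃ a : ℕ → ℕ,
      IsUCycle n (Nat.card (heightWeakOrders n h)) (heightWeakOrders n h) a :=
  exists_ucycle_heightWeakOrders_general n h hh
end

section
/- Let n ≥ 2 and let M be a multiset of n natural numbers, and let A(M) be the set of all permutations of M. Then there exists a universal cycle for A(M)⁻ = {w₁…w_{n−1} : w ∈ A(M)}, the set of prefixes of elements of A(M) (a set of strings of length n−1 whose cardinality equals |A(M)|). -/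
/-- `A(M)`: the set of all permutations of the multiset `M`, i.e. the words whose
multiset of letters is `M`. -/
def multisetPerms (M : Multiset ℕ) : Set (List ℕ) :=
  {w | (w : Multiset ℕ) = M}

/-!
The prefixes of the permutations of `M` are the edges of a directed multigraph on the words of
length `|M| - 2`, the edge `e` going from `e.dropLast` to `e.tail`. Rotating a word by one letter
is a bijection between the edges entering and the edges leaving a vertex, so the graph is
balanced. It is strongly connected: the rotations of a permutation `p` are joined by the walk that
reads `p` cyclically, and swapping the last two letters of `p` does not move its vertex
`p.dropLast.dropLast`; up to rotation every adjacent transposition is such a swap. Hence the graph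
has an Eulerian circuit (a longest trail is closed by balance and covers every edge by
connectivity). Consecutive edges of the circuit overlap in `|M| - 2` letters, so the first letters
of its edges form the universal cycle.
-/

open Finset

namespace List

variable {α : Type*}

def IsCyclicChain (r : α → α → Prop) (l : List α) : Prop :=
  l.IsChain r ∧ ∀ x ∈ l.getLast?, ∀ y ∈ l.head?, r x y

theorem IsCyclicChain.append_comm {r : α → α → Prop} {l₁ l₂ : List α}
    (h : IsCyclicChain r (l₁ ++ l₂)) : IsCyclicChain r (l₂ ++ l₁) := by
  cases l₁ with
  | nil => simpa using h
  | cons a l₁ =>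
    cases l₂ with
    | nil => simpa using h
    | cons b l₂ =>
      obtain ⟨hc, hcl⟩ := h
      rw [isChain_append] at hc
      rw [getLast?_append_cons] at hcl
      refine ⟨isChain_append.2 ⟨hc.2.1, hc.1, by simpa using hcl⟩, ?_⟩
      rw [getLast?_append_cons]
      simpa using hc.2.2

theorem IsCyclicChain.rel_getElem_succ_mod {r : α → α → Prop} {l : List α}
    (h : IsCyclicChain r l) {i : ℕ} (hi : i < l.length) :
    r l[i] (l[(i + 1) % l.length]'(Nat.mod_lt _ (by omega))) := by
  rcases (show i + 1 ≤ l.length from hi).lt_or_eq with hlt | heq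
  · simp only [Nat.mod_eq_of_lt hlt]
    exact isChain_iff_getElem.1 h.1 i hlt
  · simp only [heq, Nat.mod_self]
    exact h.2 _ (by simp [getLast?_eq_getElem?, ← heq]) _ (by simp [head?_eq_getElem?])

theorem IsCyclicChain.exists_rel_of_mem {r : α → α → Prop} {l : List α}
    (h : IsCyclicChain r l) {x : α} (hx : x ∈ l) : ∃ y ∈ l, r x y := by
  obtain ⟨i, hi, rfl⟩ := getElem_of_mem hx
  exact ⟨_, getElem_mem _, h.rel_getElem_succ_mod hi⟩

theorem eq_ofFn_headI_of_tail_eq_dropLast [Inhabited α] {m : ℕ} {w : ℕ → List α}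
    (hlen : ∀ i, (w i).length = m) (hw : ∀ i, (w i).tail = (w (i + 1)).dropLast) (i : ℕ) :
    w i = ofFn fun j : Fin m => (w (i + j)).headI := by
  suffices key : ∀ j i (hj : j < m), (w i)[j]'(hlen i ▸ hj) = (w (i + j)).headI from
    ext_getElem (by simp [hlen]) fun j h₁ h₂ => by simp [key j i (hlen i ▸ h₁)]
  intro j
  induction j with
  | zero =>
    intro i hj
    obtain ⟨x, xs, hx⟩ := exists_cons_of_length_pos (hlen i ▸ hj)
    simp [hx]
  | succ j ih =>
    intro i hj
    rw [← getElem_tail (by simp [hlen]; omega)]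
    simp only [hw i, getElem_dropLast]
    rw [ih (i + 1) (by omega), Nat.add_right_comm, Nat.add_assoc]

theorem dropLast_rotate_one (l : List α) : (l.rotate 1).dropLast = l.tail := by
  cases l <;> simp

theorem tail_rotate_length_sub_one (l : List α) : (l.rotate (l.length - 1)).tail = l.dropLast := by
  rcases l.eq_nil_or_concat with rfl | ⟨l, b, rfl⟩ <;> simp

theorem rotate_one_rotate_length_sub_one (l : List α) :
    (l.rotate 1).rotate (l.length - 1) = l := by
  cases l with
  | nil => simp
  | cons a l =>
    rw [rotate_rotate, length_cons, Nat.add_sub_cancel, Nat.add_comm, ← length_cons,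
      rotate_length]

theorem rotate_length_sub_one_rotate_one (l : List α) :
    (l.rotate (l.length - 1)).rotate 1 = l := by
  cases l with
  | nil => simp
  | cons a l =>
    rw [rotate_rotate, length_cons, Nat.add_sub_cancel, ← length_cons, rotate_length]

theorem Nodup.card_filter_toFinset_eq_count_map {β : Type*} [DecidableEq α] [DecidableEq β]
    {l : List α} (hnd : l.Nodup) (f : α → β) (u : β) :
    #{e ∈ l.toFinset | f e = u} = (l.map f).count u := by
  have : {e ∈ l.toFinset | f e = u} = (l.filter (f · = u)).toFinset := by ext; simp
  rw [this, List.toFinset_card_of_nodup (hnd.filter _), List.count, List.countP_map,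
    List.countP_eq_length_filter]
  rfl

end List

namespace Eulerian

variable {E V : Type*}

def Adj (s t : E → V) (R : Finset E) (u v : V) : Prop :=
  ∃ e ∈ R, s e = u ∧ t e = v

structure IsTrail_s6 (s t : E → V) (R : Finset E) (es : List E) : Prop where
  nodup : es.Nodup
  mem : ∀ e ∈ es, e ∈ R
  chain : es.IsChain fun e f => t e = s f

variable {s t : E → V} {R : Finset E} {es : List E}

theorem IsTrail_s6.append_singleton (h : IsTrail_s6 s t R es) {e : E} (he : e ∈ R) (hes : e ∉ es)
    (hlast : ∀ x ∈ es.getLast?, t x = s e) : IsTrail_s6 s t R (es ++ [e]) where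
  nodup := by simpa using h.nodup.concat hes
  mem x hx := (List.mem_append.1 hx).elim (h.mem x) fun hx => List.mem_singleton.1 hx ▸ he
  chain := List.isChain_append.2 ⟨h.chain, List.isChain_singleton e, by simpa using hlast⟩

theorem IsTrail_s6.append_comm {l₁ l₂ : List E} (h : IsTrail_s6 s t R (l₁ ++ l₂))
    (hcyc : (l₁ ++ l₂).IsCyclicChain fun e f => t e = s f) : IsTrail_s6 s t R (l₂ ++ l₁) where
  nodup := List.nodup_append_comm.1 h.nodup
  mem x hx := h.mem x (List.perm_append_comm.mem_iff.1 hx)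
  chain := hcyc.append_comm.1

theorem cons_map_eq_map_concat (hc : es.IsChain fun e f => t e = s f) {x y : E}
    (hx : x ∈ es.getLast?) (hy : y ∈ es.head?) : s y :: es.map t = es.map s ++ [t x] := by
  induction es generalizing y with
  | nil => simp at hx
  | cons a l ih =>
    obtain rfl : a = y := by simpa using hy
    cases l with
    | nil => simp_all
    | cons b l =>
      rw [List.isChain_cons_cons] at hc
      rw [List.getLast?_cons_cons] at hx
      simpa [hc.1] using ih hc.2 hx (y := b) (by simp)

theorem exists_not_mem_source_eq_of_isCyclicChain
    (hconn : ∀ e ∈ R, ∀ f ∈ R, Relation.ReflTransGen (Adj s t R) (s e) (s f))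
    (hcyc : es.IsCyclicChain fun e f => t e = s f) (hmem : ∀ e ∈ es, e ∈ R) {c f : E}
    (hc : c ∈ es) (hf : f ∈ R) (hfes : f ∉ es) :
    ∃ g ∈ R, g ∉ es ∧ ∃ c ∈ es, s c = s g := by
  suffices key : ∀ v, Relation.ReflTransGen (Adj s t R) (s c) v →
      (∃ g ∈ R, g ∉ es ∧ ∃ c ∈ es, s c = s g) ∨ ∃ c ∈ es, s c = v by
    exact (key _ (hconn c (hmem c hc) f hf)).elim id fun hsf => ⟨f, hf, hfes, hsf⟩
  intro v hv
  induction hv with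
  | refl => exact .inr ⟨c, hc, rfl⟩
  | tail _ hvw ih =>
    obtain ⟨g, hg, rfl, rfl⟩ := hvw
    refine ih.elim .inl fun ⟨c', hc', hsc'⟩ => ?_
    by_cases hges : g ∈ es
    · obtain ⟨c'', hc'', htg⟩ := hcyc.exists_rel_of_mem hges
      exact .inr ⟨c'', hc'', htg.symm⟩
    · exact .inl ⟨g, hg, hges, c', hc', hsc'⟩

theorem IsTrail_s6.exists_longer_of_closed
    (hconn : ∀ e ∈ R, ∀ f ∈ R, Relation.ReflTransGen (Adj s t R) (s e) (s f))
    (h : IsTrail_s6 s t R es) (hcl : ∀ x ∈ es.getLast?, ∀ y ∈ es.head?, t x = s y) {f : E}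
    (hf : f ∈ R) (hfes : f ∉ es) :
    ∃ es', IsTrail_s6 s t R es' ∧ es.length < es'.length := by
  rcases eq_or_ne es [] with rfl | hne
  · exact ⟨[f], ⟨List.nodup_singleton f, by simpa, List.isChain_singleton f⟩, by simp⟩
  have hcyc : es.IsCyclicChain fun e f => t e = s f := ⟨h.chain, hcl⟩
  obtain ⟨g, hg, hges, c, hc, hsc⟩ :=
    exists_not_mem_source_eq_of_isCyclicChain hconn hcyc h.mem (List.head_mem hne) hf hfes
  obtain ⟨l₁, l₂, rfl⟩ := List.append_of_mem hc
  have hrot : (c :: l₂ ++ l₁).IsCyclicChain fun e f => t e = s f := hcyc.append_comm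
  refine ⟨c :: l₂ ++ l₁ ++ [g], (h.append_comm hcyc).append_singleton hg ?_ ?_,
    by simp; omega⟩
  · exact fun hg' => hges (List.perm_append_comm.mem_iff.1 hg')
  · intro x hx
    rw [hrot.2 x hx c (by simp), hsc]

variable [DecidableEq E]

theorem IsTrail_s6.length_le (h : IsTrail_s6 s t R es) : es.length ≤ #R := by
  rw [← List.toFinset_card_of_nodup h.nodup]
  exact card_le_card fun e he => h.mem e (List.mem_toFinset.1 he)

theorem exists_longest_trail_s6 (s t : E → V) (R : Finset E) :
    ∃ es, IsTrail_s6 s t R es ∧ ∀ es', IsTrail_s6 s t R es' → es'.length ≤ es.length := by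
  classical
  let P k := ∃ es, IsTrail_s6 s t R es ∧ es.length = k
  obtain ⟨es, hes, hlen⟩ : P (Nat.findGreatest P #R) :=
    Nat.findGreatest_spec (Nat.zero_le _)
      ⟨[], ⟨List.nodup_nil, by simp, List.IsChain.nil⟩, rfl⟩
  exact ⟨es, hes, fun es' h' => hlen ▸ Nat.le_findGreatest h'.length_le ⟨es', h', rfl⟩⟩

theorem IsTrail_s6.exists_not_mem_source_eq_of_not_closed [DecidableEq V]
    (hbal : ∀ v, #{e ∈ R | s e = v} = #{e ∈ R | t e = v}) (h : IsTrail_s6 s t R es) {x y : E}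
    (hx : x ∈ es.getLast?) (hy : y ∈ es.head?) (hxy : t x ≠ s y) :
    ∃ e ∈ R, e ∉ es ∧ s e = t x := by
  -- every visit of `t x` but the last is followed by a departure, so `t x` is entered once more
  -- often than it is left; by balance some edge leaving `t x` is still unused
  by_contra! hR
  have hcount := congrArg (List.count (t x)) (cons_map_eq_map_concat h.chain hx hy)
  rw [List.count_cons_of_ne hxy.symm, List.count_append, List.count_singleton_self,
    ← h.nodup.card_filter_toFinset_eq_count_map, ← h.nodup.card_filter_toFinset_eq_count_map]
    at hcount
  have hsrc : #{e ∈ R | s e = t x} ≤ #{e ∈ es.toFinset | s e = t x} :=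
    card_le_card fun e he => by
      simp only [mem_filter, List.mem_toFinset] at he ⊢
      exact ⟨by_contra fun hes => hR e he.1 hes he.2, he.2⟩
  have htgt : #{e ∈ es.toFinset | t e = t x} ≤ #{e ∈ R | t e = t x} :=
    card_le_card (filter_subset_filter _ fun e he => h.mem e (List.mem_toFinset.1 he))
  have := hbal (t x)
  omega

theorem IsTrail_s6.exists_longer_of_not_closed [DecidableEq V]
    (hbal : ∀ v, #{e ∈ R | s e = v} = #{e ∈ R | t e = v}) (h : IsTrail_s6 s t R es) {x y : E}
    (hx : x ∈ es.getLast?) (hy : y ∈ es.head?) (hxy : t x ≠ s y) :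
    ∃ es', IsTrail_s6 s t R es' ∧ es.length < es'.length := by
  obtain ⟨e, he, hes, hse⟩ := h.exists_not_mem_source_eq_of_not_closed hbal hx hy hxy
  refine ⟨es ++ [e], h.append_singleton he hes fun x' hx' => ?_, by simp⟩
  rw [Option.mem_unique hx' hx, hse]

theorem exists_eulerian_circuit [DecidableEq V]
    (hbal : ∀ v, #{e ∈ R | s e = v} = #{e ∈ R | t e = v})
    (hconn : ∀ e ∈ R, ∀ f ∈ R, Relation.ReflTransGen (Adj s t R) (s e) (s f)) :
    ∃ es : List E, es.Nodup ∧ es.toFinset = R ∧ es.IsCyclicChain fun e f => t e = s f := by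
  obtain ⟨es, hes, hmax⟩ := exists_longest_trail_s6 s t R
  have hcl : ∀ x ∈ es.getLast?, ∀ y ∈ es.head?, t x = s y := by
    by_contra! ⟨x, hx, y, hy, hxy⟩
    obtain ⟨es', h', hlt⟩ := hes.exists_longer_of_not_closed hbal hx hy hxy
    exact (hmax es' h').not_gt hlt
  refine ⟨es, hes.nodup, Subset.antisymm (fun e he => hes.mem e (List.mem_toFinset.1 he))
    fun f hf => ?_, hes.chain, hcl⟩
  by_contra hfes
  obtain ⟨es', h', hlt⟩ :=
    hes.exists_longer_of_closed hconn hcl hf (mt List.mem_toFinset.2 hfes)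
  exact (hmax es' h').not_gt hlt

end Eulerian

section Prefixes

open List

variable {α : Type*} [DecidableEq α] {M : Multiset α}

noncomputable def prefixFinset (M : Multiset α) : Finset (List α) :=
  M.toList.permutations.toFinset.image dropLast

theorem mem_prefixFinset {e : List α} :
    e ∈ prefixFinset M ↔ ∃ p : List α, (p : Multiset α) = M ∧ p.dropLast = e := by
  simp [prefixFinset, mem_permutations, ← Multiset.coe_eq_coe]

theorem mem_prefixFinset_of_perm {e e' : List α} (he : e ∈ prefixFinset M) (h : e' ~ e) :
    e' ∈ prefixFinset M := by
  obtain ⟨p, hp, rfl⟩ := mem_prefixFinset.1 he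
  rcases p.eq_nil_or_concat with rfl | ⟨l, b, rfl⟩
  · exact mem_prefixFinset.2 ⟨[], hp, by simpa using h⟩
  · refine mem_prefixFinset.2 ⟨e' ++ [b], ?_, dropLast_concat⟩
    rw [← hp, Multiset.coe_eq_coe]
    simpa using h.append_right [b]

theorem length_of_mem_prefixFinset {e : List α} (he : e ∈ prefixFinset M) :
    e.length = Multiset.card M - 1 := by
  obtain ⟨p, rfl, rfl⟩ := mem_prefixFinset.1 he
  simp

theorem card_filter_dropLast_eq_card_filter_tail (M : Multiset α) (u : List α) :
    #{e ∈ prefixFinset M | e.dropLast = u} = #{e ∈ prefixFinset M | e.tail = u} := by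
  refine card_nbij' (fun e => e.rotate (e.length - 1)) (·.rotate 1) ?_ ?_ ?_ ?_
  · intro e he
    simp only [coe_filter, Set.mem_ofPred_eq] at he ⊢
    exact ⟨mem_prefixFinset_of_perm he.1 (rotate_perm _ _),
      by rw [tail_rotate_length_sub_one, he.2]⟩
  · intro e he
    simp only [coe_filter, Set.mem_ofPred_eq] at he ⊢
    exact ⟨mem_prefixFinset_of_perm he.1 (rotate_perm _ _), by rw [dropLast_rotate_one, he.2]⟩
  · intro e _
    simp only [rotate_length_sub_one_rotate_one]
  · intro e _
    simp only [length_rotate, rotate_one_rotate_length_sub_one]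

abbrev PrefixAdj (M : Multiset α) : List α → List α → Prop :=
  Eulerian.Adj dropLast tail (prefixFinset M)

theorem prefixAdj_rotate_one {p : List α} (hp : (p : Multiset α) = M) :
    PrefixAdj M p.dropLast.dropLast (p.rotate 1).dropLast.dropLast :=
  ⟨p.dropLast, mem_prefixFinset.2 ⟨p, hp, rfl⟩, rfl,
    by rw [dropLast_rotate_one, tail_dropLast]⟩

theorem reflTransGen_prefixAdj_of_isRotated {p q : List α} (hp : (p : Multiset α) = M)
    (h : p ~r q) :
    Relation.ReflTransGen (PrefixAdj M) p.dropLast.dropLast q.dropLast.dropLast := by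
  obtain ⟨k, rfl⟩ := h
  induction k with
  | zero => rw [rotate_zero]
  | succ k ih =>
    rw [← rotate_rotate]
    refine ih.tail (prefixAdj_rotate_one ?_)
    rw [← hp, Multiset.coe_eq_coe]
    exact rotate_perm p k

theorem reflTransGen_prefixAdj_swap {l₁ l₂ : List α} {a b : α}
    (hp : ((l₁ ++ a :: b :: l₂ : List α) : Multiset α) = M) :
    Relation.ReflTransGen (PrefixAdj M) (l₁ ++ a :: b :: l₂).dropLast.dropLast
      (l₁ ++ b :: a :: l₂).dropLast.dropLast := by
  have hrot : ∀ x y : α, l₁ ++ x :: y :: l₂ ~r l₂ ++ l₁ ++ [x, y] := fun x y =>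
    isRotated_append.trans (by simpa using (isRotated_append (l := [x, y]) (l' := l₂ ++ l₁)))
  have hq : ((l₁ ++ b :: a :: l₂ : List α) : Multiset α) = M := by
    rw [← hp, Multiset.coe_eq_coe]
    exact (Perm.swap a b l₂).append_left l₁
  have hdd :
      (l₂ ++ l₁ ++ [a, b]).dropLast.dropLast = (l₂ ++ l₁ ++ [b, a]).dropLast.dropLast := by
    simp
  refine (reflTransGen_prefixAdj_of_isRotated hp (hrot a b)).trans ?_
  rw [hdd]
  refine reflTransGen_prefixAdj_of_isRotated ?_ (hrot b a).symm
  rw [← hq, Multiset.coe_eq_coe]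
  exact (hrot b a).perm.symm

theorem reflTransGen_prefixAdj_append_of_perm {w l l' : List α} (h : l ~ l')
    (hp : ((w ++ l : List α) : Multiset α) = M) :
    Relation.ReflTransGen (PrefixAdj M) (w ++ l).dropLast.dropLast
      (w ++ l').dropLast.dropLast := by
  induction h generalizing w with
  | nil => exact .refl
  | cons x _ ih => simpa using ih (w := w ++ [x]) (by simpa using hp)
  | swap x y l => exact reflTransGen_prefixAdj_swap hp
  | trans h₁ _ ih₁ ih₂ =>
    refine (ih₁ hp).trans (ih₂ ?_)
    rw [← hp, Multiset.coe_eq_coe]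
    exact (h₁.append_left w).symm

theorem reflTransGen_prefixAdj_dropLast {e f : List α} (he : e ∈ prefixFinset M)
    (hf : f ∈ prefixFinset M) : Relation.ReflTransGen (PrefixAdj M) e.dropLast f.dropLast := by
  obtain ⟨p, hp, rfl⟩ := mem_prefixFinset.1 he
  obtain ⟨q, hq, rfl⟩ := mem_prefixFinset.1 hf
  simpa using reflTransGen_prefixAdj_append_of_perm (w := [])
    (Multiset.coe_eq_coe.1 (hp.trans hq.symm)) hp

end Prefixes

theorem coe_prefixFinset (M : Multiset ℕ) :
    (prefixFinset M : Set (List ℕ)) = List.dropLast '' multisetPerms M := by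
  ext e
  simp [mem_prefixFinset, multisetPerms]

theorem exists_isUCycle_of_isCyclicChain {m : ℕ} {es : List (List ℕ)} (hnd : es.Nodup)
    (hlen : ∀ c ∈ es, c.length = m) (hcyc : es.IsCyclicChain fun u v => u.tail = v.dropLast) :
    ∃ a, IsUCycle m es.length {c | c ∈ es} a := by
  rcases eq_or_ne es [] with rfl | hne
  · exact ⟨0, by simp [IsUCycle]⟩
  have hL : 0 < es.length := List.length_pos_iff.2 hne
  let w : ℕ → List ℕ := fun i => es[i % es.length]'(Nat.mod_lt _ hL)
  have hw : ∀ i, w i = List.ofFn fun j : Fin m => (w (i + j)).headI :=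
    List.eq_ofFn_headI_of_tail_eq_dropLast (fun i => hlen _ (List.getElem_mem _)) fun i => by
      simpa [w, Nat.add_mod_mod] using hcyc.rel_getElem_succ_mod (Nat.mod_lt i hL)
  have hwindow : ∀ i (hi : i < es.length),
      (List.ofFn fun j : Fin m => (w ((i + j) % es.length)).headI) = es[i] := by
    intro i hi
    simpa [w, Nat.mod_eq_of_lt hi] using (hw i).symm
  refine ⟨fun i => (w i).headI, fun i hi => ?_, fun c hc => ?_⟩
  · simp [hwindow i hi]
  · obtain ⟨i, hi, rfl⟩ := List.getElem_of_mem hc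
    refine ⟨i, ⟨hi, hwindow i hi⟩, fun j ⟨hj, hji⟩ => ?_⟩
    rw [hwindow j hj] at hji
    exact (hnd.getElem_inj_iff).1 hji

theorem exists_ucycle_multisetPerms_prefixes_general (n : ℕ) (M : Multiset ℕ)
    (hM : Multiset.card M = n) :
    ∃ a : ℕ → ℕ,
      IsUCycle (n - 1) (Nat.card (List.dropLast '' multisetPerms M))
        (List.dropLast '' multisetPerms M) a := by
  obtain ⟨es, hnd, hes, hcyc⟩ := Eulerian.exists_eulerian_circuit
    (card_filter_dropLast_eq_card_filter_tail M)
    fun _ he _ hf => reflTransGen_prefixAdj_dropLast he hf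
  have hC : List.dropLast '' multisetPerms M = {c | c ∈ es} := by
    rw [← coe_prefixFinset, ← hes, List.coe_toFinset]
  have hcard : Nat.card {c | c ∈ es} = es.length := by
    rw [← List.coe_toFinset, Nat.card_coe_set_eq, Set.ncard_coe_finset,
      List.toFinset_card_of_nodup hnd]
  rw [hC, hcard]
  refine exists_isUCycle_of_isCyclicChain hnd (fun c hc => ?_) hcyc
  rw [length_of_mem_prefixFinset (hes ▸ List.mem_toFinset.2 hc), hM]

/-- For `n ≥ 2` and a multiset `M` of `n` natural numbers, there exists a
universal cycle for `A(M)⁻`, the set of prefixes (first `n-1` letters) of the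
permutations of `M`. -/
theorem exists_ucycle_multisetPerms_prefixes (n : ℕ) (hn : 2 ≤ n) (M : Multiset ℕ)
    (hM : Multiset.card M = n) :
    ∃ a : ℕ → ℕ,
      IsUCycle (n - 1) (Nat.card (List.dropLast '' multisetPerms M))
        (List.dropLast '' multisetPerms M) a :=
  exists_ucycle_multisetPerms_prefixes_general n M hM
end

section
/- For every integer n ≥ 2, there exists a universal cycle for the set of prefixes (first n−1 letters) of the n! permutations of {0,1,…,n−1}: a cyclic sequence of length n! over {0,1,…,n−1} whose n! cyclic windows of length n−1 are exactly these prefixes, each occurring exactly once. -/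
/-- The permutations of `{0, 1, …, n-1}` regarded as strings of length `n`. -/
def permWords (n : ℕ) : Set (List ℕ) :=
  {w | w.Perm (List.range n)}

/-!
Regard a permutation `π` of `Fin n` as an edge of a digraph on words of length `n - 2`, running
from `π 0 ⋯ π (n - 3)` to `π 1 ⋯ π (n - 2)`. A universal cycle for the prefixes is then an
Eulerian circuit: a cyclic permutation `σ` of all the edges such that each `σ π` starts where `π`
ends, the sequence being read off the first letters of `π, σ π, σ² π, …`.

Right multiplication by the rotation `finRotate n` is a successor map of this kind, and so is any
rearrangement of successors within the sets of edges ending at a common vertex. Exchanging the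
successors of two edges with the same end that lie on different cycles merges the two cycles, so a
successor map whose cycle through a fixed edge is as large as possible has that cycle closed under
"same end" and under rotation. Since the rotation and the transposition of the first and last
positions generate the symmetric group, that cycle contains every edge.
-/

open Equiv Equiv.Perm


namespace Equiv.Perm

variable {α : Type*}

theorem sameCycle_mul_swap_of_not_sameCycle [DecidableEq α] [Finite α] {f : Perm α} {a b z : α}
    (hab : ¬f.SameCycle a b) (hz : f.SameCycle a z ∨ f.SameCycle b z) :
    (f * swap a b).SameCycle a z := by
  set g := f * swap a b
  have hg : ∀ x, x ≠ a → x ≠ b → g x = f x := fun x hxa hxb => by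
    simp [g, swap_apply_of_ne_of_ne hxa hxb]
  have hfb : g.SameCycle a (f b) := by
    simpa [g] using (SameCycle.refl g a).apply_right
  -- The `f`-orbit of `f b` never meets `a`, so `g` follows it all the way round to `b`.
  have hb : g.SameCycle a b := by
    have orbit_fb : ∀ i : ℕ, g.SameCycle a ((f ^ i) (f b)) := by
      intro i
      induction i with
      | zero => exact hfb
      | succ i ih =>
        rw [pow_succ', mul_apply]
        set x := (f ^ i) (f b)
        have hbx : f.SameCycle b x := sameCycle_pow_right.2 (sameCycle_apply_right.2 .rfl)
        have hxa : x ≠ a := fun hx => hab (hx ▸ hbx).symm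
        by_cases hxb : x = b
        · rwa [hxb]
        · rw [← hg x hxa hxb]; exact ih.apply_right
    obtain ⟨j, hj⟩ := (sameCycle_apply_left.2 (SameCycle.refl f b)).exists_nat_pow_eq
    exact hj ▸ orbit_fb j
  have hclosed : ∀ x, g.SameCycle a x → g.SameCycle a (f x) := by
    intro x hx
    by_cases hxa : x = a
    · subst hxa; simpa [g] using hb.apply_right
    by_cases hxb : x = b
    · exact hxb ▸ hfb
    · rw [← hg x hxa hxb]; exact hx.apply_right
  have hpow : ∀ x (i : ℕ), g.SameCycle a x → g.SameCycle a ((f ^ i) x) := by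
    intro x i hx
    induction i with
    | zero => exact hx
    | succ i ih => rw [pow_succ', mul_apply]; exact hclosed _ ih
  rcases hz with hz | hz
  · obtain ⟨i, rfl⟩ := hz.exists_nat_pow_eq; exact hpow a i .rfl
  · obtain ⟨i, rfl⟩ := hz.exists_nat_pow_eq; exact hpow b i hb

theorem setOf_sameCycle_ssubset_mul_swap [DecidableEq α] [Finite α] {f : Perm α} {x a b : α}
    (ha : f.SameCycle x a) (hb : ¬f.SameCycle x b) :
    {y | f.SameCycle x y} ⊂ {y | (f * swap a b).SameCycle x y} := by
  have hab : ¬f.SameCycle a b := fun hab => hb (ha.trans hab)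
  have hxa : (f * swap a b).SameCycle x a :=
    (sameCycle_mul_swap_of_not_sameCycle hab (.inl ha.symm)).symm
  refine Set.ssubset_iff_of_subset (fun y hy => ?_) |>.2 ⟨b, ?_, hb⟩
  · exact hxa.trans (sameCycle_mul_swap_of_not_sameCycle hab (.inl (ha.symm.trans hy)))
  · exact hxa.trans (sameCycle_mul_swap_of_not_sameCycle hab (.inr .rfl))

theorem exists_isCycleOn_univ_mul_of_connected {β : Type*} [Finite α] (σ : Perm α) (h : α → β)
    (hconn : ∀ S : Set α, S.Nonempty → (∀ x ∈ S, σ x ∈ S) →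
      (∀ x ∈ S, ∀ y, h y = h x → y ∈ S) → S = .univ) :
    ∃ ρ : Perm α, (∀ x, h (ρ x) = h x) ∧ (σ * ρ).IsCycleOn .univ := by
  classical
  rcases isEmpty_or_nonempty α with _ | ⟨⟨x₀⟩⟩
  · exact ⟨1, fun _ => rfl, isCycleOn_of_subsingleton _ _⟩
  let cycle (ρ : Perm α) : Set α := {y | (σ * ρ).SameCycle x₀ y}
  have : Nonempty {ρ : Perm α // ∀ x, h (ρ x) = h x} := ⟨⟨1, fun _ => rfl⟩⟩
  obtain ⟨⟨ρ, hρ⟩, hmax⟩ := Finite.exists_max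
    fun ρ : {ρ : Perm α // ∀ x, h (ρ x) = h x} => (cycle ρ).ncard
  have hsat : ∀ a ∈ cycle ρ, ∀ b, h b = h a → b ∈ cycle ρ := by
    intro a ha b hba
    by_contra hb
    have hρ' : ∀ x, h ((ρ * swap a b) x) = h x := fun x => by
      rw [mul_apply, hρ]
      rcases eq_or_ne x a with rfl | hxa
      · simp [hba]
      rcases eq_or_ne x b with rfl | hxb
      · simp [hba]
      · rw [swap_apply_of_ne_of_ne hxa hxb]
    have hlt : cycle ρ ⊂ cycle (ρ * swap a b) := by
      simpa only [cycle, ← mul_assoc] using setOf_sameCycle_ssubset_mul_swap ha hb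
    exact (Set.ncard_lt_ncard hlt).not_ge (hmax ⟨_, hρ'⟩)
  have huniv : cycle ρ = .univ := by
    refine hconn _ ⟨x₀, SameCycle.rfl⟩ (fun x hx => ?_) hsat
    have hx' : ρ⁻¹ x ∈ cycle ρ := hsat x hx _ (by simpa using (hρ (ρ⁻¹ x)).symm)
    show (σ * ρ).SameCycle x₀ (σ x)
    simpa using hx'.apply_right
  refine ⟨ρ, hρ, (σ * ρ).bijective.bijOn_univ, fun x _ y _ => ?_⟩
  have hmem (z : α) : (σ * ρ).SameCycle x₀ z := Set.eq_univ_iff_forall.1 huniv z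
  exact (hmem x).symm.trans (hmem y)

end Equiv.Perm

theorem Subgroup.eq_univ_of_mul_mem_of_closure_eq_top {G : Type*} [Group G] [Finite G]
    {s S : Set G} (hs : Subgroup.closure s = ⊤) (hne : S.Nonempty)
    (hS : ∀ x ∈ S, ∀ g ∈ s, x * g ∈ S) : S = .univ := by
  have hmul : ∀ g ∈ Submonoid.closure s, ∀ x ∈ S, x * g ∈ S := by
    intro g hg
    induction hg using Submonoid.closure_induction with
    | mem g hg => exact fun x hx => hS x hx g hg
    | one => exact fun x hx => by rwa [mul_one]
    | mul g g' _ _ ih ih' => exact fun x hx => mul_assoc x g g' ▸ ih' _ (ih x hx)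
  obtain ⟨x, hx⟩ := hne
  refine Set.eq_univ_of_forall fun y => ?_
  have hmem : x⁻¹ * y ∈ Submonoid.closure s := by
    rw [← Subgroup.closure_toSubmonoid_of_finite, hs]; trivial
  simpa using hmul _ hmem x hx

theorem ofFn_val_perm_range {n : ℕ} (π : Perm (Fin n)) :
    (List.ofFn fun k => (π k : ℕ)).Perm (List.range n) := by
  rw [List.ofFn_eq_map, ← List.map_coe_finRange_eq_range]
  exact List.map_map ▸ (map_finRange_perm π).map Fin.val

theorem exists_ofFn_val_eq_of_perm_range {n : ℕ} {w : List ℕ} (hw : w.Perm (List.range n)) :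
    ∃ π : Perm (Fin n), (List.ofFn fun k => (π k : ℕ)) = w := by
  have hlen : w.length = n := by simpa using hw.length_eq
  have hlt : ∀ k : Fin n, w[k.val] < n := fun k =>
    List.mem_range.1 (hw.subset (List.getElem_mem _))
  let f : Fin n → Fin n := fun k => ⟨w[k.val], hlt k⟩
  have hf : Function.Injective f := fun k k' hkk' =>
    Fin.ext ((hw.nodup_iff.2 List.nodup_range).getElem_inj_iff.1 (Fin.val_eq_of_eq hkk'))
  refine ⟨Equiv.ofBijective f (Finite.injective_iff_bijective.1 hf), ?_⟩
  exact List.ext_getElem (by simp [hlen]) fun k _ _ => by simp [f]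

theorem permWords_eq_range (n : ℕ) :
    permWords n = Set.range fun π : Perm (Fin n) => List.ofFn fun k => (π k : ℕ) :=
  Set.ext fun _ => ⟨exists_ofFn_val_eq_of_perm_range, fun ⟨π, hπ⟩ => hπ ▸ ofFn_val_perm_range π⟩

def prefixWord {n : ℕ} (π : Perm (Fin (n + 1))) : List ℕ :=
  List.ofFn fun k : Fin n => (π k.castSucc : ℕ)

theorem dropLast_image_permWords (n : ℕ) :
    List.dropLast '' permWords (n + 1) = Set.range (prefixWord (n := n)) := by
  rw [permWords_eq_range, ← Set.range_comp]
  congr 1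
  funext π
  simp only [Function.comp_apply, List.ofFn_succ', List.concat_eq_append, List.dropLast_concat,
    prefixWord]

theorem prefixWord_injective {n : ℕ} : Function.Injective (prefixWord (n := n)) := by
  intro π π' h
  have hcast : ∀ k : Fin n, π k.castSucc = π' k.castSucc := fun k =>
    Fin.ext (congrFun (List.ofFn_injective h) k)
  rw [← inv_mul_eq_one, ← card_support_le_one]
  refine (Finset.card_le_card fun x hx => ?_).trans (Finset.card_singleton (Fin.last n)).le
  rw [mem_support] at hx
  rw [Finset.mem_singleton]
  induction x using Fin.lastCases with
  | last => rfl
  | cast k => exact absurd (by simp [← hcast k]) hx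

theorem exists_shifting_isCycleOn_univ (m : ℕ) :
    ∃ σ : Perm (Perm (Fin (m + 2))), σ.IsCycleOn .univ ∧
      ∀ π (k : ℕ) (hk : k < m), σ π ⟨k, by omega⟩ = π ⟨k + 1, by omega⟩ := by
  set c := finRotate (m + 2)
  -- `h π` is the vertex at which the edge `π` ends.
  set h : Perm (Fin (m + 2)) → Fin m → Fin (m + 2) := fun π k => π ⟨k + 1, by omega⟩
  have hconn : ∀ S : Set (Perm (Fin (m + 2))), S.Nonempty → (∀ x ∈ S, Equiv.mulRight c x ∈ S) →
      (∀ x ∈ S, ∀ y, h y = h x → y ∈ S) → S = .univ := by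
    intro S hne hmul hsat
    refine Subgroup.eq_univ_of_mul_mem_of_closure_eq_top
      (closure_cycle_adjacent_swap isCycle_finRotate support_finRotate (Fin.last _)) hne ?_
    rintro x hx g (rfl | rfl)
    · exact hmul x hx
    · refine hsat x hx _ (funext fun k => ?_)
      have hk0 : (⟨k + 1, by omega⟩ : Fin (m + 2)) ≠ 0 := by simp [Fin.ext_iff]
      have hkl : (⟨k + 1, by omega⟩ : Fin (m + 2)) ≠ Fin.last _ := by simp [Fin.ext_iff]; omega
      simp [h, swap_apply_of_ne_of_ne hkl hk0]
  obtain ⟨ρ, hρ, hcyc⟩ := exists_isCycleOn_univ_mul_of_connected (Equiv.mulRight c) h hconn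
  refine ⟨Equiv.mulRight c * ρ, hcyc, fun π k hk => ?_⟩
  have hck : c ⟨k, by omega⟩ = ⟨k + 1, by omega⟩ := finRotate_of_lt (by omega)
  simpa [hck] using congrFun (hρ π) ⟨k, hk⟩

theorem isUCycle_of_shifting_isCycleOn {m : ℕ} {σ : Perm (Perm (Fin (m + 2)))}
    (hσ : σ.IsCycleOn .univ)
    (hshift : ∀ π (k : ℕ) (hk : k < m), σ π ⟨k, by omega⟩ = π ⟨k + 1, by omega⟩) :
    IsUCycle (m + 1) (m + 2).factorial (List.dropLast '' permWords (m + 2))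
      fun i => ((σ ^ i) 1 0 : ℕ) := by
  set G : ℕ → Perm (Fin (m + 2)) := fun i => (σ ^ i) 1
  have hσ' : σ.IsCycleOn (Finset.univ : Finset (Perm (Fin (m + 2)))) := by simpa using hσ
  have hcard : (Finset.univ : Finset (Perm (Fin (m + 2)))).card = (m + 2).factorial := by
    simp [Fintype.card_perm]
  have hG : ∀ i j, G i = G j ↔ i ≡ j [MOD (m + 2).factorial] := fun i j =>
    hcard ▸ hσ'.pow_apply_eq_pow_apply (Finset.mem_univ 1)
  have hletter : ∀ j (hj : j ≤ m) i, G (i + j) 0 = G i ⟨j, by omega⟩ := by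
    intro j hj
    induction j with
    | zero => exact fun i => rfl
    | succ j ih =>
      intro i
      rw [← add_assoc, add_right_comm, ih (by omega) (i + 1)]
      simp only [G, pow_succ', mul_apply]
      exact hshift _ j hj
  have hwindow : ∀ i, (List.ofFn fun j : Fin (m + 1) =>
      (G ((i + j) % (m + 2).factorial) 0 : ℕ)) = prefixWord (G i) := fun i => by
    simp only [prefixWord]
    congr 1
    funext j
    rw [(hG _ _).2 (Nat.mod_modEq _ _), hletter j (by omega) i]
    rfl
  rw [dropLast_image_permWords]
  refine ⟨fun i _ => ⟨G i, (hwindow i).symm⟩, ?_⟩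
  rintro _ ⟨π, rfl⟩
  obtain ⟨i, hi, rfl⟩ := hσ'.exists_pow_eq (Finset.mem_univ 1) (Finset.mem_univ π)
  rw [hcard] at hi
  refine ⟨i, ⟨hi, hwindow i⟩, fun i' ⟨hi', hw⟩ => ?_⟩
  exact ((hG i' i).1 (prefixWord_injective ((hwindow i').symm.trans hw))).eq_of_lt_of_lt hi' hi

/-- For every `n ≥ 2`, there is a universal cycle for the set of prefixes (first
`n-1` letters) of the `n!` permutations of `{0, 1, …, n-1}`: a cyclic sequence of
length `n!` over `{0, 1, …, n-1}` whose `n!` cyclic windows of length `n-1` are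
exactly these prefixes, each occurring exactly once. -/
theorem exists_ucycle_permWords_prefixes (n : ℕ) (hn : 2 ≤ n) :
    ∃ a : ℕ → ℕ, (∀ i < n.factorial, a i < n) ∧
      IsUCycle (n - 1) n.factorial (List.dropLast '' permWords n) a := by
  obtain ⟨m, rfl⟩ : ∃ m, n = m + 2 := ⟨n - 2, by omega⟩
  obtain ⟨σ, hσ, hshift⟩ := exists_shifting_isCycleOn_univ m
  exact ⟨_, fun i _ => ((σ ^ i) 1 0).isLt, isUCycle_of_shifting_isCycleOn hσ hshift⟩
end

section
/- Let k be a positive integer and let h, b be the unique natural numbers with 0 ≤ b ≤ h and k = h(h+1)/2 + b, and let n be an integer with n ≥ h + 2. Define the word w of length n as the concatenation w = 0^{n−h−2} · (0,1,…,b−1) · (b,b) · (b+1,…,h) (that is, n−h−2 zeros, then the increasing run from 0 to b−1, then two copies of b, then the increasing run from b+1 to h). Then w ∈ W_k(n), and the word w₁…w_{n−2} consisting of the first n−2 letters of w is the lexicographically smallest element of the set {u₁…u_{n−2} : u ∈ W_k(n)}. -/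
open Finset

theorem List.Lex.exists_eq_append_cons {α : Type*} {r : α → α → Prop} {l₁ l₂ : List α}
    (h : List.Lex r l₁ l₂) (hl : l₁.length = l₂.length) :
    ∃ p a b t₁ t₂, r a b ∧ l₁ = p ++ a :: t₁ ∧ l₂ = p ++ b :: t₂ := by
  induction h with
  | nil => simp at hl
  | @cons a _ _ _ ih =>
    obtain ⟨p, a', b', t₁, t₂, hab, rfl, rfl⟩ := ih (by simpa using hl)
    exact ⟨a :: p, a', b', t₁, t₂, hab, rfl, rfl⟩
  | @rel a l₁ b l₂ hab => exact ⟨[], a, b, l₁, l₂, hab, rfl, rfl⟩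

theorem List.Lex.exists_eq_append_cons_of_take {α : Type*} {r : α → α → Prop} {l₁ l₂ : List α}
    {m : ℕ} (h : List.Lex r (l₁.take m) (l₂.take m)) (hl : l₁.length = l₂.length) :
    ∃ p a b t₁ t₂, r a b ∧ l₁ = p ++ a :: t₁ ∧ l₂ = p ++ b :: t₂ ∧ p.length < m := by
  obtain ⟨p, a, b, t₁, t₂, hab, h₁, h₂⟩ := h.exists_eq_append_cons (by simp [hl])
  refine ⟨p, a, b, t₁ ++ l₁.drop m, t₂ ++ l₂.drop m, hab, ?_, ?_, ?_⟩
  · conv_lhs => rw [← List.take_append_drop m l₁, h₁]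
    simp
  · conv_lhs => rw [← List.take_append_drop m l₂, h₂]
    simp
  · have := congrArg List.length h₁
    simp only [List.length_take, List.length_append, List.length_cons] at this
    omega

theorem List.sum_le_sum_add_card_nsmul {α : Type*} [AddCommMonoid α] [PartialOrder α]
    [IsOrderedAddMonoid α] [DecidableEq α] {s : List α} {T : Finset α} {M : α}
    (hT : T ⊆ s.toFinset) (hM : ∀ x ∈ s, x ≤ M) :
    #T ≤ s.length ∧ s.sum ≤ ∑ x ∈ T, x + (s.length - #T) • M := by
  have hle : T.val ≤ (s : Multiset α) :=
    (Multiset.le_iff_subset T.nodup).2 fun x hx => List.mem_toFinset.1 (hT hx)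
  obtain ⟨r, hr⟩ := le_iff_exists_add.1 hle
  have hcard : s.length = #T + Multiset.card r := by
    rw [← Multiset.coe_card, hr, Multiset.card_add, Finset.card_val]
  have hsum : s.sum = ∑ x ∈ T, x + r.sum := by
    rw [← Multiset.sum_coe, hr, Multiset.sum_add, Finset.sum_eq_multiset_sum, Multiset.map_id']
  refine ⟨by omega, ?_⟩
  rw [hsum, hcard, Nat.add_sub_cancel_left]
  gcongr
  refine Multiset.sum_le_card_nsmul r M fun x hx => hM x ?_
  exact Multiset.mem_coe.1 (hr ▸ Multiset.mem_add.2 (Or.inr hx))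

theorem List.sum_le_sum_Ico {s : List ℕ} {i M : ℕ} (hM : ∀ x ∈ s, x ≤ M)
    (hs : ∀ x, i ≤ x → x ≤ M → x ∈ s) : s.sum ≤ ∑ x ∈ Finset.Ico i (i + s.length), x := by
  rcases lt_or_ge M i with hMi | hiM
  · calc s.sum ≤ s.length • M := List.sum_le_card_nsmul s M hM
      _ ≤ #(Finset.Ico i (i + s.length)) • i := by
        rw [Nat.card_Ico, Nat.add_sub_cancel_left]
        gcongr
      _ ≤ ∑ x ∈ Finset.Ico i (i + s.length), x :=
        Finset.card_nsmul_le_sum _ _ _ fun x hx => (Finset.mem_Ico.1 hx).1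
  · have hT : Finset.Ico i (M + 1) ⊆ s.toFinset := fun x hx => by
      rw [Finset.mem_Ico] at hx
      exact List.mem_toFinset.2 (hs x hx.1 (Nat.le_of_lt_succ hx.2))
    obtain ⟨hcard, hsum⟩ := List.sum_le_sum_add_card_nsmul hT hM
    rw [Nat.card_Ico] at hcard hsum
    rw [← Finset.sum_Ico_consecutive _ (by omega : i ≤ M + 1) (by omega : M + 1 ≤ i + s.length)]
    refine hsum.trans (Nat.add_le_add_left ?_ _)
    calc (s.length - (M + 1 - i)) • M ≤ #(Finset.Ico (M + 1) (i + s.length)) • (M + 1) := by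
          rw [Nat.card_Ico, show i + s.length - (M + 1) = s.length - (M + 1 - i) by omega]
          gcongr
          omega
      _ ≤ _ := Finset.card_nsmul_le_sum _ _ _ fun x hx => (Finset.mem_Ico.1 hx).1

theorem List.sum_range'_eq_sum_Ico (s n : ℕ) :
    (List.range' s n).sum = ∑ x ∈ Finset.Ico s (s + n), x := by
  rw [← List.toFinset_range'_1, List.sum_toFinset _ List.nodup_range', List.map_id']

theorem List.sum_range_eq_sum_range (n : ℕ) : (List.range n).sum = ∑ x ∈ Finset.range n, x := by
  rw [List.range_eq_range', List.sum_range'_eq_sum_Ico, zero_add, Finset.range_eq_Ico]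

theorem sum_append_cons_le {p s : List ℕ} {c m h : ℕ}
    (hu : (p ++ c :: s).toFinset = range (h + 1)) (hp : ∀ x ∈ p, x < m) (hc : c < m) :
    (p ++ c :: s).sum ≤ p.sum + c + ∑ x ∈ Ico m (m + s.length), x := by
  have hmem : ∀ x, x ∈ p ++ c :: s ↔ x ≤ h := fun x => by
    rw [← List.mem_toFinset, hu, mem_range, Nat.lt_succ_iff]
  rw [List.sum_append, List.sum_cons, add_assoc]
  refine Nat.add_le_add_left (Nat.add_le_add_left (List.sum_le_sum_Ico (M := h) ?_ ?_) _) _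
  · exact fun x hx => (hmem x).1 (by simp [hx])
  · intro x hmx hxh
    have hxu := (hmem x).2 hxh
    simp only [List.mem_append, List.mem_cons] at hxu
    rcases hxu with hxp | rfl | hxs
    · exact absurd (hp x hxp) (by omega)
    · omega
    · exact hxs

-- `0^N · (0,…,b-1) · (b,b) · (b+1,…,h)`, regrouped as `0^N · (0,…,b) · (b,…,h)`.
def minWord (N h b : ℕ) : List ℕ :=
  List.replicate N 0 ++ List.range (b + 1) ++ List.range' b (h + 1 - b)

section minWord

variable {N h b : ℕ}

theorem replicate_append_range_eq_minWord (hb : b ≤ h) :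
    List.replicate N 0 ++ List.range b ++ [b, b] ++ List.range' (b + 1) (h - b) =
      minWord N h b := by
  rw [minWord, List.range_succ, show h + 1 - b = (h - b) + 1 by omega, List.range'_succ]
  simp

theorem length_minWord (hb : b ≤ h) : (minWord N h b).length = N + h + 2 := by
  simp only [minWord, List.length_append, List.length_replicate, List.length_range,
    List.length_range']
  omega

theorem toFinset_minWord (hb : b ≤ h) : (minWord N h b).toFinset = range (h + 1) := by
  ext x
  simp only [minWord, List.toFinset_append, mem_union, List.mem_toFinset, List.mem_replicate,
    List.mem_range, List.mem_range'_1, mem_range]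
  omega

theorem sum_minWord (hb : b ≤ h) : (minWord N h b).sum = ∑ x ∈ range (h + 1), x + b := by
  rw [minWord, List.sum_append, List.sum_append, List.sum_replicate, smul_zero, zero_add,
    List.sum_range_eq_sum_range, List.sum_range'_eq_sum_Ico, sum_range_succ,
    show b + (h + 1 - b) = h + 1 by omega, add_right_comm,
    sum_range_add_sum_Ico _ (Nat.le_succ_of_le hb)]

theorem minWord_eq_replicate_append_cons {j : ℕ} (hj : j < N) :
    minWord N h b = List.replicate j 0 ++ 0 ::
      (List.replicate (N - j - 1) 0 ++ List.range (b + 1) ++ List.range' b (h + 1 - b)) := by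
  obtain ⟨q, rfl⟩ : ∃ q, N = j + 1 + q := ⟨N - j - 1, by omega⟩
  rw [minWord, List.replicate_add, List.replicate_succ', show j + 1 + q - j - 1 = q by omega]
  simp

theorem minWord_eq_append_cons_of_le {i : ℕ} (hi : i ≤ b) :
    minWord N h b = (List.replicate N 0 ++ List.range i) ++ i ::
      (List.range' (i + 1) (b - i) ++ List.range' b (h + 1 - b)) := by
  rw [minWord, List.range_eq_range', List.range_eq_range',
    show b + 1 = i + (b - i + 1) by omega, ← List.range'_append_1, List.range'_succ]
  simp

theorem minWord_eq_append_cons_of_lt_sub {t : ℕ} (ht : t < h - b) :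
    minWord N h b = (List.replicate N 0 ++ List.range (b + 1) ++ List.range' b t) ++ (b + t) ::
      List.range' (b + t + 1) (h - b - t) := by
  rw [minWord, show h + 1 - b = t + (h - b - t + 1) by omega, ← List.range'_append_1,
    List.range'_succ]
  simp

theorem minWord_prefix_bound (hb : b ≤ h) {p rest : List ℕ} {d : ℕ}
    (hw : minWord N h b = p ++ d :: rest) (hp : p.length < N + h) (hd : 0 < d) :
    ∃ m, (∀ x ∈ p, x < m) ∧ d ≤ m ∧
      p.sum + d + ∑ x ∈ Ico m (m + rest.length), x ≤ ∑ x ∈ range (h + 1), x + b := by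
  have split_eq : ∀ {p' d' rest'}, minWord N h b = p' ++ d' :: rest' → p'.length = p.length →
      p' = p ∧ d' = d ∧ rest' = rest := fun hw' hl => by
    obtain ⟨rfl, hcons⟩ := List.append_inj (hw'.symm.trans hw) hl
    exact ⟨rfl, List.cons_eq_cons.1 hcons⟩
  rcases lt_or_ge p.length N with hN | hN
  · obtain ⟨-, rfl, -⟩ := split_eq (minWord_eq_replicate_append_cons hN) (by simp)
    omega
  obtain ⟨i, hi⟩ : ∃ i, p.length = N + i := ⟨p.length - N, by omega⟩
  rcases le_or_gt i b with hib | hib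
  · obtain ⟨rfl, rfl, rfl⟩ := split_eq (minWord_eq_append_cons_of_le hib) (by simp [hi])
    refine ⟨i, ?_, le_rfl, ?_⟩
    · simp only [List.mem_append, List.mem_replicate, List.mem_range]
      omega
    · have htot := sum_range_add_sum_Ico (fun x => x) (by omega : i ≤ h + 1)
      rw [List.sum_append, List.sum_replicate, smul_zero, zero_add, List.sum_range_eq_sum_range,
        List.length_append, List.length_range', List.length_range',
        show i + (b - i + (h + 1 - b)) = h + 1 by omega]
      omega
  · obtain ⟨t, rfl⟩ : ∃ t, i = b + 1 + t := ⟨i - b - 1, by omega⟩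
    have ht : t < h - b := by omega
    obtain ⟨rfl, rfl, rfl⟩ := split_eq (minWord_eq_append_cons_of_lt_sub (N := N) ht) (by
      simp only [List.length_append, List.length_replicate, List.length_range, List.length_range']
      omega)
    refine ⟨b + t + 1, ?_, by omega, ?_⟩
    · simp only [List.mem_append, List.mem_replicate, List.mem_range, List.mem_range'_1]
      omega
    · have hpre : ∑ x ∈ range (b + 1), x + ∑ x ∈ Ico b (b + t), x = ∑ x ∈ range (b + t), x + b := by
        rw [sum_range_succ, add_right_comm, sum_range_add_sum_Ico _ (by omega)]
      have htot : ∑ x ∈ range (b + t), x + (b + t) + ∑ x ∈ Ico (b + t + 1) (h + 1), x =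
          ∑ x ∈ range (h + 1), x := by
        rw [← sum_range_succ, sum_range_add_sum_Ico _ (by omega)]
      rw [List.sum_append, List.sum_append, List.sum_replicate, smul_zero, zero_add,
        List.sum_range_eq_sum_range, List.sum_range'_eq_sum_Ico, List.length_range',
        show b + t + 1 + (h - b - t) = h + 1 by omega]
      omega

end minWord

theorem minimum_vertex_weightWeakOrders_general (k h b n : ℕ) (hb : b ≤ h)
    (hkhb : k = h * (h + 1) / 2 + b) (hn : h + 2 ≤ n) :
    (List.replicate (n - h - 2) 0 ++ List.range b ++ [b, b] ++
        List.range' (b + 1) (h - b)) ∈ weightWeakOrders n k ∧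
      ∀ u ∈ weightWeakOrders n k,
        (List.replicate (n - h - 2) 0 ++ List.range b ++ [b, b] ++
              List.range' (b + 1) (h - b)).take (n - 2) = u.take (n - 2) ∨
          List.Lex (· < ·)
            ((List.replicate (n - h - 2) 0 ++ List.range b ++ [b, b] ++
                List.range' (b + 1) (h - b)).take (n - 2)) (u.take (n - 2)) := by
  obtain ⟨N, rfl⟩ : ∃ N, n = N + h + 2 := ⟨n - h - 2, by omega⟩
  have hk : k = ∑ x ∈ range (h + 1), x + b := by
    rw [hkhb, Finset.sum_range_id, Nat.add_sub_cancel, mul_comm]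
  rw [show N + h + 2 - h - 2 = N by omega, replicate_append_range_eq_minWord hb, hk]
  refine ⟨⟨⟨length_minWord hb, h, toFinset_minWord hb⟩, sum_minWord hb⟩, ?_⟩
  rintro u ⟨⟨hlen, h', hu⟩, hsum⟩
  refine le_iff_eq_or_lt.1 (not_lt.1 fun hlt => ?_)
  obtain ⟨p, c, d, s, rest, hcd, rfl, hw, hp⟩ :=
    List.Lex.exists_eq_append_cons_of_take hlt (hlen.trans (length_minWord hb).symm)
  have hrest : rest.length = s.length := by
    have := congrArg List.length hw
    simp only [length_minWord hb, List.length_append, List.length_cons] at this hlen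
    omega
  obtain ⟨m, hpm, hdm, hbound⟩ := minWord_prefix_bound hb hw (by omega) (by omega)
  rw [hrest] at hbound
  refine lt_irrefl (p ++ c :: s).sum ?_
  calc (p ++ c :: s).sum ≤ p.sum + c + ∑ x ∈ Ico m (m + s.length), x :=
        sum_append_cons_le hu hpm (hcd.trans_le hdm)
    _ < p.sum + d + ∑ x ∈ Ico m (m + s.length), x := by gcongr
    _ ≤ ∑ x ∈ range (h + 1), x + b := hbound
    _ = (p ++ c :: s).sum := hsum.symm

/-- Let `k > 0`, let `b ≤ h` satisfy `k = h(h+1)/2 + b`, and let `n ≥ h + 2`.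
Then the word `w = 0^{n-h-2} · (0,…,b-1) · (b,b) · (b+1,…,h)` lies in `W_k(n)`,
and its first `n - 2` letters form the lexicographically smallest element of
`{u₁…u_{n-2} : u ∈ W_k(n)}`. -/
theorem minimum_vertex_weightWeakOrders (k h b n : ℕ) (hk : 0 < k) (hb : b ≤ h)
    (hkhb : k = h * (h + 1) / 2 + b) (hn : h + 2 ≤ n) :
    (List.replicate (n - h - 2) 0 ++ List.range b ++ [b, b] ++
        List.range' (b + 1) (h - b)) ∈ weightWeakOrders n k ∧
      ∀ u ∈ weightWeakOrders n k,
        (List.replicate (n - h - 2) 0 ++ List.range b ++ [b, b] ++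
              List.range' (b + 1) (h - b)).take (n - 2) = u.take (n - 2) ∨
          List.Lex (· < ·)
            ((List.replicate (n - h - 2) 0 ++ List.range b ++ [b, b] ++
                List.range' (b + 1) (h - b)).take (n - 2)) (u.take (n - 2)) :=
  minimum_vertex_weightWeakOrders_general k h b n hb hkhb hn
end

section
/- Let n, s, k be positive integers and h a natural number with 1 ≤ s ≤ n−2, k ≤ n(n−1)/2, 0 ≤ h < n, and W_k(n,h) nonempty. If gcd(s, n) = 1, then there exists an s-overlap cycle for W_k(n,h), the set of weak order words of length n with weight k and height h. -/
/-!
Rotating a word of length `n` left by `n - s` places moves its last `s` letters to the front,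
so on `W = W_k(n,h)` this rotation is a permutation `σ` each of whose steps is an `s`-overlap.
If two words `u, v` end in the same `s` letters, exchanging their successors
(`π ↦ π * swap u v`) keeps this property and joins the cycles through `u` and `v`. Hence an
overlap cycle exists once `W` is connected by the edges `w — σ w` and "same last `s` letters".

Since `gcd(s, n) = 1`, the powers of `σ` give all rotations, and since `s ≤ n - 2`, changing the
first two letters keeps the last `s`; together they connect all rearrangements of a word. The
surplus letters (beyond one copy of each of `0, …, h`) can then be moved `(x, y) ↦ (x + 1, y - 1)`
for `0 < y ≤ x < h`; this raises their sum of squares and ends in the unique saturated multiset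
of the given size and sum.
-/

/-- `W_k(n,h)`: the weak order words of length `n` with weight (sum of letters)
`k` and height exactly `h`. -/
def weightHeightWeakOrders (n k h : ℕ) : Set (List ℕ) :=
  {w | w.length = n ∧ w.toFinset = Finset.range (h + 1) ∧ w.sum = k}

/-- `IsOCycle s N C f` says `f 0, f 1, …, f (N-1)` is an `s`-overlap cycle for the
set `C` of strings: it is a cyclic ordering of all elements of `C` (each occurring
exactly once) in which the last `s` letters of each word equal the first `s`
letters of the cyclically next word. -/
def IsOCycle (s N : ℕ) (C : Set (List ℕ)) (f : ℕ → List ℕ) : Prop :=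
  (∀ i < N, f i ∈ C) ∧
    (∀ c ∈ C, ∃! i, i < N ∧ f i = c) ∧
    ∀ i < N, (f i).drop ((f i).length - s) = (f ((i + 1) % N)).take s

open Equiv Equiv.Perm Relation

namespace Equiv.Perm

variable {α : Type*} {π σ : Perm α} {u v x y : α}

theorem SameCycle.of_forall_sameCycle_apply [Finite α] (h : ∀ a, SameCycle σ a (π a))
    (hxy : SameCycle π x y) : SameCycle σ x y := by
  obtain ⟨i, rfl⟩ := hxy.exists_nat_pow_eq
  clear hxy
  induction i with
  | zero => exact SameCycle.rfl
  | succ i ih => rw [pow_succ', mul_apply]; exact ih.trans (h _)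

-- Along the `π`-orbit of `v`, which avoids `u`, `π * swap u v` agrees with `π` until it
-- returns to `v`.
theorem sameCycle_mul_swap_of_not_sameCycle_s12 [Finite α] [DecidableEq α] (huv : ¬SameCycle π u v) :
    SameCycle (π * swap u v) u v := by
  by_contra hv
  have horbit : ∀ i, SameCycle (π * swap u v) u ((π ^ (i + 1)) v) := by
    intro i
    induction i with
    | zero => simpa using (sameCycle_apply_right (f := π * swap u v) (x := u) (y := u)).2 .rfl
    | succ i ih =>
      have hu : (π ^ (i + 1)) v ≠ u := by
        intro h
        have := (sameCycle_pow_right (n := i + 1)).2 (SameCycle.refl π v)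
        rw [h] at this
        exact huv this.symm
      have hv' : (π ^ (i + 1)) v ≠ v := by
        intro h
        rw [h] at ih
        exact hv ih
      rw [pow_succ', mul_apply, ← swap_apply_of_ne_of_ne hu hv', ← mul_apply]
      exact sameCycle_apply_right.2 ih
  have := horbit (orderOf π - 1)
  rw [Nat.sub_add_cancel (orderOf_pos π), pow_orderOf_eq_one] at this
  exact hv this

theorem SameCycle.mul_swap_s12 [Finite α] [DecidableEq α] (huv : ¬SameCycle π u v)
    (hxy : SameCycle π x y) : SameCycle (π * swap u v) x y := by
  refine hxy.of_forall_sameCycle_apply fun a => ?_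
  have hmerge := sameCycle_mul_swap_of_not_sameCycle_s12 huv
  have : π a = (π * swap u v) (swap u v a) := by simp
  rw [this, sameCycle_apply_right, swap_apply_def]
  split_ifs with hau hav
  · exact hau ▸ hmerge
  · exact hav ▸ hmerge.symm
  · exact .rfl

theorem existsUnique_pow_apply_eq_of_forall_sameCycle [Finite α] (hπ : ∀ y, SameCycle π x y)
    (y : α) : ∃! i, i < Function.minimalPeriod π x ∧ (π ^ i) x = y := by
  have hpos : 0 < Function.minimalPeriod π x :=
    Function.minimalPeriod_pos_of_mem_periodicPts ⟨orderOf π, orderOf_pos π, by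
      rw [Function.IsPeriodicPt, Function.IsFixedPt, ← coe_pow, pow_orderOf_eq_one]; rfl⟩
  obtain ⟨i, rfl⟩ := (hπ y).exists_nat_pow_eq
  refine ⟨i % _, ⟨Nat.mod_lt _ hpos, ?_⟩, fun j ⟨hj, hji⟩ => ?_⟩
  · simp only [← iterate_eq_pow]
    exact Function.iterate_mod_minimalPeriod_eq
  · simp only [← iterate_eq_pow, ← Function.iterate_mod_minimalPeriod_eq (n := i)] at hji
    exact Function.iterate_injOn_Iio_minimalPeriod hj (Nat.mod_lt _ hpos) hji

theorem minimalPeriod_eq_card_of_forall_sameCycle [Finite α] (hπ : ∀ y, SameCycle π x y) :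
    Function.minimalPeriod π x = Nat.card α := by
  have h := existsUnique_pow_apply_eq_of_forall_sameCycle hπ
  refine (Nat.card_fin _).symm.trans
    (Nat.card_eq_of_bijective (fun i : Fin _ => (π ^ (i : ℕ)) x) ⟨fun i j hij => ?_, fun y => ?_⟩)
  · exact Fin.ext ((h _).unique ⟨i.2, rfl⟩ ⟨j.2, hij.symm⟩)
  · obtain ⟨i, ⟨hi, hiy⟩, -⟩ := h y
    exact ⟨⟨i, hi⟩, hiy⟩

end Equiv.Perm

section CycleJoining

variable {α β : Type*} [Fintype α] [DecidableEq α]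

-- Swapping the images of two points with equal `f` keeps `g ∘ π = f` and joins their cycles; a
-- permutation maximizing the number of pairs in a common cycle therefore has a single cycle.
theorem exists_perm_forall_sameCycle (f g : α → β) (σ : Perm α) (hσ : ∀ x, g (σ x) = f x)
    (hconn : ∀ x y, ReflTransGen (fun a b => f a = f b ∨ b = σ a ∨ a = σ b) x y) :
    ∃ π : Perm α, (∀ x, g (π x) = f x) ∧ ∀ x y, SameCycle π x y := by
  classical
  let good : Finset (Perm α) :=
    Finset.univ.filter fun π => (∀ x, g (π x) = f x) ∧ ∀ x, SameCycle π x (σ x)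
  let cyclePairs (π : Perm α) : ℕ := (Finset.univ.filter fun p : α × α => SameCycle π p.1 p.2).card
  obtain ⟨π, hπ, hmax⟩ := good.exists_max_image cyclePairs
    ⟨σ, Finset.mem_filter.2
      ⟨Finset.mem_univ σ, hσ, fun x => sameCycle_apply_right.2 (SameCycle.refl σ x)⟩⟩
  simp only [good, Finset.mem_filter, Finset.mem_univ, true_and] at hπ hmax
  obtain ⟨hπg, hπσ⟩ := hπ
  refine ⟨π, hπg, fun x y => ?_⟩
  by_contra hxy
  obtain ⟨u, v, hfuv, huv⟩ : ∃ u v, f u = f v ∧ ¬SameCycle π u v := by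
    by_contra! hclosed
    refine hxy ?_
    clear hxy
    induction hconn x y with
    | refl => exact .rfl
    | tail _ hbc ih =>
      rcases hbc with hbc | rfl | rfl
      · exact ih.trans (hclosed _ _ hbc)
      · exact ih.trans (hπσ _)
      · exact ih.trans (hπσ _).symm
  have hg' : ∀ x, g ((π * swap u v) x) = f x := by
    intro x
    rw [mul_apply, hπg, swap_apply_def]
    split_ifs with hxu hxv
    · rw [hxu, hfuv]
    · rw [hxv, hfuv]
    · rfl
  have hlt : cyclePairs π < cyclePairs (π * swap u v) := by
    refine Finset.card_lt_card ⟨fun p hp => ?_, fun hsub => ?_⟩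
    · simp only [Finset.mem_filter, Finset.mem_univ, true_and] at hp ⊢
      exact hp.mul_swap_s12 huv
    · have := hsub (Finset.mem_filter.2
        ⟨Finset.mem_univ (u, v), sameCycle_mul_swap_of_not_sameCycle_s12 huv⟩)
      exact huv (Finset.mem_filter.1 this).2
  exact hlt.not_ge (hmax _ ⟨hg', fun x => (hπσ x).mul_swap_s12 huv⟩)

end CycleJoining

theorem isOCycle_of_forall_sameCycle {s : ℕ} {C : Set (List ℕ)} [Finite C] (π : Perm C)
    (hπ : ∀ x : C, (π x : List ℕ).take s = (x : List ℕ).drop ((x : List ℕ).length - s))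
    (hcyc : ∀ x y, SameCycle π x y) (x₀ : C) :
    IsOCycle s (Nat.card C) C fun i => ((π ^ i) x₀ : List ℕ) := by
  rw [← minimalPeriod_eq_card_of_forall_sameCycle (hcyc x₀)]
  refine ⟨fun i _ => ((π ^ i) x₀).2, fun c hc => ?_, fun i _ => ?_⟩
  · obtain ⟨i, ⟨hi, hic⟩, huniq⟩ := existsUnique_pow_apply_eq_of_forall_sameCycle (hcyc x₀) ⟨c, hc⟩
    exact ⟨i, ⟨hi, congrArg Subtype.val hic⟩, fun j ⟨hj, hjc⟩ => huniq j ⟨hj, Subtype.ext hjc⟩⟩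
  · have hpow_mod : (π ^ ((i + 1) % Function.minimalPeriod π x₀)) x₀ = (π ^ (i + 1)) x₀ := by
      simp only [← iterate_eq_pow]
      exact Function.iterate_mod_minimalPeriod_eq
    simp only [hpow_mod, pow_succ', mul_apply, hπ]

theorem List.take_rotate_sub {α : Type*} {l : List α} {n s : ℕ} (hl : l.length = n) (hs : s ≤ n) :
    (l.rotate (n - s)).take s = l.drop (n - s) := by
  rw [List.rotate_eq_drop_append_take (by omega)]
  exact List.take_left' (by simp [hl]; omega)

section OverlapGraph

variable {n s : ℕ} {C : Set (List ℕ)} {a b : List ℕ}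

def OverlapAdj (n s : ℕ) (a b : List ℕ) : Prop :=
  a.drop (n - s) = b.drop (n - s) ∨ b = a.rotate (n - s) ∨ a = b.rotate (n - s)

def OverlapConnected (n s : ℕ) (C : Set (List ℕ)) : List ℕ → List ℕ → Prop :=
  ReflTransGen fun a b => a ∈ C ∧ b ∈ C ∧ OverlapAdj n s a b

theorem overlapAdj_cons_cons (hs : s + 2 ≤ n) (x y x' y' : ℕ) (t : List ℕ) :
    OverlapAdj n s (x :: y :: t) (x' :: y' :: t) := by
  obtain ⟨m, hm⟩ : ∃ m, n - s = m + 2 := ⟨n - s - 2, by omega⟩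
  exact .inl (by simp [hm])

theorem OverlapConnected.symm (hab : OverlapConnected n s C a b) : OverlapConnected n s C b a := by
  induction hab with
  | refl => exact .refl
  | tail _ hbc ih =>
    obtain ⟨hb, hc, hadj⟩ := hbc
    refine .head ⟨hc, hb, ?_⟩ ih
    rcases hadj with h | h | h
    exacts [.inl h.symm, .inr (.inr h), .inr (.inl h)]

theorem OverlapConnected.subtype (hab : OverlapConnected n s C a b) (ha : a ∈ C) (hb : b ∈ C) :
    ReflTransGen (fun x y : C => OverlapAdj n s x y) ⟨a, ha⟩ ⟨b, hb⟩ := by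
  induction hab with
  | refl => exact .refl
  | tail _ hbc ih => exact .tail (ih hbc.1) hbc.2.2

theorem overlapConnected_rotate (hperm : ∀ ⦃a b⦄, a.Perm b → a ∈ C → b ∈ C)
    (hlen : ∀ a ∈ C, a.length = n) (hsn : s ≤ n) (hgcd : Nat.Coprime s n) (ha : a ∈ C) (j : ℕ) :
    OverlapConnected n s C a (a.rotate j) := by
  have hrot : ∀ m, OverlapConnected n s C a (a.rotate ((n - s) * m)) := by
    intro m
    induction m with
    | zero => simpa using .refl
    | succ m ih =>
      refine ih.tail ⟨hperm (a.rotate_perm _).symm ha, hperm (a.rotate_perm _).symm ha, ?_⟩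
      rw [mul_add_one, ← List.rotate_rotate]
      exact .inr (.inl rfl)
  have hn : n ≠ 0 := by rintro rfl; simp_all
  obtain ⟨m, -, hm⟩ :=
    Nat.exists_mul_mod_eq_of_coprime j ((Nat.coprime_self_sub_left hsn).2 hgcd) hn
  have hj : a.rotate j = a.rotate ((n - s) * m) := by
    rw [← List.rotate_mod a j, ← List.rotate_mod a ((n - s) * m), hlen a ha, hm]
  exact hj ▸ hrot m

theorem overlapConnected_of_perm (hperm : ∀ ⦃a b⦄, a.Perm b → a ∈ C → b ∈ C)
    (hlen : ∀ a ∈ C, a.length = n) (hs : s + 2 ≤ n) (hgcd : Nat.Coprime s n) (hab : a.Perm b)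
    (ha : a ∈ C) : OverlapConnected n s C a b := by
  -- The word is permuted in front of a fixed tail, rotating each handled letter to the back.
  suffices h : ∀ t, a ++ t ∈ C → OverlapConnected n s C (a ++ t) (b ++ t) by
    simpa using h [] (by simpa using ha)
  have hrot := fun {c} (hc : c ∈ C) => overlapConnected_rotate hperm hlen (by omega) hgcd hc
  clear ha
  induction hab with
  | nil => exact fun _ _ => .refl
  | @cons x l₁ l₂ h₁₂ ih =>
    intro t hxt
    have hfront : (x :: l₁ ++ t).rotate 1 = l₁ ++ (t ++ [x]) := by simp
    have hback : (l₂ ++ (t ++ [x])).rotate (l₂ ++ t).length = x :: l₂ ++ t := by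
      rw [← List.append_assoc, List.rotate_append_length_eq]; rfl
    have hmem : l₁ ++ (t ++ [x]) ∈ C := hfront ▸ hperm (List.rotate_perm _ _).symm hxt
    have hmem' : l₂ ++ (t ++ [x]) ∈ C := hperm (h₁₂.append_right _) hmem
    exact ((hfront ▸ hrot hxt 1).trans (ih _ hmem)).trans (hback ▸ hrot hmem' _)
  | swap x y l =>
    intro t hxt
    exact .single ⟨hxt, hperm ((List.Perm.swap x y l).append_right t) hxt,
      overlapAdj_cons_cons hs _ _ _ _ _⟩
  | trans h₁₂ _ ih₁ ih₂ =>
    exact fun t ht => (ih₁ t ht).trans (ih₂ t (hperm (h₁₂.append_right t) ht))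

end OverlapGraph

section Saturated

variable {h : ℕ} {E E₁ E₂ : Multiset ℕ}

def Saturated (h : ℕ) (E : Multiset ℕ) : Prop :=
  ∀ x y F, E = x ::ₘ y ::ₘ F → x < h → y ≤ x → y = 0

theorem Saturated.exists_eq_cons_min (hE : Saturated h E) (hle : ∀ x ∈ E, x ≤ h) (hne : E ≠ 0) :
    ∃ F, E = min h E.sum ::ₘ F ∧ Saturated h F := by
  obtain ⟨m, hm, hmax⟩ := E.exists_max_image id hne
  obtain ⟨F, rfl⟩ : ∃ F, E = m ::ₘ F := ⟨E.erase m, (Multiset.cons_erase hm).symm⟩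
  refine ⟨F, ?_, fun x y G hG hxh hyx => ?_⟩
  · congr
    rw [Multiset.sum_cons]
    by_contra hne
    have hlt : m < h ∧ 0 < F.sum := by
      have := hle m (Multiset.mem_cons_self m F)
      omega
    obtain ⟨y, hy, hy0⟩ : ∃ y ∈ F, y ≠ 0 := by
      by_contra! h0
      exact hlt.2.ne' (Multiset.sum_eq_zero_iff.2 h0)
    obtain ⟨G, rfl⟩ : ∃ G, F = y ::ₘ G := ⟨F.erase y, (Multiset.cons_erase hy).symm⟩
    exact hy0 (hE m y G rfl hlt.1 (hmax y (by simp)))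
  · subst hG
    exact hE x y (m ::ₘ G) (by rw [Multiset.cons_swap m x, Multiset.cons_swap m y]) hxh hyx

-- The largest surplus letter of a saturated `E` is `min h E.sum`; peel it off and recurse.
theorem Saturated.eq (h₁ : Saturated h E₁) (h₂ : Saturated h E₂) (hle₁ : ∀ x ∈ E₁, x ≤ h)
    (hle₂ : ∀ x ∈ E₂, x ≤ h) (hcard : E₁.card = E₂.card) (hsum : E₁.sum = E₂.sum) : E₁ = E₂ := by
  induction hc : E₁.card generalizing E₁ E₂ with
  | zero => rw [Multiset.card_eq_zero.1 hc, Multiset.card_eq_zero.1 (hcard.symm.trans hc)]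
  | succ c ih =>
    obtain ⟨F₁, hE₁, hF₁⟩ := h₁.exists_eq_cons_min hle₁ (Multiset.card_pos.1 (by omega))
    obtain ⟨F₂, hE₂, hF₂⟩ := h₂.exists_eq_cons_min hle₂ (Multiset.card_pos.1 (by omega))
    have hcard₁ := congrArg Multiset.card hE₁
    have hcard₂ := congrArg Multiset.card hE₂
    have hsum₁ := congrArg Multiset.sum hE₁
    have hsum₂ := congrArg Multiset.sum hE₂
    simp only [Multiset.card_cons, Multiset.sum_cons] at hcard₁ hcard₂ hsum₁ hsum₂
    have hF : F₁ = F₂ :=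
      ih hF₁ hF₂ (fun x hx => hle₁ x (hE₁ ▸ Multiset.mem_cons_of_mem hx))
        (fun x hx => hle₂ x (hE₂ ▸ Multiset.mem_cons_of_mem hx)) (by omega) (by omega) (by omega)
    rw [hE₁, hE₂, hsum, hF]

theorem sum_map_sq_le_card_mul (hle : ∀ x ∈ E, x ≤ h) : (E.map (· ^ 2)).sum ≤ E.card * h ^ 2 := by
  simpa using Multiset.sum_le_card_nsmul (E.map (· ^ 2)) (h ^ 2) (by
    simpa using fun x hx => Nat.pow_le_pow_left (hle x hx) 2)

end Saturated

section WeakOrders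

variable {n s k h x y : ℕ} {a b : List ℕ} {E F : Multiset ℕ}

theorem mem_weightHeightWeakOrders_of_perm ⦃a b : List ℕ⦄ (hab : a.Perm b)
    (ha : a ∈ weightHeightWeakOrders n k h) : b ∈ weightHeightWeakOrders n k h := by
  obtain ⟨hlen, hset, hsum⟩ := ha
  exact ⟨hab.length_eq ▸ hlen, List.toFinset_eq_of_perm _ _ hab ▸ hset, hab.sum_eq ▸ hsum⟩

theorem lt_of_mem_weightHeightWeakOrders (ha : a ∈ weightHeightWeakOrders n k h) {x : ℕ}
    (hx : x ∈ a) : x < h + 1 := by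
  rw [← Finset.mem_range, ← ha.2.1]
  exact List.mem_toFinset.2 hx

theorem weightHeightWeakOrders_finite (n k h : ℕ) : (weightHeightWeakOrders n k h).Finite := by
  refine ((List.finite_length_eq (Fin (h + 1)) n).image (List.map Fin.val)).subset fun a ha => ?_
  refine ⟨a.map fun x : ℕ => (Fin.ofNat (h + 1) x), by simpa using ha.1, ?_⟩
  rw [List.map_map]
  refine (List.map_congr_left fun x hx => ?_).trans (List.map_id a)
  simpa using Nat.mod_eq_of_lt (lt_of_mem_weightHeightWeakOrders ha hx)

theorem range_le_of_mem_weightHeightWeakOrders (ha : a ∈ weightHeightWeakOrders n k h) :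
    Multiset.range (h + 1) ≤ a :=
  (Multiset.le_iff_subset (Multiset.nodup_range _)).2 fun x hx =>
    Multiset.mem_coe.2 (by
      rw [← List.mem_toFinset, ha.2.1]
      exact Finset.mem_range.2 (Multiset.mem_range.1 hx))

-- `E` is the multiset of surplus letters, beyond one copy of each of `0, …, h`.
theorem mem_weightHeightWeakOrders_iff_of_coe_eq
    (hE : (a : Multiset ℕ) = Multiset.range (h + 1) + E) :
    a ∈ weightHeightWeakOrders n k h ↔
      (∀ x ∈ E, x ≤ h) ∧ E.card + (h + 1) = n ∧ E.sum + (Multiset.range (h + 1)).sum = k := by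
  have hmem : ∀ x, x ∈ a ↔ x < h + 1 ∨ x ∈ E := fun x => by
    rw [← Multiset.mem_coe, hE, Multiset.mem_add, Multiset.mem_range]
  have hcard := congrArg Multiset.card hE
  have hsum := congrArg Multiset.sum hE
  simp only [Multiset.coe_card, Multiset.card_add, Multiset.card_range, Multiset.sum_coe,
    Multiset.sum_add] at hcard hsum
  constructor
  · intro ha
    refine ⟨fun x hx =>
        Nat.lt_succ_iff.1 (lt_of_mem_weightHeightWeakOrders ha ((hmem x).2 (.inr hx))),
      by rw [← ha.1, hcard, add_comm], by rw [← ha.2.2, hsum, add_comm]⟩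
  · rintro ⟨hle, hcardE, hsumE⟩
    refine ⟨by omega, Finset.ext fun x => ?_, by omega⟩
    rw [List.mem_toFinset, hmem, Finset.mem_range]
    exact ⟨fun hx => hx.elim id fun hx => Nat.lt_succ_of_le (hle x hx), .inl⟩

theorem exists_overlapConnected_succ_pred (hs : s + 2 ≤ n) (hgcd : Nat.Coprime s n)
    (ha : a ∈ weightHeightWeakOrders n k h)
    (hE : (a : Multiset ℕ) = Multiset.range (h + 1) + x ::ₘ y ::ₘ F) (hxh : x < h) (hy : 0 < y) :
    ∃ b ∈ weightHeightWeakOrders n k h, OverlapConnected n s (weightHeightWeakOrders n k h) a b ∧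
      (b : Multiset ℕ) = Multiset.range (h + 1) + (x + 1) ::ₘ (y - 1) ::ₘ F := by
  set t := (Multiset.range (h + 1) + F).toList
  have ht : (t : Multiset ℕ) = Multiset.range (h + 1) + F := Multiset.coe_toList _
  have hperm : a.Perm (x :: y :: t) :=
    Multiset.coe_eq_coe.1 (by rw [hE, ← Multiset.cons_coe, ← Multiset.cons_coe, ht,
      Multiset.add_cons, Multiset.add_cons])
  have hxyt := mem_weightHeightWeakOrders_of_perm hperm ha
  have hb : (((x + 1) :: (y - 1) :: t : List ℕ) : Multiset ℕ) =
      Multiset.range (h + 1) + (x + 1) ::ₘ (y - 1) ::ₘ F := by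
    rw [← Multiset.cons_coe, ← Multiset.cons_coe, ht, Multiset.add_cons, Multiset.add_cons]
  obtain ⟨hle, hcard, hsum⟩ := (mem_weightHeightWeakOrders_iff_of_coe_eq hE).1 ha
  have hbW : (x + 1) :: (y - 1) :: t ∈ weightHeightWeakOrders n k h := by
    refine (mem_weightHeightWeakOrders_iff_of_coe_eq hb).2 ⟨fun z hz => ?_, ?_, ?_⟩
    · rcases Multiset.mem_cons.1 hz with rfl | hz
      · omega
      · rcases Multiset.mem_cons.1 hz with rfl | hz
        · have := hle y (by simp)
          omega
        · exact hle z (by simp [hz])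
    · simpa using hcard
    · simp only [Multiset.sum_cons] at hsum ⊢
      omega
  refine ⟨_, hbW, ?_, hb⟩
  exact (overlapConnected_of_perm mem_weightHeightWeakOrders_of_perm (fun c hc => hc.1) hs hgcd
    hperm ha).tail ⟨hxyt, hbW, overlapAdj_cons_cons hs _ _ _ _ _⟩

-- Termination: each move raises the sum of squares of the surplus letters, which is at most
-- `n * h ^ 2`.
theorem exists_overlapConnected_saturated (hs : s + 2 ≤ n) (hgcd : Nat.Coprime s n)
    (ha : a ∈ weightHeightWeakOrders n k h)
    (hE : (a : Multiset ℕ) = Multiset.range (h + 1) + E) :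
    ∃ b ∈ weightHeightWeakOrders n k h, ∃ E',
      OverlapConnected n s (weightHeightWeakOrders n k h) a b ∧
      (b : Multiset ℕ) = Multiset.range (h + 1) + E' ∧ Saturated h E' := by
  induction hm : n * h ^ 2 - (E.map (· ^ 2)).sum using Nat.strong_induction_on generalizing a E with
  | _ m ih =>
  by_cases hsat : Saturated h E
  · exact ⟨a, ha, E, .refl, hE, hsat⟩
  simp only [Saturated, not_forall] at hsat
  obtain ⟨x, y, F, rfl, hxh, hyx, hy⟩ := hsat
  obtain ⟨b, hbW, hab, hb⟩ :=
    exists_overlapConnected_succ_pred hs hgcd ha hE hxh (Nat.pos_of_ne_zero hy)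
  have hsq : ((x ::ₘ y ::ₘ F).map (· ^ 2)).sum < (((x + 1) ::ₘ (y - 1) ::ₘ F).map (· ^ 2)).sum := by
    obtain ⟨z, rfl⟩ : ∃ z, y = z + 1 := ⟨y - 1, by omega⟩
    simp only [Multiset.map_cons, Multiset.sum_cons, Nat.add_sub_cancel]
    nlinarith
  have hbound : (((x + 1) ::ₘ (y - 1) ::ₘ F).map (· ^ 2)).sum ≤ n * h ^ 2 := by
    obtain ⟨hle, hcard, -⟩ := (mem_weightHeightWeakOrders_iff_of_coe_eq hb).1 hbW
    exact (sum_map_sq_le_card_mul hle).trans (Nat.mul_le_mul_right _ (by omega))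
  obtain ⟨c, hcW, E', hbc, hc, hsat⟩ := ih _ (by omega) hbW hb rfl
  exact ⟨c, hcW, E', hab.trans hbc, hc, hsat⟩

theorem overlapConnected_weightHeightWeakOrders (hs : s + 2 ≤ n) (hgcd : Nat.Coprime s n)
    (ha : a ∈ weightHeightWeakOrders n k h) (hb : b ∈ weightHeightWeakOrders n k h) :
    OverlapConnected n s (weightHeightWeakOrders n k h) a b := by
  have hsat := fun {c} (hc : c ∈ weightHeightWeakOrders n k h) =>
    exists_overlapConnected_saturated hs hgcd hc
      (add_tsub_cancel_of_le (range_le_of_mem_weightHeightWeakOrders hc)).symm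
  obtain ⟨a', ha'W, Ea, haa', ha', hsata⟩ := hsat ha
  obtain ⟨b', hb'W, Eb, hbb', hb', hsatb⟩ := hsat hb
  obtain ⟨hlea, hcarda, hsuma⟩ := (mem_weightHeightWeakOrders_iff_of_coe_eq ha').1 ha'W
  obtain ⟨hleb, hcardb, hsumb⟩ := (mem_weightHeightWeakOrders_iff_of_coe_eq hb').1 hb'W
  have hE : Ea = Eb := hsata.eq hsatb hlea hleb (by omega) (by omega)
  have hperm : a'.Perm b' := Multiset.coe_eq_coe.1 (by rw [ha', hb', hE])
  exact (haa'.trans (overlapConnected_of_perm mem_weightHeightWeakOrders_of_perm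
    (fun c hc => hc.1) hs hgcd hperm ha'W)).trans hbb'.symm

end WeakOrders

theorem exists_ocycle_weightHeightWeakOrders_general (n s k h : ℕ)
    (hs1 : 1 ≤ s) (hs2 : s ≤ n - 2) (hne : (weightHeightWeakOrders n k h).Nonempty)
    (hgcd : Nat.gcd s n = 1) :
    ∃ f : ℕ → List ℕ,
      IsOCycle s (Nat.card (weightHeightWeakOrders n k h))
        (weightHeightWeakOrders n k h) f := by
  set C := weightHeightWeakOrders n k h
  have : Fintype C := (weightHeightWeakOrders_finite n k h).fintype
  have hs : s + 2 ≤ n := by omega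
  let σ : Perm C := Equiv.ofBijective
    (fun a => ⟨a.1.rotate (n - s), mem_weightHeightWeakOrders_of_perm (a.1.rotate_perm _).symm a.2⟩)
    (Finite.injective_iff_bijective.1 fun a b hab =>
      Subtype.ext (List.rotate_injective _ (congrArg Subtype.val hab)))
  obtain ⟨π, hπ, hcyc⟩ := exists_perm_forall_sameCycle (fun a : C => a.1.drop (n - s))
    (fun a => a.1.take s) σ (fun a => List.take_rotate_sub a.2.1 (by omega)) fun a b =>
      ReflTransGen.mono (fun a b hab => hab.imp id (Or.imp Subtype.ext Subtype.ext)) _ _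
        ((overlapConnected_weightHeightWeakOrders hs hgcd a.2 b.2).subtype a.2 b.2)
  obtain ⟨x₀, hx₀⟩ := hne
  exact ⟨_, isOCycle_of_forall_sameCycle π (fun a => by rw [hπ, a.2.1]) hcyc ⟨x₀, hx₀⟩⟩

/-- For positive integers `n, s, k` and natural `h` with `1 ≤ s ≤ n - 2`,
`k ≤ C(n,2)`, `h < n`, `W_k(n,h)` nonempty and `gcd(s,n) = 1`, there exists an
`s`-overlap cycle for `W_k(n,h)`. -/
theorem exists_ocycle_weightHeightWeakOrders (n s k h : ℕ) (hn : 0 < n)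
    (hk : 0 < k) (hs1 : 1 ≤ s) (hs2 : s ≤ n - 2) (hkn : k ≤ n.choose 2)
    (hh : h < n) (hne : (weightHeightWeakOrders n k h).Nonempty)
    (hgcd : Nat.gcd s n = 1) :
    ∃ f : ℕ → List ℕ,
      IsOCycle s (Nat.card (weightHeightWeakOrders n k h))
        (weightHeightWeakOrders n k h) f :=
  exists_ocycle_weightHeightWeakOrders_general n s k h hs1 hs2 hne hgcd
end

section
/- Let n, s be positive integers and h a natural number with 1 ≤ s ≤ n−2, gcd(s, n) = 1, and 0 ≤ h ≤ n−1. Then there exists an s-overlap cycle for W(n,h), the set of weak order words of length n with height h. -/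
/-!
Rotating a word `v` of length `n` by `n - s` moves its last `s` letters to the front, so the
successive images of `v` under this rotation overlap in `s` letters; as `gcd(n - s, n) = 1`
they run through the whole rotation class of `v`, which is thus an `s`-overlap cycle by
itself. Two disjoint such cycles through words `u` and `v` with the same last `s` letters
merge into one by exchanging the successors of `u` and `v`.

Call two words of `W(n,h)` linked if one is a rotation of the other or they share their last
`s` letters. Rotating `x ++ p ++ y` to `p ++ y ++ x`, replacing `p` by `q` and rotating back
links `x ++ p ++ y` to `x ++ q ++ y` whenever `|p| ≤ n - s`. Since `s ≤ n - 2`, this gives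
adjacent transpositions and single letter changes, which connect all of `W(n,h)`. A cycle made
of whole rotation classes that misses some word is therefore left, along a path of links, by
a common-suffix step, and merges with the rotation class at its far end.
-/

open List Function Relation

namespace OverlapCycle

variable {α : Type*}

def Overlaps (s : ℕ) (u v : List α) : Prop := u.rtake s = v.take s

theorem overlaps_rotate (s : ℕ) (l : List α) : Overlaps s l (l.rotate (l.length - s)) := by
  rcases le_total s l.length with h | h
  · rw [Overlaps, rtake, rotate_eq_drop_append_take (Nat.sub_le _ _),
      take_append_of_le_length (by rw [length_drop]; omega),
      take_of_length_le (by rw [length_drop]; omega)]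
  · simp [Overlaps, rtake, Nat.sub_eq_zero_of_le h, take_of_length_le h]

theorem rtake_append_of_le_length {s : ℕ} (l₁ : List α) {l₂ : List α} (h : s ≤ l₂.length) :
    (l₁ ++ l₂).rtake s = l₂.rtake s := by
  rw [rtake_eq_reverse_take_reverse, reverse_append,
    take_append_of_le_length (by simpa using h), ← rtake_eq_reverse_take_reverse]

theorem isChain_cons_iff_of_forall_iff {r : α → α → Prop} {a b : α} (l : List α)
    (h : ∀ x, r a x ↔ r b x) : IsChain r (a :: l) ↔ IsChain r (b :: l) := by
  cases l <;> simp [h]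

theorem exists_isRotated_append_singleton {L : List α} {u : α} (hu : u ∈ L) :
    ∃ A, L ~r A ++ [u] := by
  obtain ⟨X, Y, rfl⟩ := append_of_mem hu
  exact ⟨Y ++ X, isRotated_append.trans (by simpa using (isRotated_concat u (Y ++ X)).symm)⟩

theorem chain_coe_append_append {r : α → α → Prop} {A B : List α} {u v : α}
    (hA : Cycle.Chain r (A ++ [u] : List α)) (hB : Cycle.Chain r (B ++ [v] : List α))
    (huv : ∀ x, r u x ↔ r v x) : Cycle.Chain r (A ++ [u] ++ (B ++ [v]) : List α) := by
  rw [← Cycle.coe_cons_eq_coe_append, Cycle.chain_coe_cons] at hA hB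
  rw [← append_assoc, ← Cycle.coe_cons_eq_coe_append, Cycle.chain_coe_cons, append_assoc,
    append_assoc, singleton_append, isChain_cons_split]
  exact ⟨(isChain_cons_iff_of_forall_iff _ huv).1 hA,
    (isChain_cons_iff_of_forall_iff _ huv).2 hB⟩

theorem chain_coe_getElem_mod {r : α → α → Prop} {L : List α}
    (h : Cycle.Chain r (L : Cycle α)) {i : ℕ} (hi : i < L.length) :
    r L[i] (L[(i + 1) % L.length]'(Nat.mod_lt _ (Nat.zero_lt_of_lt hi))) := by
  obtain _ | ⟨a, l⟩ := L
  · simp at hi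
  rw [Cycle.chain_coe_cons, ← cons_append, isChain_iff_getElem] at h
  have hr := h i (by rw [length_append, length_singleton]; omega)
  rw [getElem_append_left hi] at hr
  rcases Nat.lt_or_ge (i + 1) (a :: l).length with hlt | hge
  · simpa only [Nat.mod_eq_of_lt hlt, getElem_append_left hlt] using hr
  · have hi1 : i + 1 = (a :: l).length := by omega
    simpa [hi1] using hr

theorem iterate_rotate (r k : ℕ) (l : List α) : (·.rotate r)^[k] l = l.rotate (r * k) := by
  induction k with
  | zero => simp
  | succ k ih => rw [iterate_succ_apply', ih, rotate_rotate, Nat.mul_succ]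

theorem mem_periodicPts_rotate (r : ℕ) {l : List α} (hl : l ≠ []) :
    l ∈ periodicPts (·.rotate r) :=
  mk_mem_periodicPts (length_pos_of_ne_nil hl) <| by
    rw [IsPeriodicPt, IsFixedPt, iterate_rotate, mul_comm, rotate_length_mul]

theorem mem_periodicOrbit_rotate_iff {r : ℕ} {l l' : List α} (hl : l ≠ [])
    (hr : r.Coprime l.length) : l' ∈ periodicOrbit (·.rotate r) l ↔ l ~r l' := by
  simp only [mem_periodicOrbit_iff (mem_periodicPts_rotate r hl), iterate_rotate]
  refine ⟨fun ⟨k, hk⟩ => ⟨r * k, hk⟩, fun ⟨m, hm⟩ => ?_⟩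
  obtain ⟨k, -, hk⟩ := Nat.exists_mul_mod_eq_of_coprime m hr (length_pos_of_ne_nil hl).ne'
  exact ⟨k, by rw [← rotate_mod, hk, rotate_mod, hm]⟩

noncomputable def rotationOrbit (s : ℕ) (v : List α) : List (List α) :=
  (range (minimalPeriod (·.rotate (v.length - s)) v)).map
    fun k => (·.rotate (v.length - s))^[k] v

theorem mem_rotationOrbit_iff {s : ℕ} {v w : List α} (hv : v ≠ [])
    (hs : (v.length - s).Coprime v.length) : w ∈ rotationOrbit s v ↔ v ~r w := by
  rw [← Cycle.mem_coe_iff, rotationOrbit, ← periodicOrbit_def,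
    mem_periodicOrbit_rotate_iff hv hs]

theorem chain_rotationOrbit (s : ℕ) {v : List α} (hv : v ≠ []) :
    Cycle.Chain (Overlaps s) (rotationOrbit s v : Cycle (List α)) := by
  rw [rotationOrbit, ← periodicOrbit_def, periodicOrbit_chain' _ (mem_periodicPts_rotate _ hv)]
  intro k
  rw [iterate_succ_apply']
  have hlen : ((·.rotate (v.length - s))^[k] v).length = v.length := by
    rw [iterate_rotate, length_rotate]
  simpa only [hlen] using overlaps_rotate s ((·.rotate (v.length - s))^[k] v)

theorem nodup_rotationOrbit (s : ℕ) (v : List α) : (rotationOrbit s v).Nodup :=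
  Cycle.nodup_coe_iff.1 nodup_periodicOrbit

def Linked (C : Set (List α)) (s : ℕ) (u v : List α) : Prop :=
  u ∈ C ∧ v ∈ C ∧ (u ~r v ∨ u.rtake s = v.rtake s)

theorem exists_rel_of_reflTransGen {r : α → α → Prop} {p : α → Prop} {a b : α}
    (h : ReflTransGen r a b) (ha : p a) (hb : ¬p b) : ∃ x y, r x y ∧ p x ∧ ¬p y := by
  induction h with
  | refl => exact absurd ha hb
  | @tail c d _ hcd ih =>
    by_cases hc : p c
    · exact ⟨c, d, hcd, hc, hb⟩
    · exact ih hc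

section Linked

variable {C : Set (List α)} {s : ℕ}

theorem reflTransGen_linked_append_append (hrot : ∀ u ∈ C, ∀ v, u ~r v → v ∈ C)
    {x p q y : List α} (hp : x ++ p ++ y ∈ C) (hq : x ++ q ++ y ∈ C)
    (hs : s ≤ y.length + x.length) :
    ReflTransGen (Linked C s) (x ++ p ++ y) (x ++ q ++ y) := by
  have hrot' : ∀ l, x ++ l ++ y ~r l ++ (y ++ x) := fun l => by
    simpa using (isRotated_append (l := x) (l' := l ++ y))
  have hp' := hrot _ hp _ (hrot' p)
  have hq' := hrot _ hq _ (hrot' q)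
  have hsuf : (p ++ (y ++ x)).rtake s = (q ++ (y ++ x)).rtake s := by
    have hyx : s ≤ (y ++ x).length := by simpa using hs
    rw [rtake_append_of_le_length p hyx, rtake_append_of_le_length q hyx]
  exact .tail (.tail (.single ⟨hp, hp', .inl (hrot' p)⟩) ⟨hp', hq', .inr hsuf⟩)
    ⟨hq', hq, .inl (hrot' q).symm⟩

theorem reflTransGen_linked_of_perm (hperm : ∀ u ∈ C, ∀ v, u ~ v → v ∈ C) {n : ℕ}
    (hlen : ∀ w ∈ C, w.length = n) (hs : s + 2 ≤ n) {l l' : List α} (h : l ~ l') :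
    ∀ x, x ++ l ∈ C → ReflTransGen (Linked C s) (x ++ l) (x ++ l') := by
  have hrot : ∀ u ∈ C, ∀ v, u ~r v → v ∈ C := fun u hu v huv => hperm u hu v huv.perm
  induction h with
  | nil => exact fun _ _ => .refl
  | @cons a l₁ l₂ _ ih =>
    intro x hx
    simpa using ih (x ++ [a]) (by simpa using hx)
  | @swap a b l =>
    intro x hx
    have hlx := hlen _ hx
    simp only [length_append, length_cons] at hlx
    simpa using reflTransGen_linked_append_append hrot (x := x) (p := [b, a]) (q := [a, b])
      (y := l) (by simpa using hx)
      (hperm _ hx _ (by simpa using (Perm.swap a b l).append_left x)) (by omega)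
  | @trans l₁ l₂ l₃ h₁₂ _ ih₁₂ ih₂₃ =>
    intro x hx
    exact (ih₁₂ x hx).trans (ih₂₃ x (hperm _ hx _ (h₁₂.append_left x)))

end Linked

section PartialOCycle

variable {s : ℕ} {C : Set (List α)} {L : List (List α)}

structure IsPartialOCycle (s : ℕ) (C : Set (List α)) (L : List (List α)) : Prop where
  nodup : L.Nodup
  chain : Cycle.Chain (Overlaps s) (L : Cycle (List α))
  subset : ∀ x ∈ L, x ∈ C
  isRotated_mem : ∀ x ∈ L, ∀ y, x ~r y → y ∈ L

theorem isPartialOCycle_nil : IsPartialOCycle s C [] :=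
  ⟨nodup_nil, Cycle.Chain.nil _, by simp, by simp⟩

theorem IsPartialOCycle.length_le_ncard (h : IsPartialOCycle s C L) (hC : C.Finite) :
    L.length ≤ C.ncard := by
  classical
  rw [← toFinset_card_of_nodup h.nodup, ← Set.ncard_coe_finset]
  exact Set.ncard_le_ncard (fun x hx => h.subset x (by simpa using hx)) hC

theorem IsPartialOCycle.append {L₁ L₂ : List (List α)} {u v : List α}
    (h₁ : IsPartialOCycle s C L₁) (h₂ : IsPartialOCycle s C L₂) (hdisj : ∀ x ∈ L₁, x ∉ L₂)
    (hu : u ∈ L₁) (hv : v ∈ L₂) (huv : u.rtake s = v.rtake s) :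
    ∃ L, IsPartialOCycle s C L ∧ L.length = L₁.length + L₂.length := by
  obtain ⟨A, hA⟩ := exists_isRotated_append_singleton hu
  obtain ⟨B, hB⟩ := exists_isRotated_append_singleton hv
  have hmem : ∀ x, x ∈ A ++ [u] ++ (B ++ [v]) ↔ x ∈ L₁ ∨ x ∈ L₂ := fun x => by
    rw [mem_append, ← hA.mem_iff, ← hB.mem_iff]
  refine ⟨A ++ [u] ++ (B ++ [v]), ⟨?_, ?_, ?_, ?_⟩, ?_⟩
  · exact nodup_append.2 ⟨hA.nodup_iff.1 h₁.nodup, hB.nodup_iff.1 h₂.nodup,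
      fun x hx _ hy hxy => hdisj x (hA.mem_iff.2 hx) (hxy ▸ hB.mem_iff.2 hy)⟩
  · refine chain_coe_append_append ?_ ?_ fun x => by rw [Overlaps, Overlaps, huv]
    · exact Cycle.coe_eq_coe.2 hA ▸ h₁.chain
    · exact Cycle.coe_eq_coe.2 hB ▸ h₂.chain
  · intro x hx
    rcases (hmem x).1 hx with hx | hx
    exacts [h₁.subset x hx, h₂.subset x hx]
  · intro x hx y hxy
    refine (hmem y).2 ((hmem x).1 hx |>.imp ?_ ?_)
    exacts [fun hx => h₁.isRotated_mem x hx y hxy, fun hx => h₂.isRotated_mem x hx y hxy]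
  · rw [hA.perm.length_eq, hB.perm.length_eq, length_append]

variable {n : ℕ} (hlen : ∀ w ∈ C, w.length = n) (hn : 0 < n) (hs : (n - s).Coprime n)
  (hrot : ∀ u ∈ C, ∀ v, u ~r v → v ∈ C)
  (hconn : ∀ u ∈ C, ∀ v ∈ C, ReflTransGen (Linked C s) u v)
include hlen hn hs hrot

omit hrot in
theorem mem_rotationOrbit_iff_of_mem {v w : List α} (hv : v ∈ C) :
    w ∈ rotationOrbit s v ↔ v ~r w :=
  mem_rotationOrbit_iff (ne_nil_of_length_pos (hlen v hv ▸ hn)) (hlen v hv ▸ hs)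

theorem isPartialOCycle_rotationOrbit {v : List α} (hv : v ∈ C) :
    IsPartialOCycle s C (rotationOrbit s v) where
  nodup := nodup_rotationOrbit s v
  chain := chain_rotationOrbit s (ne_nil_of_length_pos (hlen v hv ▸ hn))
  subset x hx := hrot v hv x ((mem_rotationOrbit_iff_of_mem hlen hn hs hv).1 hx)
  isRotated_mem _ hx _ hxy := (mem_rotationOrbit_iff_of_mem hlen hn hs hv).2
    (((mem_rotationOrbit_iff_of_mem hlen hn hs hv).1 hx).trans hxy)

include hconn in
theorem IsPartialOCycle.exists_length_lt (h : IsPartialOCycle s C L) {w : List α}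
    (hw : w ∈ C) (hwL : w ∉ L) : ∃ L', IsPartialOCycle s C L' ∧ L.length < L'.length := by
  have hself : ∀ v ∈ C, v ∈ rotationOrbit s v := fun v hv =>
    (mem_rotationOrbit_iff_of_mem hlen hn hs hv).2 (IsRotated.refl v)
  obtain _ | ⟨x, L₀⟩ := L
  · exact ⟨_, isPartialOCycle_rotationOrbit hlen hn hs hrot hw,
      length_pos_of_mem (hself w hw)⟩
  obtain ⟨u, v, ⟨-, hvC, hlink⟩, hu, hv⟩ :=
    exists_rel_of_reflTransGen (hconn x (h.subset x mem_cons_self) w hw) mem_cons_self hwL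
  have huv : u.rtake s = v.rtake s :=
    hlink.resolve_left fun huv => hv (h.isRotated_mem u hu v huv)
  have hO := isPartialOCycle_rotationOrbit hlen hn hs hrot hvC
  have hdisj : ∀ y ∈ x :: L₀, y ∉ rotationOrbit s v := fun y hy hyO =>
    hv (h.isRotated_mem y hy v ((mem_rotationOrbit_iff_of_mem hlen hn hs hvC).1 hyO).symm)
  obtain ⟨L', hL', hlen'⟩ := h.append hO hdisj hu (hself v hvC) huv
  exact ⟨L', hL', by rw [hlen']; have := length_pos_of_mem (hself v hvC); omega⟩

include hconn in
theorem exists_isPartialOCycle_forall_mem (hC : C.Finite) :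
    ∃ L, IsPartialOCycle s C L ∧ ∀ w ∈ C, w ∈ L := by
  suffices ∀ k L, C.ncard - L.length = k → IsPartialOCycle s C L →
      ∃ L', IsPartialOCycle s C L' ∧ ∀ w ∈ C, w ∈ L' from
    this _ [] rfl isPartialOCycle_nil
  intro k
  induction k using Nat.strong_induction_on with
  | _ k ih =>
    intro L hk hL
    by_cases hall : ∀ w ∈ C, w ∈ L
    · exact ⟨L, hL, hall⟩
    push Not at hall
    obtain ⟨w, hw, hwL⟩ := hall
    obtain ⟨L', hL', hlt⟩ := hL.exists_length_lt hlen hn hs hrot hconn hw hwL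
    exact ih _ (by have := hL'.length_le_ncard hC; omega) L' rfl hL'

end PartialOCycle

theorem isOCycle_getD {s : ℕ} {C : Set (List ℕ)} {L : List (List ℕ)}
    (h : IsPartialOCycle s C L) (hC : ∀ w ∈ C, w ∈ L) :
    IsOCycle s (Nat.card C) C (fun i => L.getD i []) := by
  have hcard : Nat.card C = L.length := by
    classical
    rw [show C = (L.toFinset : Set (List ℕ)) by ext w; simpa using ⟨hC w, h.subset w⟩,
      Nat.card_coe_set_eq, Set.ncard_coe_finset, toFinset_card_of_nodup h.nodup]
  rw [hcard]
  refine ⟨fun i hi => ?_, fun c hc => ?_, fun i hi => ?_⟩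
  · simp only [getD_eq_getElem _ _ hi]
    exact h.subset _ (getElem_mem hi)
  · obtain ⟨i, hi, rfl⟩ := mem_iff_getElem.1 (hC c hc)
    refine ⟨i, ⟨hi, getD_eq_getElem _ _ hi⟩, fun j ⟨hj, hji⟩ => ?_⟩
    simp only [getD_eq_getElem _ _ hj] at hji
    exact (h.nodup.getElem_inj_iff).1 hji
  · have hi' := Nat.mod_lt (i + 1) (Nat.zero_lt_of_lt hi)
    simp only [getD_eq_getElem _ _ hi, getD_eq_getElem _ _ hi']
    exact chain_coe_getElem_mod h.chain hi

section HeightWeakOrders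

variable {n h s : ℕ}

theorem mem_heightWeakOrders_iff {w : List ℕ} :
    w ∈ heightWeakOrders n h ↔ w.length = n ∧ ∀ a, a ∈ w ↔ a ≤ h := by
  simp [heightWeakOrders, Finset.ext_iff]

theorem heightWeakOrders_finite (n h : ℕ) : (heightWeakOrders n h).Finite := by
  refine ((finite_length_eq (α := Fin (h + 1)) (n := n)).image (map Fin.val)).subset ?_
  intro w hw
  obtain ⟨hlen, hmem⟩ := mem_heightWeakOrders_iff.1 hw
  lift w to List (Fin (h + 1)) using fun a ha => Nat.lt_succ_of_le ((hmem a).1 ha)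
  exact ⟨w, by simpa using hlen, rfl⟩

theorem perm_mem_heightWeakOrders {u v : List ℕ} (hu : u ∈ heightWeakOrders n h)
    (huv : u ~ v) : v ∈ heightWeakOrders n h := by
  rw [mem_heightWeakOrders_iff] at hu ⊢
  exact ⟨huv.length_eq ▸ hu.1, fun a => huv.mem_iff.symm.trans (hu.2 a)⟩

theorem append_mem_heightWeakOrders {x t : List ℕ} (hx : ∀ a, a ∈ x ↔ a ≤ h)
    (ht : ∀ a ∈ t, a ≤ h) (hlen : (x ++ t).length = n) : x ++ t ∈ heightWeakOrders n h :=
  mem_heightWeakOrders_iff.2 ⟨hlen, fun a => by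
    rw [mem_append, hx]
    exact ⟨fun h' => h'.elim id (ht a), Or.inl⟩⟩

theorem exists_perm_range_append {w : List ℕ} (hw : w ∈ heightWeakOrders n h) :
    ∃ t, w ~ range (h + 1) ++ t := by
  have hsub : range (h + 1) <+~ w := subperm_of_subset nodup_range fun a ha =>
    ((mem_heightWeakOrders_iff.1 hw).2 a).2 (Nat.le_of_lt_succ (mem_range.1 ha))
  obtain ⟨l, hl, hsl⟩ := hsub
  obtain ⟨t, ht⟩ := hsl.exists_perm_append
  exact ⟨t, ht.trans (hl.append_right t)⟩

theorem reflTransGen_linked_append_of_forall_le (hs : s + 1 ≤ n) {x t t' : List ℕ}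
    (hx : ∀ a, a ∈ x ↔ a ≤ h) (ht : ∀ a ∈ t, a ≤ h) (ht' : ∀ a ∈ t', a ≤ h)
    (htt' : t.length = t'.length) (hlen : (x ++ t).length = n) :
    ReflTransGen (Linked (heightWeakOrders n h) s) (x ++ t) (x ++ t') := by
  induction t generalizing x t' with
  | nil => rw [eq_nil_of_length_eq_zero htt'.symm]
  | cons a t ih =>
    obtain _ | ⟨b, t'⟩ := t'
    · simp at htt'
    simp only [length_cons, Nat.succ_inj] at htt'
    have hlen' : (x ++ [b] ++ t).length = n := by simpa using hlen
    have hx' : ∀ c, c ∈ x ++ [b] ↔ c ≤ h := fun c => by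
      simp only [mem_append, hx, mem_singleton]
      exact ⟨fun h' => h'.elim id (· ▸ ht' b mem_cons_self), Or.inl⟩
    have hchange := reflTransGen_linked_append_append (s := s) (x := x) (p := [a]) (q := [b])
      (y := t) (fun u hu v huv => perm_mem_heightWeakOrders hu huv.perm)
      (by simpa using append_mem_heightWeakOrders hx ht hlen)
      (append_mem_heightWeakOrders hx' (fun c hc => ht c (mem_cons_of_mem _ hc)) hlen')
      (by simp only [length_append, length_cons] at hlen; omega)
    have hrest := ih hx' (fun c hc => ht c (mem_cons_of_mem _ hc))
      (fun c hc => ht' c (mem_cons_of_mem _ hc)) htt' hlen'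
    simpa using hchange.trans hrest

theorem reflTransGen_linked_heightWeakOrders (hs : s + 2 ≤ n) {u v : List ℕ}
    (hu : u ∈ heightWeakOrders n h) (hv : v ∈ heightWeakOrders n h) :
    ReflTransGen (Linked (heightWeakOrders n h) s) u v := by
  have hperm : ∀ u ∈ heightWeakOrders n h, ∀ v, u ~ v → v ∈ heightWeakOrders n h :=
    fun u hu v huv => perm_mem_heightWeakOrders hu huv
  have hlen : ∀ w ∈ heightWeakOrders n h, w.length = n :=
    fun w hw => (mem_heightWeakOrders_iff.1 hw).1
  have hletters :
      ∀ {t : List ℕ}, range (h + 1) ++ t ∈ heightWeakOrders n h → ∀ a ∈ t, a ≤ h :=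
    fun ht a ha => ((mem_heightWeakOrders_iff.1 ht).2 a).1 (mem_append_right _ ha)
  obtain ⟨t, hut⟩ := exists_perm_range_append hu
  obtain ⟨t', hvt'⟩ := exists_perm_range_append hv
  have ht := hperm _ hu _ hut
  have ht' := hperm _ hv _ hvt'
  have hsort := reflTransGen_linked_of_perm hperm hlen hs hut [] hu
  have hchange := reflTransGen_linked_append_of_forall_le (s := s) (by omega)
    (fun a => by simp) (hletters ht) (hletters ht')
    (by have := hlen _ ht; have := hlen _ ht'; simp only [length_append] at *; omega) (hlen _ ht)
  have hunsort := reflTransGen_linked_of_perm hperm hlen hs hvt'.symm [] ht'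
  simpa using hsort.trans (hchange.trans hunsort)

end HeightWeakOrders

end OverlapCycle

open OverlapCycle

theorem exists_ocycle_heightWeakOrders_general (n s h : ℕ) (hs1 : 1 ≤ s)
    (hs2 : s ≤ n - 2) (hgcd : Nat.gcd s n = 1) :
    ∃ f : ℕ → List ℕ,
      IsOCycle s (Nat.card (heightWeakOrders n h)) (heightWeakOrders n h) f := by
  have hcop : (n - s).Coprime n := (Nat.coprime_self_sub_left (by omega)).2 hgcd
  obtain ⟨L, hL, hcover⟩ := exists_isPartialOCycle_forall_mem
    (fun w hw => (mem_heightWeakOrders_iff.1 hw).1) (by omega) hcop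
    (fun u hu v huv => perm_mem_heightWeakOrders hu huv.perm)
    (fun u hu v hv => reflTransGen_linked_heightWeakOrders (by omega) hu hv)
    (heightWeakOrders_finite n h)
  exact ⟨_, isOCycle_getD hL hcover⟩

/-- For positive integers `n, s` and natural `h` with `1 ≤ s ≤ n - 2`,
`gcd(s,n) = 1` and `h ≤ n - 1`, there exists an `s`-overlap cycle for `W(n,h)`. -/
theorem exists_ocycle_heightWeakOrders (n s h : ℕ) (hn : 0 < n) (hs1 : 1 ≤ s)
    (hs2 : s ≤ n - 2) (hgcd : Nat.gcd s n = 1) (hh : h ≤ n - 1) :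
    ∃ f : ℕ → List ℕ,
      IsOCycle s (Nat.card (heightWeakOrders n h)) (heightWeakOrders n h) f :=
  exists_ocycle_heightWeakOrders_general n s h hs1 hs2 hgcd
end
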